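/- arXiv:1401.3395 — 11 statements merged into one kernel-verified Lean document; each statement's English description precedes it below -/
import Mathlib

section
/- Let N ≥ 1, let a_1, …, a_{2N} and x be real numbers, and let T be the N×N tridiagonal matrix with diagonal entries T_{jj} = x + a_{2j−1} + a_{2j} (1 ≤ j ≤ N), superdiagonal entries T_{j,j+1} = 1, subdiagonal entries T_{j+1,j} = a_{2j} a_{2j+1} (1 ≤ j ≤ N−1), and all other entries 0. Then det T = Σ_{k=0}^{N} c_k^{(N)} x^{N−k}. -/
/-- Sum over all sparse subsets of `{1, …, 2N}` of cardinality `k`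
(any two distinct elements differ by at least 2) of the products `∏_{i ∈ S} a i`. -/
noncomputable def cCoef (a : ℕ → ℝ) (k N : ℕ) : ℝ :=
  ∑ S ∈ (Finset.Icc 1 (2 * N)).powerset.filter
      (fun S => S.card = k ∧ ∀ i ∈ S, ∀ j ∈ S, i < j → i + 2 ≤ j),
    ∏ i ∈ S, a i

/-- The `N × N` tridiagonal matrix with diagonal entries `x + a_{2j-1} + a_{2j}`,
superdiagonal entries `1` and subdiagonal entries `a_{2j} a_{2j+1}`
(rows and columns being 1-indexed). -/
noncomputable def todaTridiag (N : ℕ) (a : ℕ → ℝ) (x : ℝ) : Matrix (Fin N) (Fin N) ℝ :=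
  Matrix.of fun i j =>
    if (i : ℕ) = (j : ℕ) then x + a (2 * (i : ℕ) + 1) + a (2 * (i : ℕ) + 2)
    else if (j : ℕ) = (i : ℕ) + 1 then 1
    else if (i : ℕ) = (j : ℕ) + 1 then a (2 * (j : ℕ) + 2) * a (2 * (j : ℕ) + 3)
    else 0


noncomputable def eC (a : ℕ → ℝ) (k m : ℕ) : ℝ :=
  ∑ S ∈ (Finset.Icc 1 m).powerset.filter
      (fun S => S.card = k ∧ ∀ i ∈ S, ∀ j ∈ S, i < j → i + 2 ≤ j),
    ∏ i ∈ S, a i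

lemma eC_zero (a : ℕ → ℝ) (m : ℕ) : eC a 0 m = 1 := by
  unfold eC
  have h : (Finset.Icc 1 m).powerset.filter
      (fun S => S.card = 0 ∧ ∀ i ∈ S, ∀ j ∈ S, i < j → i + 2 ≤ j) = {∅} := by
    ext S
    simp only [Finset.mem_filter, Finset.mem_powerset, Finset.card_eq_zero,
      Finset.mem_singleton]
    constructor
    · rintro ⟨-, h, -⟩; exact h
    · rintro rfl; simp
  rw [h]
  simp

lemma eC_one_one (a : ℕ → ℝ) : eC a 1 1 = a 1 := by
  unfold eC
  have h1 : Finset.Icc 1 1 = ({1} : Finset ℕ) := by simp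
  rw [h1]
  have h : ({1} : Finset ℕ).powerset.filter
      (fun S => S.card = 1 ∧ ∀ i ∈ S, ∀ j ∈ S, i < j → i + 2 ≤ j) = {{1}} := by
    decide
  rw [h]
  simp

lemma eC_succ (a : ℕ → ℝ) (k m : ℕ) :
    eC a (k+1) (m+2) = eC a (k+1) (m+1) + a (m+2) * eC a k m := by
  unfold eC
  rw [← Finset.sum_filter_add_sum_filter_not
    (((Finset.Icc 1 (m+2)).powerset.filter
      (fun S => S.card = k+1 ∧ ∀ i ∈ S, ∀ j ∈ S, i < j → i + 2 ≤ j)))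
    (fun S => (m+2) ∈ S)]
  rw [add_comm]
  congr 1
  · -- subsets not containing m+2 ↔ subsets of Icc 1 (m+1)
    apply Finset.sum_congr
    · ext S
      simp only [Finset.mem_filter, Finset.mem_powerset]
      constructor
      · rintro ⟨⟨hsub, hcard, hsp⟩, hnm⟩
        refine ⟨fun x hx => ?_, hcard, hsp⟩
        have := hsub hx
        simp only [Finset.mem_Icc] at this ⊢
        have : x ≠ m + 2 := fun h => hnm (h ▸ hx)
        omega
      · rintro ⟨hsub, hcard, hsp⟩
        refine ⟨⟨fun x hx => ?_, hcard, hsp⟩, fun hm => ?_⟩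
        · have := hsub hx; simp only [Finset.mem_Icc] at this ⊢; omega
        · have := hsub hm; simp only [Finset.mem_Icc] at this; omega
    · intros; rfl
  · -- subsets containing m+2
    rw [Finset.mul_sum]
    refine Finset.sum_bij' (fun S _ => S.erase (m+2)) (fun S _ => insert (m+2) S)
      ?_ ?_ ?_ ?_ ?_
    · rintro S hS
      simp only [Finset.mem_filter, Finset.mem_powerset] at hS ⊢
      obtain ⟨⟨hsub, hcard, hsp⟩, hm⟩ := hS
      refine ⟨fun x hx => ?_, ?_, ?_⟩
      · rw [Finset.mem_erase] at hx
        obtain ⟨hne, hxS⟩ := hx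
        have hx2 := hsub hxS
        simp only [Finset.mem_Icc] at hx2 ⊢
        have : x < m + 2 := lt_of_le_of_ne hx2.2 hne
        have := hsp x hxS (m+2) hm (by omega)
        omega
      · rw [Finset.card_erase_of_mem hm, hcard]; rfl
      · intro i hi j hj hij
        exact hsp i (Finset.mem_of_mem_erase hi) j (Finset.mem_of_mem_erase hj) hij
    · rintro S hS
      simp only [Finset.mem_filter, Finset.mem_powerset] at hS ⊢
      obtain ⟨hsub, hcard, hsp⟩ := hS
      have hnm : (m+2) ∉ S := by
        intro h; have := hsub h; simp only [Finset.mem_Icc] at this; omega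
      refine ⟨⟨fun x hx => ?_, ?_, ?_⟩, Finset.mem_insert_self _ _⟩
      · rcases Finset.mem_insert.1 hx with rfl | hx
        · simp only [Finset.mem_Icc]; omega
        · have := hsub hx; simp only [Finset.mem_Icc] at this ⊢; omega
      · rw [Finset.card_insert_of_notMem hnm, hcard]
      · intro i hi j hj hij
        rcases Finset.mem_insert.1 hi with rfl | hi
        · rcases Finset.mem_insert.1 hj with rfl | hj
          · omega
          · have := hsub hj; simp only [Finset.mem_Icc] at this; omega
        · rcases Finset.mem_insert.1 hj with rfl | hj
          · have := hsub hi; simp only [Finset.mem_Icc] at this; omega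
          · exact hsp i hi j hj hij
    · rintro S hS
      simp only [Finset.mem_filter] at hS
      exact Finset.insert_erase hS.2
    · rintro S hS
      simp only [Finset.mem_filter, Finset.mem_powerset] at hS
      have hnm : (m+2) ∉ S := by
        intro h; have := hS.1 h; simp only [Finset.mem_Icc] at this; omega
      exact Finset.erase_insert hnm
    · rintro S hS
      simp only [Finset.mem_filter] at hS
      exact (Finset.mul_prod_erase S a hS.2).symm

lemma sparse_card {S : Finset ℕ} {m : ℕ} (hsub : S ⊆ Finset.Icc 1 m)
    (hsp : ∀ i ∈ S, ∀ j ∈ S, i < j → i + 2 ≤ j) : 2 * S.card ≤ m + 1 := by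
  have hdisj : ∀ i ∈ S, ∀ j ∈ S, i ≠ j →
      Disjoint ({i, i+1} : Finset ℕ) {j, j+1} := by
    intro i hi j hj hne
    rw [Finset.disjoint_left]
    intro x hx hx'
    simp only [Finset.mem_insert, Finset.mem_singleton] at hx hx'
    rcases lt_trichotomy i j with h | h | h
    · have := hsp i hi j hj h; omega
    · omega
    · have := hsp j hj i hi h; omega
  have hcard : (S.biUnion (fun i => {i, i+1})).card = 2 * S.card := by
    rw [Finset.card_biUnion hdisj]
    have : ∀ i ∈ S, ({i, i+1} : Finset ℕ).card = 2 := by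
      intro i _
      rw [Finset.card_insert_of_notMem (by simp), Finset.card_singleton]
    rw [Finset.sum_congr rfl this]
    simp [mul_comm]
  have hsub2 : S.biUnion (fun i => {i, i+1}) ⊆ Finset.Icc 1 (m+1) := by
    intro x hx
    simp only [Finset.mem_biUnion, Finset.mem_insert, Finset.mem_singleton] at hx
    obtain ⟨i, hi, hx⟩ := hx
    have := hsub hi
    simp only [Finset.mem_Icc] at this ⊢
    omega
  have := Finset.card_le_card hsub2
  rw [hcard] at this
  simpa using this

lemma eC_eq_zero (a : ℕ → ℝ) {k m : ℕ} (h : m + 2 ≤ 2 * k) : eC a k m = 0 := by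
  unfold eC
  refine Finset.sum_eq_zero fun S hS => ?_
  simp only [Finset.mem_filter, Finset.mem_powerset] at hS
  obtain ⟨hsub, hcard, hsp⟩ := hS
  have := sparse_card hsub hsp
  omega

lemma Q_rec (a : ℕ → ℝ) (x : ℝ) (N : ℕ) :
    (∑ k ∈ Finset.range (N+3), eC a k (2*(N+2)) * x^(N+2-k)) =
      (x + a (2*N+3) + a (2*N+4)) * (∑ k ∈ Finset.range (N+2), eC a k (2*(N+1)) * x^(N+1-k))
      - a (2*N+2) * a (2*N+3) * (∑ k ∈ Finset.range (N+1), eC a k (2*N) * x^(N-k)) := by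
  have h21 : 2*(N+1) = 2*N+2 := by ring
  have h22 : 2*(N+2) = 2*N+4 := by ring
  rw [h21, h22]
  set b := a (2*N+3) + a (2*N+4) with hb
  set c := a (2*N+2) * a (2*N+3) with hc
  -- the three target sums rewritten over range (N+3)
  have hA : (∑ k ∈ Finset.range (N+3), eC a k (2*N+2) * x^(N+2-k))
      = x * (∑ k ∈ Finset.range (N+2), eC a k (2*N+2) * x^(N+1-k)) := by
    rw [Finset.sum_range_succ, eC_eq_zero a (by omega), Finset.mul_sum]
    simp only [zero_mul, add_zero]
    refine Finset.sum_congr rfl fun k hk => ?_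
    rw [Finset.mem_range] at hk
    have : N + 2 - k = (N + 1 - k) + 1 := by omega
    rw [this, pow_succ]; ring
  have hB : (∑ k ∈ Finset.range (N+3),
        (if k = 0 then 0 else b * eC a (k-1) (2*N+2) * x^(N+2-k)))
      = b * (∑ k ∈ Finset.range (N+2), eC a k (2*N+2) * x^(N+1-k)) := by
    rw [Finset.sum_range_succ', Finset.mul_sum]
    rw [if_pos rfl]
    simp only [add_zero]
    refine Finset.sum_congr rfl fun k hk => ?_
    rw [Finset.mem_range] at hk
    rw [if_neg (Nat.succ_ne_zero k)]
    have h1 : k + 1 - 1 = k := by omega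
    have h2 : N + 2 - (k+1) = N + 1 - k := by omega
    rw [h1, h2]; ring
  have hC : (∑ k ∈ Finset.range (N+3),
        (if k ≤ 1 then 0 else c * eC a (k-2) (2*N) * x^(N+2-k)))
      = c * (∑ k ∈ Finset.range (N+1), eC a k (2*N) * x^(N-k)) := by
    rw [Finset.sum_range_succ', Finset.sum_range_succ', Finset.mul_sum]
    rw [if_pos (by omega : (0:ℕ) ≤ 1), if_pos (by omega : (1:ℕ) ≤ 1)]
    simp only [add_zero]
    refine Finset.sum_congr rfl fun k hk => ?_
    rw [Finset.mem_range] at hk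
    rw [if_neg (by omega : ¬ (k + 1 + 1 ≤ 1))]
    have h1 : k + 1 + 1 - 2 = k := by omega
    have h2 : N + 2 - (k + 1 + 1) = N - k := by omega
    rw [h1, h2]; ring
  -- combine
  have key : (∑ k ∈ Finset.range (N+3), eC a k (2*N+4) * x^(N+2-k))
      = (∑ k ∈ Finset.range (N+3), eC a k (2*N+2) * x^(N+2-k))
      + (∑ k ∈ Finset.range (N+3),
          (if k = 0 then 0 else b * eC a (k-1) (2*N+2) * x^(N+2-k)))
      - (∑ k ∈ Finset.range (N+3),
          (if k ≤ 1 then 0 else c * eC a (k-2) (2*N) * x^(N+2-k))) := by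
    rw [← Finset.sum_add_distrib, ← Finset.sum_sub_distrib]
    refine Finset.sum_congr rfl fun k _ => ?_
    match k with
    | 0 => simp [eC_zero]
    | 1 =>
      have e1 : eC a 1 (2*N+4) = eC a 1 (2*N+3) + a (2*N+4) * eC a 0 (2*N+2) :=
        eC_succ a 0 (2*N+2)
      have e2 : eC a 1 (2*N+3) = eC a 1 (2*N+2) + a (2*N+3) * eC a 0 (2*N+1) :=
        eC_succ a 0 (2*N+1)
      rw [if_neg (by omega : (1:ℕ) ≠ 0), if_pos (by omega : (1:ℕ) ≤ 1)]
      rw [eC_zero] at e1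
      rw [eC_zero] at e2
      simp only [show (1:ℕ)-1 = 0 by norm_num, eC_zero]
      rw [e1, e2, hb]
      ring
    | (j+2) =>
      have e1 : eC a (j+2) (2*N+4) = eC a (j+2) (2*N+3) + a (2*N+4) * eC a (j+1) (2*N+2) :=
        eC_succ a (j+1) (2*N+2)
      have e2 : eC a (j+2) (2*N+3) = eC a (j+2) (2*N+2) + a (2*N+3) * eC a (j+1) (2*N+1) :=
        eC_succ a (j+1) (2*N+1)
      have e3 : eC a (j+1) (2*N+2) = eC a (j+1) (2*N+1) + a (2*N+2) * eC a j (2*N) :=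
        eC_succ a j (2*N)
      rw [if_neg (by omega : ¬ (j+2 = 0)), if_neg (by omega : ¬ (j + 2 ≤ 1))]
      have h1 : j + 2 - 1 = j + 1 := by omega
      have h2 : j + 2 - 2 = j := by omega
      rw [h1, h2, e1, e2, hb, hc]
      linear_combination (-(a (2*N+3) * x^(N+2-(j+2)))) * e3
  rw [key, hA, hB, hC]
  ring

lemma toda_sub (N : ℕ) (a : ℕ → ℝ) (x : ℝ) :
    (todaTridiag (N+1) a x).submatrix (Fin.castSucc) (Fin.castSucc) = todaTridiag N a x := by
  ext i j
  simp [todaTridiag, Matrix.submatrix_apply]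

lemma det_toda_rec (N : ℕ) (a : ℕ → ℝ) (x : ℝ) :
    (todaTridiag (N+2) a x).det
      = (x + a (2*N+3) + a (2*N+4)) * (todaTridiag (N+1) a x).det
        - a (2*N+2) * a (2*N+3) * (todaTridiag N a x).det := by
  set T := todaTridiag (N+2) a x with hT
  -- value of succAbove for the pivot row index N (= castSucc (last N))
  have hsa : ∀ k : Fin (N+1),
      (((Fin.last N).castSucc : Fin (N+2)).succAbove k : ℕ)
        = if (k : ℕ) < N then (k : ℕ) else (k : ℕ) + 1 := by
    intro k
    rw [Fin.succAbove]
    split_ifs with h h2 h3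
    · rfl
    · exfalso
      rw [Fin.lt_def] at h
      simp only [Fin.coe_castSucc, Fin.val_last] at h
      omega
    · exfalso
      rw [Fin.lt_def] at h
      simp only [Fin.coe_castSucc, Fin.val_last] at h
      omega
    · rfl
  have hz : ∀ i : Fin N, T i.castSucc.castSucc (Fin.last (N+1)) = 0 := by
    intro i
    have hi := i.isLt
    simp only [hT, todaTridiag, Matrix.of_apply, Fin.coe_castSucc, Fin.val_last]
    rw [if_neg (by omega), if_neg (by omega), if_neg (by omega)]
  have hT1 : T (Fin.castSucc (Fin.last N)) (Fin.last (N+1)) = 1 := by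
    simp only [hT, todaTridiag, Matrix.of_apply, Fin.coe_castSucc, Fin.val_last]
    rw [if_neg (by omega)]
    norm_num
  have hTd : T (Fin.last (N+1)) (Fin.last (N+1)) = x + a (2*N+3) + a (2*N+4) := by
    simp only [hT, todaTridiag, Matrix.of_apply, Fin.val_last, if_pos rfl]
    rw [show 2*(N+1)+1 = 2*N+3 by ring, show 2*(N+1)+2 = 2*N+4 by ring]
    norm_num
  have hs1 : ((-1:ℝ))^(((Fin.castSucc (Fin.last N) : Fin (N+2)) : ℕ) + ((Fin.last (N+1)) : ℕ)) = -1 := by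
    simp only [Fin.coe_castSucc, Fin.val_last]
    rw [show N + (N+1) = 2*N+1 by ring, pow_succ, pow_mul]
    norm_num
  have hs2 : ((-1:ℝ))^(((Fin.last (N+1)) : ℕ) + ((Fin.last (N+1)) : ℕ)) = 1 := by
    simp only [Fin.val_last]
    rw [show (N+1) + (N+1) = 2*(N+1) by ring, pow_mul]
    norm_num
  have hm1 : T.submatrix (Fin.last (N+1)).succAbove (Fin.last (N+1)).succAbove
      = todaTridiag (N+1) a x := by
    rw [Fin.succAbove_last, hT]
    exact toda_sub (N+1) a x
  have hm2 : (T.submatrix ((Fin.last N).castSucc : Fin (N+2)).succAbove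
        (Fin.last (N+1)).succAbove).det
      = a (2*N+2) * a (2*N+3) * (todaTridiag N a x).det := by
    set M := T.submatrix ((Fin.last N).castSucc : Fin (N+2)).succAbove
        (Fin.last (N+1)).succAbove with hM
    have hMz : ∀ j : Fin N, M (Fin.last N) j.castSucc = 0 := by
      intro j
      have hj := j.isLt
      have hrv : ((((Fin.last N).castSucc : Fin (N+2)).succAbove (Fin.last N)) : ℕ) = N + 1 := by
        rw [hsa]; simp
      simp only [hM, Matrix.submatrix_apply, Fin.succAbove_last, hT, todaTridiag,
        Matrix.of_apply, hrv, Fin.coe_castSucc]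
      rw [if_neg (by omega), if_neg (by omega), if_neg (by omega)]
    have hMe : M (Fin.last N) (Fin.last N) = a (2*N+2) * a (2*N+3) := by
      have hrv : ((((Fin.last N).castSucc : Fin (N+2)).succAbove (Fin.last N)) : ℕ) = N + 1 := by
        rw [hsa]; simp
      simp only [hM, Matrix.submatrix_apply, Fin.succAbove_last, hT, todaTridiag,
        Matrix.of_apply, hrv, Fin.coe_castSucc, Fin.val_last]
      rw [if_neg (by omega), if_neg (by omega)]
      norm_num
    have hMsub : M.submatrix (Fin.last N).succAbove (Fin.last N).succAbove
        = todaTridiag N a x := by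
      ext i j
      have hi := i.isLt
      have hj := j.isLt
      have hrow : ((((Fin.last N).castSucc : Fin (N+2)).succAbove ((Fin.last N).succAbove i)) : ℕ)
          = (i : ℕ) := by
        rw [Fin.succAbove_last, hsa]
        simp [hi]
      have hcol : (((Fin.last (N+1)).succAbove ((Fin.last N).succAbove j)) : ℕ) = (j : ℕ) := by
        rw [Fin.succAbove_last, Fin.succAbove_last]
        simp
      simp only [Matrix.submatrix_apply, hM, hT, todaTridiag, Matrix.of_apply, hrow, hcol]
    rw [Matrix.det_succ_row M (Fin.last N), Fin.sum_univ_castSucc]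
    have hzsum : ∀ j : Fin N,
        ((-1:ℝ))^(((Fin.last N) : ℕ) + ((j.castSucc : Fin (N+1)) : ℕ)) * M (Fin.last N) j.castSucc
          * (M.submatrix (Fin.last N).succAbove (j.castSucc).succAbove).det = 0 := by
      intro j
      rw [hMz]; ring
    rw [Finset.sum_eq_zero fun j _ => hzsum j, zero_add, hMe, hMsub]
    have : ((-1:ℝ))^(((Fin.last N) : ℕ) + ((Fin.last N) : ℕ)) = 1 := by
      simp only [Fin.val_last]
      rw [show N + N = 2*N by ring, pow_mul]
      norm_num
    rw [this]
    ring
  rw [Matrix.det_succ_column T (Fin.last (N+1)), Fin.sum_univ_castSucc, Fin.sum_univ_castSucc]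
  have hzsum : ∀ i : Fin N,
      ((-1:ℝ))^(((i.castSucc.castSucc : Fin (N+2)) : ℕ) + ((Fin.last (N+1)) : ℕ))
        * T i.castSucc.castSucc (Fin.last (N+1))
        * (T.submatrix (i.castSucc.castSucc).succAbove (Fin.last (N+1)).succAbove).det = 0 := by
    intro i
    rw [hz]; ring
  rw [Finset.sum_eq_zero fun i _ => hzsum i, zero_add, hT1, hTd, hs1, hs2, hm1, hm2]
  ring

lemma toda_det_eq_sum (a : ℕ → ℝ) (x : ℝ) (N : ℕ) :
    (todaTridiag N a x).det = ∑ k ∈ Finset.range (N+1), eC a k (2*N) * x^(N-k) := by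
  induction N using Nat.twoStepInduction with
  | zero =>
    rw [Matrix.det_fin_zero]
    simp [eC_zero]
  | one =>
    rw [Matrix.det_fin_one]
    have h12 : eC a 1 2 = a 1 + a 2 := by
      have := eC_succ a 0 0
      rw [eC_zero, eC_one_one] at this
      rw [this]; ring
    rw [Finset.sum_range_succ, Finset.sum_range_succ, Finset.range_zero, Finset.sum_empty]
    rw [eC_zero, h12]
    show x + a (2*0+1) + a (2*0+2) = 0 + 1 * x ^ (1-0) + (a 1 + a 2) * x ^ (1-1)
    norm_num
    ring
  | more n ih1 ih2 =>
    calc (todaTridiag (n+2) a x).det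
        = (x + a (2*n+3) + a (2*n+4)) * (todaTridiag (n+1) a x).det
            - a (2*n+2) * a (2*n+3) * (todaTridiag n a x).det := det_toda_rec n a x
      _ = (x + a (2*n+3) + a (2*n+4))
            * (∑ k ∈ Finset.range (n+2), eC a k (2*(n+1)) * x^(n+1-k))
            - a (2*n+2) * a (2*n+3) * (∑ k ∈ Finset.range (n+1), eC a k (2*n) * x^(n-k)) := by
          rw [ih1, ih2]
      _ = ∑ k ∈ Finset.range (n+3), eC a k (2*(n+2)) * x^(n+2-k) := (Q_rec a x n).symm
      _ = ∑ k ∈ Finset.range (n+2+1), eC a k (2*(n+2)) * x^(n+2-k) := rfl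

/-- `det T = ∑_{k=0}^{N} c_k^{(N)} x^{N-k}` for the tridiagonal matrix `T`. -/
theorem det_todaTridiag (N : ℕ) (hN : 1 ≤ N) (a : ℕ → ℝ) (x : ℝ) :
    (todaTridiag N a x).det = ∑ k ∈ Finset.range (N + 1), cCoef a k N * x ^ (N - k) := by
  have h : ∀ k, cCoef a k N = eC a k (2*N) := fun _ => rfl
  simp only [h]
  exact toda_det_eq_sum a x N
end

section
/- Let N ≥ 3, let a_1, …, a_{2N}, x be real numbers and y a nonzero real number. Let G be the N×N matrix whose tridiagonal part is G_{jj} = x + a_{2j−1} + a_{2j}, G_{j,j+1} = 1, G_{j+1,j} = a_{2j} a_{2j+1}, with the two corner entries G_{1,N} = (−1)^{N−1} a_1 a_{2N}/y and G_{N,1} = (−1)^{N−1} y, and all other entries 0. Then det G = y + (∏_{i=1}^{2N} a_i)/y + Σ_{k=0}^{N} e_k^{(N)} x^{N−k}, where e_0^{(N)} = 1 and, for 1 ≤ k ≤ N, e_k^{(N)} is the sum over all cyclically sparse subsets S of {1,…,2N} with |S| = k of ∏_{i∈S} a_i. -/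
/-!
The corner entries of `G` sit in its first and last columns, so multilinearity in these two
columns writes `det G` as `det T + y + (∏ aᵢ) / y - a₁ a₂ₙ det T'`, where `T` is the tridiagonal
part of `G` and `T'` is `T` without its first and last rows and columns: the two middle terms
are triangular minors, and the two corner signs `(-1)^(N-1)` cancel the Laplace signs.

Tridiagonal determinants obey the continuant recurrence, and so do weighted sums over sparse
subsets of an interval (split on whether the left endpoint is chosen). Hence `det T` is the sum
of `∏_{i∈S} aᵢ · x^{N-|S|}` over sparse `S ⊆ [1, 2N]`, and `a₁ a₂ₙ det T'` is exactly the part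
of that sum coming from the sets containing both `1` and `2N`; what remains is the sum over
cyclically sparse sets.
-/

/-- Sum over all *cyclically sparse* subsets `S` of `{1, …, 2N}` with `|S| = k`
(any two distinct elements differ by at least 2 and not both `1` and `2N` lie in `S`)
of `∏_{i ∈ S} a i`. -/
noncomputable def cycCoef (a : ℕ → ℝ) (k N : ℕ) : ℝ :=
  ∑ S ∈ (Finset.Icc 1 (2 * N)).powerset.filter
      (fun S => S.card = k ∧ (∀ i ∈ S, ∀ j ∈ S, i < j → i + 2 ≤ j) ∧
        ¬(1 ∈ S ∧ 2 * N ∈ S)),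
    ∏ i ∈ S, a i

/-- `e_0^{(N)} = 1` and, for `1 ≤ k ≤ N`, `e_k^{(N)}` is the sum over all cyclically
sparse subsets of `{1,…,2N}` with `|S| = k` of `∏_{i ∈ S} a i`. -/
noncomputable def eCoef (a : ℕ → ℝ) (k N : ℕ) : ℝ :=
  if k = 0 then 1 else cycCoef a k N

/-- The `N × N` matrix whose tridiagonal part has diagonal `x + a_{2j-1} + a_{2j}`,
superdiagonal `1`, subdiagonal `a_{2j} a_{2j+1}`, together with the corner entries
`G_{1,N} = (-1)^{N-1} a_1 a_{2N} / y` and `G_{N,1} = (-1)^{N-1} y`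
(rows and columns being 1-indexed). -/
noncomputable def todaLax (N : ℕ) (a : ℕ → ℝ) (x y : ℝ) : Matrix (Fin N) (Fin N) ℝ :=
  Matrix.of fun i j =>
    if (i : ℕ) = (j : ℕ) then x + a (2 * (i : ℕ) + 1) + a (2 * (i : ℕ) + 2)
    else if (j : ℕ) = (i : ℕ) + 1 then 1
    else if (i : ℕ) = (j : ℕ) + 1 then a (2 * (j : ℕ) + 2) * a (2 * (j : ℕ) + 3)
    else if (i : ℕ) = 0 ∧ (j : ℕ) = N - 1 then (-1 : ℝ) ^ (N - 1) * a 1 * a (2 * N) / y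
    else if (i : ℕ) = N - 1 ∧ (j : ℕ) = 0 then (-1 : ℝ) ^ (N - 1) * y
    else 0

open Finset Matrix

section CommRing

variable {R : Type*} [CommRing R]

def sparseSubsets (l m : ℕ) : Finset (Finset ℕ) :=
  (Icc l m).powerset.filter fun S => ∀ i ∈ S, ∀ j ∈ S, i < j → i + 2 ≤ j

theorem mem_sparseSubsets {S : Finset ℕ} {l m : ℕ} :
    S ∈ sparseSubsets l m ↔
      (∀ i ∈ S, l ≤ i ∧ i ≤ m) ∧ ∀ i ∈ S, ∀ j ∈ S, i < j → i + 2 ≤ j := by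
  simp [sparseSubsets, subset_iff]

theorem card_le_of_mem_sparseSubsets {S : Finset ℕ} {l m : ℕ} (hS : S ∈ sparseSubsets l m) :
    #S ≤ (m + 2 - l) / 2 := by
  rw [mem_sparseSubsets] at hS
  obtain ⟨hlm, hgap⟩ := hS
  refine (card_le_card_of_injOn (fun i => (i - l) / 2) (fun i hi => ?_)
    fun i hi j hj hij => ?_).trans (card_range _).le
  · have := hlm i hi
    simp only [coe_range, Set.mem_Iio]
    omega
  · have := hlm i hi
    have := hlm j hj
    rcases lt_trichotomy i j with h | h | h
    · have := hgap i hi j hj h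
      simp only at hij
      omega
    · exact h
    · have := hgap j hj i hi h
      simp only at hij
      omega

theorem sparseSubsets_of_lt {l m : ℕ} (h : m < l) : sparseSubsets l m = {∅} := by
  ext S
  simp only [mem_sparseSubsets, mem_singleton, eq_empty_iff_forall_notMem]
  exact ⟨fun hS i hi => by have := hS.1 i hi; omega, fun hS => by simp_all⟩

/-- The exponent `c - #S` truncates: the sum is meant for `c ≥ (m + 2 - l) / 2`, the largest size
of a sparse subset of `[l, m]` (`card_le_of_mem_sparseSubsets`). -/
def sparseSum (b : ℕ → R) (x : R) (l m c : ℕ) : R :=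
  ∑ S ∈ sparseSubsets l m, (∏ i ∈ S, b i) * x ^ (c - #S)

theorem sparseSum_of_lt (b : ℕ → R) (x : R) {l m : ℕ} (c : ℕ) (h : m < l) :
    sparseSum b x l m c = x ^ c := by
  simp [sparseSum, sparseSubsets_of_lt h]

theorem filter_not_mem_sparseSubsets (l m : ℕ) :
    (sparseSubsets l m).filter (l ∉ ·) = sparseSubsets (l + 1) m := by
  ext S
  simp only [mem_filter, mem_sparseSubsets]
  constructor
  · rintro ⟨⟨hlm, hgap⟩, hl⟩
    refine ⟨fun i hi => ?_, hgap⟩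
    have := hlm i hi
    have : i ≠ l := by rintro rfl; exact hl hi
    omega
  · rintro ⟨hlm, hgap⟩
    exact ⟨⟨fun i hi => by have := hlm i hi; omega, hgap⟩, fun hl => by have := hlm l hl; omega⟩

theorem sum_sparseSubsets_filter_mem (b : ℕ → R) (x : R) {l m : ℕ} (c : ℕ) (h : l ≤ m) :
    ∑ S ∈ (sparseSubsets l m).filter (l ∈ ·), (∏ i ∈ S, b i) * x ^ (c + 1 - #S) =
      b l * sparseSum b x (l + 2) m c := by
  rw [sparseSum, mul_sum]
  refine sum_nbij' (fun S => S.erase l) (insert l) (fun S hS => ?_) (fun S hS => ?_)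
    (fun S hS => insert_erase (mem_filter.1 hS).2) (fun S hS => erase_insert fun hl => ?_)
    (fun S hS => ?_)
  · simp only [mem_filter, mem_sparseSubsets] at hS
    obtain ⟨⟨hlm, hgap⟩, hl⟩ := hS
    simp only [mem_sparseSubsets, mem_erase]
    refine ⟨fun i hi => ?_, fun i hi j hj => hgap i hi.2 j hj.2⟩
    have := hlm i hi.2
    have := hgap l hl i hi.2 (by omega)
    omega
  · rw [mem_sparseSubsets] at hS
    simp only [mem_filter, mem_sparseSubsets, mem_insert, true_or, and_true]
    constructor
    · rintro i (rfl | hi)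
      · omega
      · have := hS.1 i hi; omega
    · rintro i (rfl | hi) j (rfl | hj) hij
      · omega
      · have := hS.1 j hj; omega
      · have := hS.1 i hi; omega
      · exact hS.2 i hi j hj hij
  · have := (mem_sparseSubsets.1 hS).1 l hl
    omega
  · have hl := (mem_filter.1 hS).2
    have hcard := card_pos.2 ⟨l, hl⟩
    rw [← mul_prod_erase S b hl, card_erase_of_mem hl, show c + 1 - #S = c - (#S - 1) by omega,
      mul_assoc]

theorem sparseSum_succ (b : ℕ → R) (x : R) {l m : ℕ} (c : ℕ) (h : l ≤ m) :
    sparseSum b x l m (c + 1) =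
      sparseSum b x (l + 1) m (c + 1) + b l * sparseSum b x (l + 2) m c := by
  rw [sparseSum, ← sum_filter_add_sum_filter_not _ (l ∈ ·), filter_not_mem_sparseSubsets,
    sum_sparseSubsets_filter_mem b x c h, add_comm]
  rfl

theorem sparseSum_succ_eq_mul (b : ℕ → R) (x : R) {l m c : ℕ} (h : m + 1 ≤ l + 2 * c) :
    sparseSum b x l m (c + 1) = x * sparseSum b x l m c := by
  rw [sparseSum, sparseSum, mul_sum]
  refine sum_congr rfl fun S hS => ?_
  have := card_le_of_mem_sparseSubsets hS
  rw [show c + 1 - #S = c - #S + 1 by omega, pow_succ]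
  ring

theorem sparseSum_rec (b : ℕ → R) (x : R) (l n : ℕ) :
    sparseSum b x l (l + 2 * n + 3) (n + 2) =
      (x + b l + b (l + 1)) * sparseSum b x (l + 2) (l + 2 * n + 3) (n + 1) -
        b (l + 1) * b (l + 2) * sparseSum b x (l + 4) (l + 2 * n + 3) n := by
  rw [sparseSum_succ b x _ (by omega), sparseSum_succ b x _ (by omega),
    sparseSum_succ_eq_mul b x (l := l + 2) (by omega), sparseSum_succ b x (l := l + 2) _ (by omega)]
  ring

theorem sparseSum_comp_add (b : ℕ → R) (x : R) (l m c t : ℕ) :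
    sparseSum (fun i => b (i + t)) x l m c = sparseSum b x (l + t) (m + t) c := by
  refine sum_nbij' (map (addRightEmbedding t)) (image (· - t)) (fun S hS => ?_) (fun S hS => ?_)
    (fun S _ => ?_) (fun S hS => ?_) (fun S _ => ?_)
  · simp only [mem_sparseSubsets, mem_map, addRightEmbedding_apply, forall_exists_index,
      and_imp, forall_apply_eq_imp_iff₂] at hS ⊢
    exact ⟨fun i hi => by have := hS.1 i hi; omega, fun i hi j hj hij => by
      have := hS.2 i hi j hj (by omega); omega⟩
  · simp only [mem_sparseSubsets, mem_image, forall_exists_index, and_imp,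
      forall_apply_eq_imp_iff₂] at hS ⊢
    refine ⟨fun i hi => by have := hS.1 i hi; omega, fun i hi j hj hij => ?_⟩
    have := hS.1 i hi
    have := hS.2 i hi j hj (by omega)
    omega
  · ext i
    simp
  · ext i
    simp only [mem_map, mem_image, addRightEmbedding_apply, exists_exists_and_eq_and]
    refine ⟨fun ⟨j, hj, hji⟩ => ?_, fun hi => ⟨i, hi, ?_⟩⟩
    · have := (mem_sparseSubsets.1 hS).1 j hj
      rwa [← hji, Nat.sub_add_cancel (by omega)]
    · have := (mem_sparseSubsets.1 hS).1 i hi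
      omega
  · simp [prod_map, card_map]

def tridiag (n : ℕ) (d e : ℕ → R) : Matrix (Fin n) (Fin n) R :=
  of fun i j =>
    if (i : ℕ) = j then d i
    else if (j : ℕ) = i + 1 then 1
    else if (i : ℕ) = j + 1 then e j
    else 0

theorem tridiag_submatrix_shift {m n : ℕ} (d e : ℕ → R) (t : ℕ) {f g : Fin m → Fin n}
    (hf : ∀ i, (f i : ℕ) = i + t) (hg : ∀ i, (g i : ℕ) = i + t) :
    (tridiag n d e).submatrix f g = tridiag m (fun i => d (i + t)) (fun i => e (i + t)) := by
  ext i j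
  simp only [tridiag, submatrix_apply, of_apply, hf, hg]
  split_ifs <;> first | rfl | omega

theorem det_tridiag_succ_succ (n : ℕ) (d e : ℕ → R) :
    (tridiag (n + 2) d e).det =
      d 0 * (tridiag (n + 1) (fun i => d (i + 1)) (fun i => e (i + 1))).det -
        e 0 * (tridiag n (fun i => d (i + 2)) (fun i => e (i + 2))).det := by
  rw [det_succ_column_zero, Fin.sum_univ_succ, Fin.sum_univ_succ,
    sum_eq_zero fun i _ => by simp [tridiag]]
  have minor₀ : (tridiag (n + 2) d e).submatrix (Fin.succAbove 0) Fin.succ =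
      tridiag (n + 1) (fun i => d (i + 1)) (fun i => e (i + 1)) :=
    tridiag_submatrix_shift d e 1 (fun i => by simp) fun i => by simp
  have minor₁ : ((tridiag (n + 2) d e).submatrix (Fin.succ 0).succAbove Fin.succ).det =
      (tridiag n (fun i => d (i + 2)) (fun i => e (i + 2))).det := by
    rw [det_succ_row_zero, Fin.sum_univ_succ, sum_eq_zero fun j _ => by simp [tridiag],
      submatrix_submatrix, tridiag_submatrix_shift (f := (Fin.succ 0).succAbove ∘ Fin.succ)
      (g := Fin.succ ∘ Fin.succAbove 0) d e 2 (fun i => ?_) fun i => by simp]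
    · simp [tridiag]
    · simp [Fin.succAbove, Fin.lt_def]
  rw [minor₀, minor₁]
  simp [tridiag, sub_eq_add_neg]

theorem det_tridiag_submatrix_castSucc_succ (n : ℕ) (d e : ℕ → R) :
    ((tridiag (n + 1) d e).submatrix Fin.castSucc Fin.succ).det = 1 := by
  rw [det_of_isLowerTriangular _ fun i j (hij : i < j) => ?_]
  · exact prod_eq_one fun i _ => by simp [tridiag]
  · simp only [tridiag, submatrix_apply, of_apply, Fin.val_castSucc, Fin.val_succ]
    split_ifs <;> first | rfl | omega

theorem det_tridiag_submatrix_succ_castSucc (n : ℕ) (d e : ℕ → R) :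
    ((tridiag (n + 1) d e).submatrix Fin.succ Fin.castSucc).det = ∏ i : Fin n, e i := by
  rw [det_of_isUpperTriangular fun i j (hij : j < i) => ?_]
  · exact prod_congr rfl fun i _ => by simp [tridiag]; omega
  · simp only [tridiag, submatrix_apply, of_apply, Fin.val_castSucc, Fin.val_succ]
    split_ifs <;> first | rfl | omega

theorem det_updateCol_self_add {ι : Type*} [Fintype ι] [DecidableEq ι] (M : Matrix ι ι R)
    (j : ι) (u : ι → R) :
    (M.updateCol j fun i => M i j + u i).det = M.det + (M.updateCol j u).det := by
  rw [show (fun i => M i j + u i) = (fun i => M i j) + u from rfl, det_updateCol_add,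
    updateCol_eq_self]

theorem det_updateCol_self_add_updateCol_self_add {ι : Type*} [Fintype ι] [DecidableEq ι]
    (M : Matrix ι ι R) {j j' : ι} (h : j ≠ j') (u v : ι → R) :
    ((M.updateCol j fun i => M i j + u i).updateCol j' fun i => M i j' + v i).det =
      M.det + (M.updateCol j u).det + (M.updateCol j' v).det +
        ((M.updateCol j u).updateCol j' v).det := by
  have hu : (fun i => M i j + u i) = fun i => M.updateCol j' v i j + u i :=
    funext fun i => by rw [updateCol_ne h]
  have hv : (fun i => M i j' + v i) = fun i => M.updateCol j (fun i => M i j + u i) i j' + v i :=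
    funext fun i => by rw [updateCol_ne h.symm]
  rw [hv, det_updateCol_self_add, det_updateCol_self_add, updateCol_comm _ h, hu,
    det_updateCol_self_add, updateCol_comm _ h.symm]
  ring

theorem det_updateCol_single {n : ℕ} (M : Matrix (Fin (n + 1)) (Fin (n + 1)) R)
    (i j : Fin (n + 1)) (c : R) :
    (M.updateCol j (Pi.single i c)).det =
      (-1) ^ (i + j : ℕ) * c * (M.submatrix i.succAbove j.succAbove).det := by
  rw [det_succ_column _ j, sum_eq_single i fun k _ hk => by simp [hk]] <;> simp

theorem det_updateCol_single_corners {n : ℕ} (M : Matrix (Fin (n + 2)) (Fin (n + 2)) R)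
    (α β : R) :
    ((M.updateCol 0 (Pi.single (Fin.last (n + 1)) α)).updateCol (Fin.last (n + 1))
        (Pi.single 0 β)).det =
      -(α * β * (M.submatrix (Fin.succ ∘ Fin.castSucc)
        (Fin.castSucc ∘ Fin.succ : Fin n → _)).det) := by
  have hminor : (M.updateCol 0 (Pi.single (Fin.last (n + 1)) α)).submatrix Fin.succ Fin.castSucc =
      (M.submatrix Fin.succ Fin.castSucc).updateCol 0 (Pi.single (Fin.last n) α) := by
    ext i j
    by_cases hj : j = 0
    · subst hj
      by_cases hi : i = Fin.last n
      · subst hi; simp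
      · simp [hi]
    · simp [hj]
  rw [det_updateCol_single _ 0, Fin.succAbove_zero, Fin.succAbove_last, hminor,
    det_updateCol_single, Fin.succAbove_last, Fin.succAbove_zero, submatrix_submatrix]
  have hsign : (-1 : R) ^ (n + 1) * (-1) ^ n = -1 := by
    rw [← pow_add, show n + 1 + n = 2 * n + 1 by ring, pow_succ, pow_mul]
    simp
  simp only [Fin.val_zero, Fin.val_last, zero_add, add_zero]
  linear_combination (α * β * (M.submatrix (Fin.succ ∘ Fin.castSucc)
    (Fin.castSucc ∘ Fin.succ : Fin n → _)).det) * hsign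

def todaDiag (b : ℕ → R) (x : R) (i : ℕ) : R :=
  x + b (2 * i + 1) + b (2 * i + 2)

def todaSub (b : ℕ → R) (i : ℕ) : R :=
  b (2 * i + 2) * b (2 * i + 3)

theorem tridiag_toda_shift (b : ℕ → R) (x : R) (n t : ℕ) :
    tridiag n (fun i => todaDiag b x (i + t)) (fun i => todaSub b (i + t)) =
      tridiag n (todaDiag (fun k => b (k + 2 * t)) x) (todaSub fun k => b (k + 2 * t)) := by
  congr 1 <;> funext i <;> simp only [todaDiag, todaSub] <;> ring_nf

theorem det_tridiag_toda (b : ℕ → R) (x : R) (n : ℕ) :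
    (tridiag n (todaDiag b x) (todaSub b)).det = sparseSum b x 1 (2 * n) n := by
  induction n using Nat.twoStepInduction generalizing b with
  | zero => simp [sparseSum_of_lt]
  | one =>
    rw [det_fin_one, sparseSum_succ b x 0 (by omega), sparseSum_succ b x 0 (by omega),
      sparseSum_of_lt _ _ _ (by omega), sparseSum_of_lt _ _ _ (by omega),
      sparseSum_of_lt _ _ _ (by omega)]
    simp only [tridiag, todaDiag, of_apply, Fin.val_eq_zero, ↓reduceIte, mul_zero, zero_add,
      pow_one, pow_zero, mul_one]
    ring
  | more n ih₀ ih₁ =>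
    rw [det_tridiag_succ_succ, tridiag_toda_shift b x _ 1, tridiag_toda_shift b x _ 2, ih₀, ih₁,
      sparseSum_comp_add, sparseSum_comp_add, show 2 * (n + 2) = 1 + 2 * n + 3 by ring,
      sparseSum_rec]
    simp only [todaDiag, todaSub]
    ring_nf

theorem prod_Icc_one_two_mul_succ (a : ℕ → R) (m : ℕ) :
    ∏ i ∈ Icc 1 (2 * (m + 1)), a i = a 1 * (∏ i : Fin m, todaSub a i) * a (2 * (m + 1)) := by
  rw [Fin.prod_univ_eq_prod_range (todaSub a)]
  induction m with
  | zero => simp [show Icc 1 2 = {1, 2} by rfl]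
  | succ m ih =>
    rw [show 2 * (m + 1 + 1) = 2 * (m + 1) + 1 + 1 by ring, prod_Icc_succ_top (by omega),
      prod_Icc_succ_top (by omega), ih, prod_range_succ, todaSub]
    ring_nf

def cyclicSparseSubsets (N : ℕ) : Finset (Finset ℕ) :=
  (sparseSubsets 1 (2 * N)).filter fun S => ¬(1 ∈ S ∧ 2 * N ∈ S)

theorem sum_sparseSubsets_filter_endpoints_mem (a : ℕ → R) (x : R) (n : ℕ) :
    ∑ S ∈ (sparseSubsets 1 (2 * (n + 2))).filter (fun S => 1 ∈ S ∧ 2 * (n + 2) ∈ S),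
      (∏ i ∈ S, a i) * x ^ (n + 2 - #S) =
      a 1 * a (2 * (n + 2)) * sparseSum a x 3 (2 * n + 2) n := by
  set M := 2 * (n + 2)
  rw [sparseSum, mul_sum]
  refine sum_nbij' (fun S => (S.erase 1).erase M) (fun T => insert 1 (insert M T))
    (fun S hS => ?_) (fun T hT => ?_) (fun S hS => ?_) (fun T hT => ?_) (fun S hS => ?_)
  · simp only [mem_filter, mem_sparseSubsets] at hS
    obtain ⟨⟨hbd, hgap⟩, h1, hM⟩ := hS
    simp only [mem_sparseSubsets, mem_erase]
    refine ⟨fun i hi => ?_, fun i hi j hj => hgap i hi.2.2 j hj.2.2⟩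
    have := hbd i hi.2.2
    have := hgap 1 h1 i hi.2.2 (by omega)
    have := hgap i hi.2.2 M hM (by omega)
    omega
  · rw [mem_sparseSubsets] at hT
    simp only [mem_filter, mem_sparseSubsets, mem_insert, true_or, or_true, and_true]
    constructor
    · rintro i (rfl | rfl | hi)
      · omega
      · omega
      · have := hT.1 i hi; omega
    · rintro i (rfl | rfl | hi) j (rfl | rfl | hj) hij <;>
        first
        | omega
        | (have := hT.1 j hj; omega)
        | (have := hT.1 i hi; omega)
        | exact hT.2 i hi j hj hij
  · obtain ⟨-, h1, hM⟩ := mem_filter.1 hS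
    rw [insert_erase (mem_erase.2 ⟨by omega, hM⟩), insert_erase h1]
  · have := (mem_sparseSubsets.1 hT).1
    rw [erase_insert fun h => by grind, erase_insert fun h => by grind]
  · obtain ⟨-, h1, hM⟩ := mem_filter.1 hS
    have hM' : M ∈ S.erase 1 := mem_erase.2 ⟨by omega, hM⟩
    have := card_le_card (insert_subset h1 (singleton_subset_iff.2 hM))
    rw [card_pair (by omega)] at this
    rw [← mul_prod_erase S a h1, ← mul_prod_erase _ a hM', card_erase_of_mem hM',
      card_erase_of_mem h1, show n + 2 - #S = n - (#S - 1 - 1) by omega]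
    ring

theorem sparseSum_eq_sum_cyclicSparseSubsets_add (a : ℕ → R) (x : R) (n : ℕ) :
    sparseSum a x 1 (2 * (n + 2)) (n + 2) =
      ∑ S ∈ cyclicSparseSubsets (n + 2), (∏ i ∈ S, a i) * x ^ (n + 2 - #S) +
        a 1 * a (2 * (n + 2)) * sparseSum a x 3 (2 * n + 2) n := by
  rw [sparseSum, ← sum_filter_not_add_sum_filter _ (fun S => 1 ∈ S ∧ 2 * (n + 2) ∈ S),
    sum_sparseSubsets_filter_endpoints_mem]
  rfl

end CommRing

theorem cycCoef_eq_sum (a : ℕ → ℝ) (k N : ℕ) :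
    cycCoef a k N = ∑ S ∈ (cyclicSparseSubsets N).filter (#· = k), ∏ i ∈ S, a i := by
  rw [cycCoef, cyclicSparseSubsets, sparseSubsets, filter_filter, filter_filter]
  congr 1
  exact filter_congr fun S _ => by tauto

theorem eCoef_eq_cycCoef (a : ℕ → ℝ) (k N : ℕ) : eCoef a k N = cycCoef a k N := by
  rw [eCoef]
  split_ifs with hk
  · rw [hk, cycCoef_eq_sum, sum_eq_single_of_mem ∅ ?_ fun S hS hne => ?_, prod_empty]
    · simp [cyclicSparseSubsets, mem_sparseSubsets]
    · exact absurd (card_eq_zero.1 (mem_filter.1 hS).2) hne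
  · rfl

theorem sum_eCoef_mul_pow (a : ℕ → ℝ) (x : ℝ) (N : ℕ) :
    ∑ k ∈ range (N + 1), eCoef a k N * x ^ (N - k) =
      ∑ S ∈ cyclicSparseSubsets N, (∏ i ∈ S, a i) * x ^ (N - #S) := by
  have hcard : ∀ S ∈ cyclicSparseSubsets N, #S ∈ range (N + 1) := fun S hS => by
    have := card_le_of_mem_sparseSubsets (mem_filter.1 hS).1
    rw [mem_range]
    omega
  rw [← sum_fiberwise_of_maps_to hcard]
  refine sum_congr rfl fun k _ => ?_
  rw [eCoef_eq_cycCoef, cycCoef_eq_sum, sum_mul]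
  exact sum_congr rfl fun S hS => by rw [(mem_filter.1 hS).2]

theorem todaLax_eq_updateCol (n : ℕ) (a : ℕ → ℝ) (x y : ℝ) :
    todaLax (n + 3) a x y =
      ((tridiag (n + 3) (todaDiag a x) (todaSub a)).updateCol 0 fun i =>
          tridiag (n + 3) (todaDiag a x) (todaSub a) i 0 +
            (Pi.single (Fin.last (n + 2)) ((-1) ^ (n + 2) * y) : Fin (n + 3) → ℝ) i).updateCol
        (Fin.last (n + 2)) fun i =>
          tridiag (n + 3) (todaDiag a x) (todaSub a) i (Fin.last (n + 2)) +
            (Pi.single 0 ((-1) ^ (n + 2) * a 1 * a (2 * (n + 3)) / y) : Fin (n + 3) → ℝ) i := by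
  ext i j
  simp only [todaLax, tridiag, todaDiag, todaSub, of_apply, updateCol_apply, Pi.single_apply,
    Fin.ext_iff, Fin.val_last, Fin.val_zero, show n + 3 - 1 = n + 2 from rfl,
    zero_add, mul_zero]
  split_ifs <;> first | contradiction | omega | ring1 | simp_all

/-- `det G = y + (∏_{i=1}^{2N} a_i)/y + ∑_{k=0}^{N} e_k^{(N)} x^{N-k}`. -/
theorem det_todaLax (N : ℕ) (hN : 3 ≤ N) (a : ℕ → ℝ) (x : ℝ) (y : ℝ) (hy : y ≠ 0) :
    (todaLax N a x y).det
      = y + (∏ i ∈ Finset.Icc 1 (2 * N), a i) / y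
        + ∑ k ∈ Finset.range (N + 1), eCoef a k N * x ^ (N - k) := by
  obtain ⟨n, rfl⟩ : ∃ n, N = n + 3 := ⟨N - 3, by omega⟩
  set T := tridiag (n + 3) (todaDiag a x) (todaSub a)
  have hinner : (T.submatrix (Fin.succ ∘ Fin.castSucc) (Fin.castSucc ∘ Fin.succ)).det =
      sparseSum a x 3 (2 * (n + 1) + 2) (n + 1) := by
    rw [tridiag_submatrix_shift _ _ 1 (fun i => by simp) (fun i => by simp), tridiag_toda_shift,
      det_tridiag_toda, sparseSum_comp_add]
  have hsign : (-1 : ℝ) ^ (n + 2) * (-1) ^ (n + 2) = 1 := by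
    rw [← pow_add]
    exact Even.neg_one_pow ⟨n + 2, rfl⟩
  rw [todaLax_eq_updateCol,
    det_updateCol_self_add_updateCol_self_add _ (by simp [Fin.ext_iff]),
    det_updateCol_single, det_updateCol_single, det_updateCol_single_corners, hinner,
    Fin.succAbove_last, Fin.succAbove_zero, det_tridiag_submatrix_castSucc_succ,
    det_tridiag_submatrix_succ_castSucc, det_tridiag_toda,
    sparseSum_eq_sum_cyclicSparseSubsets_add a x (n + 1), sum_eCoef_mul_pow,
    prod_Icc_one_two_mul_succ a (n + 2)]
  simp only [Fin.val_last, Fin.val_zero, add_zero, zero_add, show n + 1 + 2 = n + 3 from rfl]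
  linear_combination (y + a 1 * a (2 * (n + 3)) * (∏ i : Fin (n + 2), todaSub a i) / y -
      a 1 * a (2 * (n + 3)) * sparseSum a x 3 (2 * (n + 1) + 2) (n + 1)) * hsign -
    a 1 * a (2 * (n + 3)) * sparseSum a x 3 (2 * (n + 1) + 2) (n + 1) *
      ((-1) ^ (n + 2) * (-1) ^ (n + 2)) * mul_inv_cancel₀ hy
end

section
/- Let N ≥ 2 and let a = (a_n)_{n∈ℤ/2Nℤ} and ā = (ā_n)_{n∈ℤ/2Nℤ} be families of positive reals related by the discrete periodic Toda lattice equations. Then the unordered pair {∏_{l=1}^{N} ā_{2l−1}, ∏_{l=1}^{N} ā_{2l}} equals the unordered pair {∏_{l=1}^{N} a_{2l−1}, ∏_{l=1}^{N} a_{2l}}; that is, either (∏ ā_{2l−1}, ∏ ā_{2l}) = (∏ a_{2l−1}, ∏ a_{2l}) or (∏ ā_{2l−1}, ∏ ā_{2l}) = (∏ a_{2l}, ∏ a_{2l−1}). -/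
open Finset

/-- Product of a nonvanishing `N`-periodic function over a window of length `N` is
independent of the starting point. -/
lemma toda_prod_shift (F : ℕ → ℝ) (N : ℕ) (hF : ∀ l, F (l + N) = F l)
    (h0 : ∀ l, F l ≠ 0) (m : ℕ) :
    ∏ l ∈ Finset.range N, F (l + m) = ∏ l ∈ Finset.range N, F l := by
  induction m with
  | zero => simp
  | succ m ih =>
    have h1 : ∏ l ∈ Finset.range (N + 1), F (l + m)
        = (∏ l ∈ Finset.range N, F (l + 1 + m)) * F (0 + m) := by
      rw [Finset.prod_range_succ']
    have h2 : ∏ l ∈ Finset.range (N + 1), F (l + m)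
        = (∏ l ∈ Finset.range N, F (l + m)) * F (0 + m) := by
      rw [Finset.prod_range_succ]
      congr 1
      rw [show N + m = (0 + m) + N by ring, hF]
    have h3 : (∏ l ∈ Finset.range N, F (l + 1 + m))
        = ∏ l ∈ Finset.range N, F (l + m) :=
      mul_right_cancel₀ (h0 _) (h1.symm.trans h2)
    calc ∏ l ∈ Finset.range N, F (l + (m + 1))
        = ∏ l ∈ Finset.range N, F (l + 1 + m) := by
          apply Finset.prod_congr rfl; intro i _
          rw [show i + (m + 1) = i + 1 + m by ring]
      _ = ∏ l ∈ Finset.range N, F (l + m) := h3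
      _ = ∏ l ∈ Finset.range N, F l := ih

/-- Suppose positive families `a, ā : ℤ/2Nℤ → ℝ` are related by the discrete periodic Toda
lattice equations `ā_{2n-1} + ā_{2n} = a_{2n} + a_{2n+1}` and
`ā_{2n} ā_{2n+1} = a_{2n+1} a_{2n+2}`.  Then the unordered pair
`{∏_{l=1}^N ā_{2l-1}, ∏_{l=1}^N ā_{2l}}` equals `{∏_{l=1}^N a_{2l-1}, ∏_{l=1}^N a_{2l}}`. -/
theorem toda_product_pair (N : ℕ) (hN : 2 ≤ N) (a abar : ZMod (2 * N) → ℝ)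
    (ha : ∀ n, 0 < a n) (habar : ∀ n, 0 < abar n)
    (hsum : ∀ n : ℤ, abar ((2 * n - 1 : ℤ) : ZMod (2 * N)) + abar ((2 * n : ℤ) : ZMod (2 * N))
      = a ((2 * n : ℤ) : ZMod (2 * N)) + a ((2 * n + 1 : ℤ) : ZMod (2 * N)))
    (hprod : ∀ n : ℤ, abar ((2 * n : ℤ) : ZMod (2 * N)) * abar ((2 * n + 1 : ℤ) : ZMod (2 * N))
      = a ((2 * n + 1 : ℤ) : ZMod (2 * N)) * a ((2 * n + 2 : ℤ) : ZMod (2 * N))) :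
    (∏ l ∈ Finset.range N, abar ((2 * l + 1 : ℕ) : ZMod (2 * N))
        = ∏ l ∈ Finset.range N, a ((2 * l + 1 : ℕ) : ZMod (2 * N)) ∧
      ∏ l ∈ Finset.range N, abar ((2 * l + 2 : ℕ) : ZMod (2 * N))
        = ∏ l ∈ Finset.range N, a ((2 * l + 2 : ℕ) : ZMod (2 * N))) ∨
    (∏ l ∈ Finset.range N, abar ((2 * l + 1 : ℕ) : ZMod (2 * N))
        = ∏ l ∈ Finset.range N, a ((2 * l + 2 : ℕ) : ZMod (2 * N)) ∧
      ∏ l ∈ Finset.range N, abar ((2 * l + 2 : ℕ) : ZMod (2 * N))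
        = ∏ l ∈ Finset.range N, a ((2 * l + 1 : ℕ) : ZMod (2 * N))) := by
  set A : ℕ → ℝ := fun n => a ((n : ℕ) : ZMod (2 * N)) with hA_def
  set B : ℕ → ℝ := fun n => abar ((n : ℕ) : ZMod (2 * N)) with hB_def
  have hA : ∀ n, 0 < A n := fun n => ha _
  have hB : ∀ n, 0 < B n := fun n => habar _
  have hAper : ∀ k, A (k + 2 * N) = A k := by
    intro k
    simp only [hA_def, Nat.cast_add, ZMod.natCast_self, add_zero]
  have hBper : ∀ k, B (k + 2 * N) = B k := by
    intro k
    simp only [hB_def, Nat.cast_add, ZMod.natCast_self, add_zero]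
  have hP : ∀ n : ℕ, B (2 * n) * B (2 * n + 1) = A (2 * n + 1) * A (2 * n + 2) := by
    intro n
    have h := hprod (n : ℤ)
    simp only [hA_def, hB_def]
    convert h using 3 <;> push_cast <;> ring
  have hS : ∀ n : ℕ, B (2 * n + 1) + B (2 * n + 2) = A (2 * n + 2) + A (2 * n + 3) := by
    intro n
    have h := hsum ((n : ℤ) + 1)
    simp only [hA_def, hB_def]
    convert h using 3 <;> push_cast <;> ring
  by_cases hcase : ∀ n : ℕ, B (2 * n) = A (2 * n + 1)
  · -- degenerate case: the products swap
    right
    have hB1 : ∀ n : ℕ, B (2 * n + 1) = A (2 * n + 2) := by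
      intro n
      have h := hP n
      rw [hcase n] at h
      exact mul_left_cancel₀ (ne_of_gt (hA (2 * n + 1))) h
    have h1 : ∀ l : ℕ, B (2 * l + 2) = A (2 * l + 3) := by
      intro l
      have h := hcase (l + 1)
      rw [show 2 * (l + 1) = 2 * l + 2 by ring] at h
      rw [show 2 * l + 2 + 1 = 2 * l + 3 by ring] at h
      exact h
    constructor
    · exact Finset.prod_congr rfl fun l _ => hB1 l
    · have hshift : ∏ l ∈ Finset.range N, A (2 * (l + 1) + 1)
          = ∏ l ∈ Finset.range N, A (2 * l + 1) :=
        toda_prod_shift (fun k => A (2 * k + 1)) N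
          (fun l => by
            show A (2 * (l + N) + 1) = A (2 * l + 1)
            rw [show 2 * (l + N) + 1 = (2 * l + 1) + 2 * N by ring, hAper])
          (fun l => ne_of_gt (hA _)) 1
      calc ∏ l ∈ Finset.range N, B (2 * l + 2)
          = ∏ l ∈ Finset.range N, A (2 * (l + 1) + 1) := by
            apply Finset.prod_congr rfl
            intro l _
            rw [show 2 * (l + 1) + 1 = 2 * l + 3 by ring]
            exact h1 l
        _ = ∏ l ∈ Finset.range N, A (2 * l + 1) := hshift
  · -- generic case: the products are preserved
    left
    push_neg at hcase
    obtain ⟨m, hm⟩ := hcase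
    set x : ℕ → ℝ := fun n => ∏ l ∈ Finset.range n, B (2 * m + 2 * l) with hx_def
    have hx : ∀ n, x (n + 1) = x n * B (2 * m + 2 * n) := by
      intro n; simp only [hx_def, Finset.prod_range_succ]
    set z : ℕ → ℝ := fun n => x (n + 1) - A (2 * m + 2 * n + 1) * x n with hz_def
    have key : ∀ n, z (n + 1) = A (2 * m + 2 * n + 2) * z n := by
      intro n
      have e5 := hx (n + 1)
      rw [show 2 * m + 2 * (n + 1) = 2 * m + 2 * n + 2 by ring] at e5
      have e2 := hx n
      have e3 := hS (m + n)
      rw [show 2 * (m + n) + 1 = 2 * m + 2 * n + 1 by ring,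
        show 2 * (m + n) + 2 = 2 * m + 2 * n + 2 by ring,
        show 2 * (m + n) + 3 = 2 * m + 2 * n + 3 by ring] at e3
      have e4 := hP (m + n)
      rw [show 2 * (m + n) = 2 * m + 2 * n by ring] at e4
      simp only [hz_def]
      rw [show 2 * m + 2 * (n + 1) + 1 = 2 * m + 2 * n + 3 by ring]
      linear_combination e5 + x (n + 1) * e3 - B (2 * m + 2 * n + 1) * e2 - x n * e4
    have hzN : ∀ n, z n = (∏ l ∈ Finset.range n, A (2 * m + 2 * l + 2)) * z 0 := by
      intro n
      induction n with
      | zero => simp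
      | succ n ih => rw [key n, ih, Finset.prod_range_succ]; ring
    have hz0 : z 0 = B (2 * m) - A (2 * m + 1) := by
      simp [hz_def, hx_def, Finset.prod_range_succ]
    have hzNval : z N = (B (2 * m) - A (2 * m + 1)) * x N := by
      have e1 : x (N + 1) = x N * B (2 * m) := by
        rw [hx N, hBper (2 * m)]
      have e2 : A (2 * m + 2 * N + 1) = A (2 * m + 1) := by
        rw [show 2 * m + 2 * N + 1 = (2 * m + 1) + 2 * N by ring, hAper]
      simp only [hz_def]
      rw [e1, e2]; ring
    have hne : B (2 * m) - A (2 * m + 1) ≠ 0 := sub_ne_zero.mpr hm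
    have hxN : x N = ∏ l ∈ Finset.range N, A (2 * m + 2 * l + 2) := by
      have h := hzN N
      rw [hzNval, hz0] at h
      exact mul_left_cancel₀ hne
        (h.trans (mul_comm (∏ l ∈ Finset.range N, A (2 * m + 2 * l + 2)) _))
    -- identify windowed products with the goal products via the shift lemma
    have hFper : ∀ l, B (2 * (l + N)) = B (2 * l) := fun l => by
      rw [show 2 * (l + N) = 2 * l + 2 * N by ring, hBper]
    have hGper : ∀ l, A (2 * (l + N)) = A (2 * l) := fun l => by
      rw [show 2 * (l + N) = 2 * l + 2 * N by ring, hAper]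
    have hBeven : ∏ l ∈ Finset.range N, B (2 * l + 2) = ∏ l ∈ Finset.range N, B (2 * l) := by
      have hshift : ∏ l ∈ Finset.range N, B (2 * (l + 1)) = ∏ l ∈ Finset.range N, B (2 * l) :=
        toda_prod_shift (fun k => B (2 * k)) N hFper (fun l => ne_of_gt (hB _)) 1
      calc ∏ l ∈ Finset.range N, B (2 * l + 2)
          = ∏ l ∈ Finset.range N, B (2 * (l + 1)) := by
            apply Finset.prod_congr rfl; intro l _
            rw [show 2 * (l + 1) = 2 * l + 2 by ring]
        _ = ∏ l ∈ Finset.range N, B (2 * l) := hshift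
    have hxNB : x N = ∏ l ∈ Finset.range N, B (2 * l) := by
      have hshift : ∏ l ∈ Finset.range N, B (2 * (l + m)) = ∏ l ∈ Finset.range N, B (2 * l) :=
        toda_prod_shift (fun k => B (2 * k)) N hFper (fun l => ne_of_gt (hB _)) m
      calc x N = ∏ l ∈ Finset.range N, B (2 * (l + m)) := by
            apply Finset.prod_congr rfl; intro l _
            rw [show 2 * (l + m) = 2 * m + 2 * l by ring]
        _ = ∏ l ∈ Finset.range N, B (2 * l) := hshift
    have hAeven : ∏ l ∈ Finset.range N, A (2 * m + 2 * l + 2)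
        = ∏ l ∈ Finset.range N, A (2 * l + 2) := by
      have hs1 : ∏ l ∈ Finset.range N, A (2 * (l + (m + 1))) = ∏ l ∈ Finset.range N, A (2 * l) :=
        toda_prod_shift (fun k => A (2 * k)) N hGper (fun l => ne_of_gt (hA _)) (m + 1)
      have hs2 : ∏ l ∈ Finset.range N, A (2 * (l + 1)) = ∏ l ∈ Finset.range N, A (2 * l) :=
        toda_prod_shift (fun k => A (2 * k)) N hGper (fun l => ne_of_gt (hA _)) 1
      calc ∏ l ∈ Finset.range N, A (2 * m + 2 * l + 2)
          = ∏ l ∈ Finset.range N, A (2 * (l + (m + 1))) := by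
            apply Finset.prod_congr rfl; intro l _
            rw [show 2 * (l + (m + 1)) = 2 * m + 2 * l + 2 by ring]
        _ = ∏ l ∈ Finset.range N, A (2 * l) := hs1
        _ = ∏ l ∈ Finset.range N, A (2 * (l + 1)) := hs2.symm
        _ = ∏ l ∈ Finset.range N, A (2 * l + 2) := by
            apply Finset.prod_congr rfl; intro l _
            rw [show 2 * (l + 1) = 2 * l + 2 by ring]
    have hgoal2 : ∏ l ∈ Finset.range N, B (2 * l + 2) = ∏ l ∈ Finset.range N, A (2 * l + 2) := by
      rw [hBeven, ← hxNB, hxN, hAeven]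
    refine ⟨?_, hgoal2⟩
    -- first component: use conservation of the total product
    have htot : (∏ l ∈ Finset.range N, B (2 * l)) * ∏ l ∈ Finset.range N, B (2 * l + 1)
        = (∏ l ∈ Finset.range N, A (2 * l + 1)) * ∏ l ∈ Finset.range N, A (2 * l + 2) := by
      rw [← Finset.prod_mul_distrib, ← Finset.prod_mul_distrib]
      exact Finset.prod_congr rfl fun l _ => hP l
    rw [← hBeven, hgoal2] at htot
    have hA2ne : (∏ l ∈ Finset.range N, A (2 * l + 2)) ≠ 0 :=
      ne_of_gt (Finset.prod_pos fun l _ => hA _)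
    have hfin : (∏ l ∈ Finset.range N, A (2 * l + 2)) * ∏ l ∈ Finset.range N, B (2 * l + 1)
        = (∏ l ∈ Finset.range N, A (2 * l + 2)) * ∏ l ∈ Finset.range N, A (2 * l + 1) := by
      rw [htot]; ring
    exact mul_left_cancel₀ hA2ne hfin
end

section
/- Let N ≥ 2 and let a = (a_n)_{n∈ℤ/2Nℤ} and ā = (ā_n)_{n∈ℤ/2Nℤ} be families of positive reals related by the discrete periodic Toda lattice equations. Then for every 1 ≤ k ≤ N, the quantity h_k := Σ over all cyclically sparse subsets S of ℤ/2Nℤ with |S| = k of ∏_{i∈S} a_i is conserved, i.e. Σ_{S} ∏_{i∈S} ā_i = Σ_{S} ∏_{i∈S} a_i; moreover h_{N+1} := ∏_{i∈ℤ/2Nℤ} a_i is conserved, i.e. ∏_i ā_i = ∏_i a_i. -/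
/-!
With the transfer matrix `T(c) = !![1, c; 1, 0]`, expanding the trace of the monodromy
`T(a₀X) ⋯ T(a_{2N-1}X)` over closed paths of the two-state chain gives `∑ₖ hₖ Xᵏ`: the forbidden
transition `1 → 1` is exactly cyclic sparseness. One step of the discrete Toda lattice is a gauge
transformation of consecutive pairs of transfer matrices by `!![1, 0; 1 - d, d]` with
`d = ā_{2n-1} / a_{2n}`. Telescoping around the period conjugates the monodromy of `ā`, read from
index `-1`, to that of `a`, so the traces agree; rotating the starting index does not change the
cyclically sparse sums. The product `∏ aᵢ` is conserved directly, by pairing its factors according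
to the product equation.
-/

/-- The `k`-th conserved quantity of the discrete periodic Toda lattice:
the sum, over all cyclically sparse subsets `S ⊆ ℤ/2Nℤ` (no two elements adjacent on the
cycle, i.e. `i ∈ S → i + 1 ∉ S`) with `|S| = k`, of `∏_{i ∈ S} a i`. -/
noncomputable def hCons (N : ℕ) [NeZero (2 * N)] (a : ZMod (2 * N) → ℝ) (k : ℕ) : ℝ :=
  ∑ S ∈ Finset.univ.powerset.filter
      (fun S : Finset (ZMod (2 * N)) => S.card = k ∧ ∀ i ∈ S, i + 1 ∉ S),
    ∏ i ∈ S, a i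

open Finset Matrix Polynomial

lemma List.prod_range_two_mul {M : Type*} [Monoid M] (f : ℕ → M) (n : ℕ) :
    ((List.range (2 * n)).map f).prod =
      ((List.range n).map fun j => f (2 * j) * f (2 * j + 1)).prod := by
  induction n with
  | zero => simp
  | succ n ih =>
    rw [Nat.mul_succ, List.prod_range_succ, List.prod_range_succ, List.prod_range_succ, ih,
      mul_assoc]

lemma List.prod_range_mul_eq_mul_prod_range {M : Type*} [Monoid M] {L L' G : ℕ → M}
    (h : ∀ j, L j * G (j + 1) = G j * L' j) (n : ℕ) :
    ((List.range n).map L).prod * G n = G 0 * ((List.range n).map L').prod := by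
  induction n with
  | zero => simp
  | succ n ih =>
    rw [List.prod_range_succ, List.prod_range_succ, mul_assoc, h, ← mul_assoc, ih, mul_assoc]

lemma Matrix.trace_eq_of_mul_eq_mul {ι R : Type*} [Fintype ι] [DecidableEq ι] [CommSemiring R]
    {A B G : Matrix ι ι R} (hG : IsUnit G) (h : A * G = G * B) : trace A = trace B := by
  obtain ⟨u, rfl⟩ := hG
  calc trace A = trace (A * ↑u * ↑u⁻¹) := by rw [mul_assoc, Units.mul_inv, mul_one]
    _ = trace (↑u⁻¹ * (A * ↑u)) := trace_mul_comm _ _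
    _ = trace B := by rw [h, ← mul_assoc, Units.inv_mul, one_mul]

lemma Finset.prod_range_two_mul {M : Type*} [CommMonoid M] (f : ℕ → M) (n : ℕ) :
    ∏ i ∈ range (2 * n), f i = ∏ j ∈ range n, f (2 * j) * f (2 * j + 1) := by
  induction n with
  | zero => simp
  | succ n ih => rw [Nat.mul_succ, prod_range_succ, prod_range_succ, prod_range_succ, ih, mul_assoc]

lemma ZMod.prod_range_natCast {M : Type*} [CommMonoid M] {n : ℕ} [NeZero n] (f : ZMod n → M) :
    ∏ i ∈ range n, f i = ∏ z, f z :=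
  prod_nbij' (↑) ZMod.val (by simp) (by simp [ZMod.val_lt])
    (fun i hi => ZMod.val_cast_of_lt (mem_range.1 hi)) (fun z _ => ZMod.natCast_zmod_val z)
    (fun _ _ => rfl)

namespace Toda

section Transfer

variable {R : Type*} [CommSemiring R]

def transfer (c : R) : Matrix (Fin 2) (Fin 2) R := !![1, c; 1, 0]

def transferProd (w : ℕ → R) (m : ℕ) : Matrix (Fin 2) (Fin 2) R :=
  ((List.range m).map fun i => transfer (w i)).prod

lemma transferProd_succ (w : ℕ → R) (m : ℕ) :
    transferProd w (m + 1) = transferProd w m * transfer (w m) :=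
  List.prod_range_succ _ m

/-- `r` and `c` are the states of the two-state chain before and after the path; the state after
step `i` is `1` exactly when `i ∈ S`. -/
def pathSum (w : ℕ → R) (m : ℕ) (r c : Fin 2) : R :=
  ∑ S ∈ (range m).powerset with
    (∀ i ∈ S, i + 1 ∉ S) ∧ (r = 1 → 0 ∉ S) ∧ (m - 1 ∈ S ↔ c = 1), ∏ i ∈ S, w i

lemma pathSum_one (w : ℕ → R) (r c : Fin 2) : pathSum w 1 r c = transfer (w 0) r c := by
  rw [pathSum, sum_filter, show range 1 = insert 0 ∅ from rfl,
    sum_powerset_insert (notMem_empty 0)]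
  fin_cases r <;> fin_cases c <;> simp [transfer]

lemma pathSum_succ_zero (w : ℕ → R) (m : ℕ) (r : Fin 2) :
    pathSum w (m + 1) r 0 = pathSum w m r 0 + pathSum w m r 1 := by
  simp only [pathSum, sum_filter, range_add_one, sum_powerset_insert notMem_range_self,
    ← sum_add_distrib]
  refine sum_congr rfl fun t ht => ?_
  have hmt : m ∉ t := fun h => by simpa using mem_powerset.1 ht h
  by_cases h : m - 1 ∈ t <;> simp [hmt, h]

lemma pathSum_succ_one (w : ℕ → R) {m : ℕ} (hm : 1 ≤ m) (r : Fin 2) :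
    pathSum w (m + 1) r 1 = pathSum w m r 0 * w m := by
  simp only [pathSum, sum_filter, range_add_one, sum_powerset_insert notMem_range_self,
    sum_mul, ← sum_add_distrib]
  refine sum_congr rfl fun t ht => ?_
  have ht' : ∀ i ∈ t, i < m := fun i hi => mem_range.1 (mem_powerset.1 ht hi)
  have hmt : m ∉ t := fun h => (ht' m h).false
  simp only [Nat.add_sub_cancel, hmt, iff_true, and_false, if_false, zero_add, prod_insert hmt,
    mul_comm (w m), ite_mul, zero_mul]
  refine if_congr ?_ rfl rfl
  have h01 : ((0 : Fin 2) = 1) ↔ False := by decide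
  simp only [h01, iff_false, mem_insert_self, and_true, mem_insert, forall_eq_or_imp, not_or]
  grind

lemma transferProd_apply (w : ℕ → R) {m : ℕ} (hm : 1 ≤ m) (r c : Fin 2) :
    transferProd w m r c = pathSum w m r c := by
  induction m, hm using Nat.le_induction generalizing r c with
  | base => simp [transferProd, pathSum_one]
  | succ m hm ih =>
    rw [transferProd_succ]
    fin_cases c <;>
      simp [transfer, mul_apply, Fin.sum_univ_two, ih, pathSum_succ_zero, pathSum_succ_one w hm]

lemma forall_add_one_mod_notMem_iff {m : ℕ} {S : Finset ℕ} (hS : S ⊆ range m) :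
    (∀ i ∈ S, (i + 1) % m ∉ S) ↔ (∀ i ∈ S, i + 1 ∉ S) ∧ ¬(m - 1 ∈ S ∧ 0 ∈ S) := by
  have hlt : ∀ i ∈ S, i < m := fun i hi => mem_range.1 (hS hi)
  constructor
  · refine fun h => ⟨fun i hi hi1 => h i hi ?_, ?_⟩
    · rwa [Nat.mod_eq_of_lt (hlt _ hi1)]
    · rintro ⟨h1, h0⟩
      have := hlt _ h1
      exact h _ h1 (by rwa [Nat.sub_add_cancel (show 1 ≤ m by omega), Nat.mod_self])
  · rintro ⟨h, h'⟩ i hi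
    by_cases hi1 : i + 1 < m
    · rw [Nat.mod_eq_of_lt hi1]
      exact h i hi
    · have := hlt i hi
      rw [show i + 1 = m by omega, Nat.mod_self]
      exact fun h0 => h' ⟨show m - 1 = i by omega ▸ hi, h0⟩

lemma trace_transferProd (w : ℕ → R) {m : ℕ} (hm : 0 < m) :
    trace (transferProd w m) =
      ∑ S ∈ (range m).powerset with ∀ i ∈ S, (i + 1) % m ∉ S, ∏ i ∈ S, w i := by
  rw [trace_fin_two, transferProd_apply w hm, transferProd_apply w hm, pathSum, pathSum,
    sum_filter, sum_filter, sum_filter, ← sum_add_distrib]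
  refine sum_congr rfl fun S hS => ?_
  simp only [forall_add_one_mod_notMem_iff (mem_powerset.1 hS)]
  by_cases h0 : 0 ∈ S <;> by_cases h1 : m - 1 ∈ S <;> simp [h0, h1]

end Transfer

section Cyclic

variable {R : Type*} [CommSemiring R] {n : ℕ}

lemma image_val_image_natCast {T : Finset ℕ} (hT : T ⊆ range n) :
    (T.image ((↑) : ℕ → ZMod n)).image ZMod.val = T := by
  rw [image_image]
  exact (image_congr fun i hi => ZMod.val_cast_of_lt (mem_range.1 (hT hi))).trans image_id

variable [NeZero n]

def cyclicSparseSum (w : ZMod n → R) : R :=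
  ∑ S ∈ (univ : Finset (ZMod n)).powerset with ∀ i ∈ S, i + 1 ∉ S, ∏ i ∈ S, w i

lemma cyclicSparseSum_comp_add (w : ZMod n → R) (k : ZMod n) :
    cyclicSparseSum (fun i => w (i + k)) = cyclicSparseSum w := by
  refine sum_equiv (Equiv.addRight k).finsetCongr (fun S => ?_) (fun S _ => ?_)
  · simp only [Equiv.finsetCongr_apply, mem_filter, mem_powerset, subset_univ, true_and,
      mem_map_equiv, Equiv.coe_addRight, Equiv.addRight_symm]
    exact ⟨fun h i hi => by simpa [add_right_comm] using h _ hi,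
      fun h i hi => by simpa [add_right_comm] using h (i + k) (by simpa using hi)⟩
  · simp [prod_map]

lemma forall_add_one_notMem_iff_image_val (S : Finset (ZMod n)) :
    (∀ i ∈ S, i + 1 ∉ S) ↔ ∀ i ∈ S.image ZMod.val, (i + 1) % n ∉ S.image ZMod.val := by
  have hval : ∀ z : ZMod n, (z.val + 1) % n = (z + 1).val := fun z => by
    rw [ZMod.val_add, ZMod.val_one_eq_one_mod, Nat.add_mod_mod]
  simp only [forall_mem_image, hval, (ZMod.val_injective n).mem_finset_image]

lemma cyclicSparseSum_eq_trace (w : ZMod n → R) :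
    cyclicSparseSum w = trace (transferProd (fun i => w i) n) := by
  rw [cyclicSparseSum, trace_transferProd _ (NeZero.pos n)]
  refine sum_nbij' (fun S => S.image ZMod.val) (fun T => T.image (↑)) ?_ ?_ ?_ ?_ ?_
  · intro S hS
    simp only [mem_filter, mem_powerset] at hS ⊢
    exact ⟨image_subset_iff.2 fun z _ => mem_range.2 (ZMod.val_lt z),
      (forall_add_one_notMem_iff_image_val S).1 hS.2⟩
  · intro T hT
    simp only [mem_filter, mem_powerset] at hT ⊢
    refine ⟨subset_univ _, ?_⟩
    rw [forall_add_one_notMem_iff_image_val, image_val_image_natCast hT.1]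
    exact hT.2
  · intro S _
    simp [image_image, Function.comp_def]
  · intro T hT
    exact image_val_image_natCast (mem_powerset.1 (mem_filter.1 hT).1)
  · intro S _
    rw [prod_image (ZMod.val_injective n).injOn]
    simp

end Cyclic

section Lax

variable {R : Type*} [CommRing R]

def gauge (d : R) : Matrix (Fin 2) (Fin 2) R := !![1, 0; 1 - d, d]

lemma transfer_mul_transfer_mul_gauge {x b₁ b₂ a₂ a₃ d₀ d₁ : R} (hd₀ : d₀ * a₂ = b₁)
    (hd₁ : b₂ * d₁ = a₃) (hs : b₁ + b₂ = a₂ + a₃) :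
    transfer (b₁ * x) * transfer (b₂ * x) * gauge d₁ =
      gauge d₀ * (transfer (a₂ * x) * transfer (a₃ * x)) := by
  ext i j
  fin_cases i <;> fin_cases j <;> simp [transfer, gauge, mul_apply, Fin.sum_univ_two]
  · linear_combination x * hs - x * hd₁
  · linear_combination x * hd₁
  · linear_combination x * hs - x * hd₁ + x * hd₀
  · linear_combination x * hd₁

lemma isUnit_gauge {d : R} (hd : IsUnit d) : IsUnit (gauge d) := by
  rw [isUnit_iff_isUnit_det, gauge, det_fin_two_of]
  simpa using hd

theorem trace_transferProd_eq_of_dToda {K : Type*} [Field K] {N : ℕ} {α β : ℤ → K}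
    (hα : ∀ n, α n ≠ 0) (hβ : ∀ n, β n ≠ 0)
    (hαN : Function.Periodic α (2 * N)) (hβN : Function.Periodic β (2 * N))
    (hsum : ∀ n : ℤ, β (2 * n - 1) + β (2 * n) = α (2 * n) + α (2 * n + 1))
    (hprod : ∀ n : ℤ, β (2 * n) * β (2 * n + 1) = α (2 * n + 1) * α (2 * n + 2)) :
    trace (transferProd (fun i => C (β (i - 1)) * X) (2 * N)) =
      trace (transferProd (fun i => C (α i) * X) (2 * N)) := by
  set G : ℤ → Matrix (Fin 2) (Fin 2) K[X] := fun n => gauge (C (β (2 * n - 1) / α (2 * n)))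
  have step (n : ℤ) :
      transfer (C (β (2 * n - 1)) * X) * transfer (C (β (2 * n)) * X) * G (n + 1) =
        G n * (transfer (C (α (2 * n)) * X) * transfer (C (α (2 * n + 1)) * X)) := by
    refine transfer_mul_transfer_mul_gauge ?_ ?_ ?_ <;> simp only [← C_mul, ← C_add]
    · rw [div_mul_cancel₀ _ (hα _)]
    · rw [show 2 * (n + 1) - 1 = 2 * n + 1 by ring, show 2 * (n + 1) = 2 * n + 2 by ring,
        mul_div_assoc', hprod, mul_div_cancel_right₀ _ (hα _)]
    · rw [hsum]
  have htele := List.prod_range_mul_eq_mul_prod_range (G := fun j : ℕ => G j)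
    (fun j => by push_cast; exact step j) N
  have hG : G N = G 0 := by
    simp only [G, mul_zero, zero_sub]
    rw [← hαN 0, ← hβN (-1)]
    ring_nf
  have hunit : IsUnit (G 0) :=
    isUnit_gauge (isUnit_C.2 (div_ne_zero (hβ _) (hα _)).isUnit)
  rw [hG, Nat.cast_zero] at htele
  rw [transferProd, transferProd, List.prod_range_two_mul, List.prod_range_two_mul]
  push_cast
  simp only [add_sub_cancel_right]
  exact trace_eq_of_mul_eq_mul hunit htele

end Lax

theorem prod_eq_prod_of_dToda {M : Type*} [CommMonoid M] {N : ℕ} [NeZero (2 * N)]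
    {a abar : ZMod (2 * N) → M}
    (hprod : ∀ n : ℤ, abar ((2 * n : ℤ) : ZMod (2 * N)) * abar ((2 * n + 1 : ℤ) : ZMod (2 * N))
      = a ((2 * n + 1 : ℤ) : ZMod (2 * N)) * a ((2 * n + 2 : ℤ) : ZMod (2 * N))) :
    ∏ i, abar i = ∏ i, a i :=
  calc ∏ i, abar i = ∏ j ∈ range N, abar (2 * j) * abar (2 * j + 1) := by
        rw [← ZMod.prod_range_natCast, prod_range_two_mul]
        push_cast
        rfl
    _ = ∏ j ∈ range N, a (2 * j + 1) * a (2 * j + 2) :=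
        prod_congr rfl fun j _ => by simpa using hprod j
    _ = ∏ z, a (z + 1) := by
        rw [← ZMod.prod_range_natCast, prod_range_two_mul]
        push_cast
        ring_nf
    _ = ∏ i, a i := Equiv.prod_comp (Equiv.addRight 1) a

lemma hCons_eq_coeff (N : ℕ) [NeZero (2 * N)] (a : ZMod (2 * N) → ℝ) (k : ℕ) :
    hCons N a k = (cyclicSparseSum fun i => C (a i) * X).coeff k := by
  simp only [hCons, cyclicSparseSum, finsetSum_coeff, prod_mul_distrib, prod_const, ← map_prod,
    coeff_C_mul_X_pow, ← sum_filter, filter_filter, eq_comm (a := k), and_comm]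

end Toda

theorem toda_conserved_general (N : ℕ) [NeZero (2 * N)] (a abar : ZMod (2 * N) → ℝ)
    (ha : ∀ n, 0 < a n) (habar : ∀ n, 0 < abar n)
    (hsum : ∀ n : ℤ, abar ((2 * n - 1 : ℤ) : ZMod (2 * N)) + abar ((2 * n : ℤ) : ZMod (2 * N))
      = a ((2 * n : ℤ) : ZMod (2 * N)) + a ((2 * n + 1 : ℤ) : ZMod (2 * N)))
    (hprod : ∀ n : ℤ, abar ((2 * n : ℤ) : ZMod (2 * N)) * abar ((2 * n + 1 : ℤ) : ZMod (2 * N))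
      = a ((2 * n + 1 : ℤ) : ZMod (2 * N)) * a ((2 * n + 2 : ℤ) : ZMod (2 * N))) :
    (∀ k, 1 ≤ k → k ≤ N → hCons N abar k = hCons N a k) ∧
      (∏ i : ZMod (2 * N), abar i = ∏ i : ZMod (2 * N), a i) := by
  have periodic (f : ZMod (2 * N) → ℝ) : Function.Periodic (fun n : ℤ => f n) (2 * N) := by
    have h2N : (2 * N : ZMod (2 * N)) = 0 := by exact_mod_cast ZMod.natCast_self (2 * N)
    intro n
    simp [h2N]
  have htrace := Toda.trace_transferProd_eq_of_dToda (fun n => (ha n).ne') (fun n => (habar n).ne')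
    (periodic a) (periodic abar) hsum hprod
  refine ⟨fun k _ _ => ?_, Toda.prod_eq_prod_of_dToda hprod⟩
  rw [Toda.hCons_eq_coeff, Toda.hCons_eq_coeff, ← Toda.cyclicSparseSum_comp_add _ (-1),
    Toda.cyclicSparseSum_eq_trace, Toda.cyclicSparseSum_eq_trace]
  simpa [sub_eq_add_neg] using congrArg (coeff · k) htrace

/-- For positive states related by the discrete periodic Toda lattice equations, every
`h_k` (`1 ≤ k ≤ N`) is conserved, and so is `h_{N+1} = ∏_i a_i`. -/
theorem toda_conserved (N : ℕ) (hN : 2 ≤ N) [NeZero (2 * N)] (a abar : ZMod (2 * N) → ℝ)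
    (ha : ∀ n, 0 < a n) (habar : ∀ n, 0 < abar n)
    (hsum : ∀ n : ℤ, abar ((2 * n - 1 : ℤ) : ZMod (2 * N)) + abar ((2 * n : ℤ) : ZMod (2 * N))
      = a ((2 * n : ℤ) : ZMod (2 * N)) + a ((2 * n + 1 : ℤ) : ZMod (2 * N)))
    (hprod : ∀ n : ℤ, abar ((2 * n : ℤ) : ZMod (2 * N)) * abar ((2 * n + 1 : ℤ) : ZMod (2 * N))
      = a ((2 * n + 1 : ℤ) : ZMod (2 * N)) * a ((2 * n + 2 : ℤ) : ZMod (2 * N))) :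
    (∀ k, 1 ≤ k → k ≤ N → hCons N abar k = hCons N a k) ∧
      (∏ i : ZMod (2 * N), abar i = ∏ i : ZMod (2 * N), a i) :=
  toda_conserved_general N a abar ha habar hsum hprod
end

section
/- Let N ≥ 2 and let A = (A_n)_{n∈ℤ/2Nℤ} be reals with Σ_{l=1}^{N} A_{2l} < Σ_{l=1}^{N} A_{2l−1}, and let Ā be the image of A under the tropical periodic Toda lattice evolution. Then for every 1 ≤ k ≤ N, the quantity H_k := min over all cyclically sparse subsets S of ℤ/2Nℤ with |S| = k of Σ_{i∈S} A_i is conserved, i.e. min_S Σ_{i∈S} Ā_i = min_S Σ_{i∈S} A_i; moreover Σ_{i∈ℤ/2Nℤ} Ā_i = Σ_{i∈ℤ/2Nℤ} A_i. -/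
/-!
Write `y i` for the load with which a carrier reaches the even site `i`. One step of the
evolution is `Ā i = min (A (i + 1)) (A i + y i)`, `y (i + 2) = A i + y i - Ā i` and
`Ā (i + 1) = A (i + 1) + A (i + 2) - Ā i` for even `i`; the hypothesis on the two sublattice
sums is exactly what makes the inner minimum of the evolution rule (with its sign reversed) a
solution of the carrier equation.

Given a sparse set `S`, move every odd site of `S` and every even site at which the carrier is
not emptied one step to the right, and keep the even sites whose run of even sites in `S` ends
where the carrier is emptied. The result is sparse and of the same size, and its `A`-sum is at
most the `Ā`-sum of `S`: on moved sites this holds termwise, on kept sites `Ā - A` telescopes to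
a nonnegative sum of carrier loads. Reversed in time and reflected in space the evolution is
again of the same form, which gives the opposite inequality. The total sum is conserved since
`Ā i + Ā (i + 1) = A (i + 1) + A (i + 2)` for even `i`.
-/

/-- The `k`-th tropical conserved quantity: the minimum, over all cyclically sparse
subsets `S ⊆ ℤ/2Nℤ` (no two elements adjacent on the cycle) with `|S| = k`, of
`∑_{i ∈ S} A i`. -/
noncomputable def Htrop (N : ℕ) (A : ZMod (2 * N) → ℝ) (k : ℕ) : ℝ :=
  sInf {s : ℝ | ∃ S : Finset (ZMod (2 * N)),
    S.card = k ∧ (∀ i ∈ S, i + 1 ∉ S) ∧ s = ∑ i ∈ S, A i}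

open Finset

namespace Finset

variable {G : Type*} [AddCommGroup G] {S : Finset G} {g : G}

theorem injOn_stay_or_step (P : G → Prop) [DecidablePred P] (hS : ∀ i ∈ S, i + g ∉ S) :
    Set.InjOn (fun i => if P i then i else i + g) S := by
  intro i hi j hj hij
  dsimp only at hij
  split_ifs at hij
  · exact hij
  · exact absurd (hij ▸ hi) (hS j hj)
  · exact absurd (hij ▸ hj) (hS i hi)
  · exact add_right_cancel hij

theorem add_notMem_image_stay_or_step [DecidableEq G] (P : G → Prop) [DecidablePred P]
    (hS : ∀ i ∈ S, i + g ∉ S)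
    (hclosed : ∀ i ∈ S, i + g + g ∈ S → P (i + g + g) → P i) :
    ∀ x ∈ S.image (fun i => if P i then i else i + g),
      x + g ∉ S.image (fun i => if P i then i else i + g) := by
  simp only [mem_image]
  rintro _ ⟨i, hi, rfl⟩ ⟨j, hj, hij⟩
  split_ifs at hij with hPj hPi hPi
  · exact hS i hi (hij ▸ hj)
  · exact hPi (hclosed i hi (hij ▸ hj) (hij ▸ hPj))
  · exact hPj (add_right_cancel hij ▸ hPi)
  · exact hS i hi (add_right_cancel hij ▸ hj)

theorem sum_sub_add_nonneg [DecidableEq G] {M : Type*} [AddCommGroup M] [PartialOrder M]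
    [IsOrderedAddMonoid M] (y : G → M) (hy : ∀ i ∈ S, 0 ≤ y i)
    (hexit : ∀ i ∈ S, i + g ∉ S → y (i + g) = 0) :
    0 ≤ ∑ i ∈ S, (y i - y (i + g)) := by
  have hshift : ∑ i ∈ S, y (i + g) = ∑ j ∈ S.map (addRightEmbedding g), y j := by
    rw [sum_map]; rfl
  have hentry : ∑ j ∈ S.map (addRightEmbedding g) \ S, y j = 0 := by
    refine sum_eq_zero fun j hj => ?_
    obtain ⟨hj, hjS⟩ := mem_sdiff.mp hj
    obtain ⟨i, hi, rfl⟩ := mem_map.mp hj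
    exact hexit i hi hjS
  rw [sum_sub_distrib, hshift, ← sum_sdiff_sub_sum_sdiff, hentry, sub_zero]
  exact sum_nonneg fun i hi => hy i (mem_sdiff.mp hi).1

theorem add_notMem_map_neg [DecidableEq G] (hS : ∀ i ∈ S, i + g ∉ S) :
    ∀ i ∈ S.map (Equiv.neg G).toEmbedding, i + g ∉ S.map (Equiv.neg G).toEmbedding := by
  simp only [mem_map_equiv, Equiv.neg_symm, Equiv.neg_apply, neg_add]
  intro i hi hi'
  exact hS _ hi' (by simpa using hi)

end Finset

namespace ZMod

theorem even_or_even_sub_one {n : ℕ} (i : ZMod n) : Even i ∨ Even (i - 1) := by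
  obtain ⟨m, rfl⟩ := intCast_surjective i
  rcases Int.even_or_odd m with h | ⟨k, rfl⟩
  · exact Or.inl (h.map (Int.castRingHom _))
  · exact Or.inr ⟨k, by push_cast; ring⟩

theorem not_even_add_one {N : ℕ} {i : ZMod (2 * N)} (hi : Even i) : ¬Even (i + 1) := by
  let φ := castHom (dvd_mul_right 2 N) (ZMod 2)
  have hφ : ∀ x : ZMod (2 * N), Even x → φ x = 0 := by
    rintro x ⟨r, rfl⟩
    rw [map_add]
    exact CharTwo.add_self_eq_zero _
  intro h
  have h1 := hφ _ h
  rw [map_add, hφ i hi, map_one, zero_add] at h1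
  exact one_ne_zero h1

theorem exists_eq_intCast_two_mul {n : ℕ} {i : ZMod n} (hi : Even i) :
    ∃ m : ℤ, i = ((2 * m : ℤ) : ZMod n) := by
  obtain ⟨r, rfl⟩ := hi
  obtain ⟨m, rfl⟩ := intCast_surjective r
  exact ⟨m, by push_cast; ring⟩

theorem sum_eq_sum_filter_even_add_succ {N : ℕ} [NeZero (2 * N)]
    [DecidablePred (Even : ZMod (2 * N) → Prop)] {M : Type*} [AddCommMonoid M]
    (f : ZMod (2 * N) → M) : ∑ i, f i = ∑ i ∈ univ.filter Even, (f i + f (i + 1)) := by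
  rw [← sum_filter_add_sum_filter_not univ Even, sum_add_distrib]
  congr 1
  refine sum_nbij' (· - 1) (· + 1) (fun i hi => ?_) (fun i hi => ?_)
    (fun i _ => sub_add_cancel i 1) (fun i _ => add_sub_cancel_right i 1)
    (fun i _ => by rw [sub_add_cancel])
  · simp only [mem_filter, mem_univ, true_and] at hi ⊢
    exact (even_or_even_sub_one i).resolve_left hi
  · simp only [mem_filter, mem_univ, true_and] at hi ⊢
    exact not_even_add_one hi

variable {N : ℕ} {M : Type*} [AddCommGroup M]

theorem two_mul_natCast_self : (2 * N : ZMod (2 * N)) = 0 := by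
  exact_mod_cast natCast_self (2 * N)

theorem periodic_sum_range_add_two_mul (f : ZMod (2 * N) → M) :
    Function.Periodic (fun j => ∑ l ∈ range N, f (j + 2 * l)) 2 := by
  intro j
  have h := sum_range_succ' (fun l => f (j + 2 * l)) N
  rw [sum_range_succ, two_mul_natCast_self] at h
  simp only [Nat.cast_zero, mul_zero, add_zero, add_left_inj] at h
  dsimp only
  rw [h]
  refine sum_congr rfl fun l _ => ?_
  push_cast
  ring_nf

theorem sum_range_add_two_mul_of_even (f : ZMod (2 * N) → M) {i : ZMod (2 * N)} (hi : Even i) :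
    ∑ l ∈ range N, f (i + 2 * l) = ∑ l ∈ range N, f (2 * l) := by
  obtain ⟨m, rfl⟩ := exists_eq_intCast_two_mul hi
  simpa [mul_comm] using (periodic_sum_range_add_two_mul f).int_mul m 0

theorem sum_Icc_sub_two_mul (f : ZMod (2 * N) → M) (i : ZMod (2 * N)) :
    ∑ l ∈ Icc 1 N, f (i - 2 * l) = ∑ l ∈ range N, f (i + 2 * l) := by
  rw [← Ico_add_one_right_eq_Icc, sum_Ico_eq_sum_range, Nat.add_sub_cancel, ← sum_range_reflect]
  refine sum_congr rfl fun l hl => congrArg f ?_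
  have hl : l < N := mem_range.mp hl
  rw [show 1 + (N - 1 - l) = N - l by omega, Nat.cast_sub hl.le]
  linear_combination (-1 : ZMod (2 * N)) * two_mul_natCast_self (N := N)

end ZMod

namespace TropicalToda

variable {N : ℕ}

structure IsTodaStep (A Abar y : ZMod (2 * N) → ℝ) : Prop where
  even_eq : ∀ i, Even i → Abar i = min (A (i + 1)) (A i + y i)
  carrier_add_two : ∀ i, Even i → y (i + 2) = A i + y i - Abar i
  odd_eq : ∀ i, Even i → Abar (i + 1) = A (i + 1) + A (i + 2) - Abar i

/-- An even site of `S` is kept in place when the run of even sites of `S` starting there reaches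
a site where the carrier is emptied; every other site of `S` moves one step to the right. -/
def Stays (A Abar : ZMod (2 * N) → ℝ) (S : Finset (ZMod (2 * N))) (i : ZMod (2 * N)) : Prop :=
  Even i ∧ ∃ l : ℕ, Abar (i + 2 * l) ≠ A (i + 2 * l + 1) ∧ ∀ t ≤ l, i + 2 * t ∈ S

theorem stays_of_stays_add_two {A Abar : ZMod (2 * N) → ℝ} {S : Finset (ZMod (2 * N))}
    {i : ZMod (2 * N)} (hi : i ∈ S) (h2 : Stays A Abar S (i + 2)) : Stays A Abar S i := by
  obtain ⟨he, l, hdrop, hrun⟩ := h2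
  have hl : i + 2 * ((l + 1 : ℕ) : ZMod (2 * N)) = i + 2 + 2 * l := by push_cast; ring
  refine ⟨by simpa using he.sub even_two, l + 1, by rwa [hl], fun t ht => ?_⟩
  rcases t with _ | t
  · simpa using hi
  · convert hrun t (by omega) using 1
    push_cast
    ring

namespace IsTodaStep

variable {A Abar y : ZMod (2 * N) → ℝ} (h : IsTodaStep A Abar y) {i : ZMod (2 * N)}
include h

theorem le_succ (hi : Even i) : Abar i ≤ A (i + 1) := by
  rw [h.even_eq i hi]
  exact min_le_left _ _

theorem carrier_add_two_nonneg (hi : Even i) : 0 ≤ y (i + 2) := by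
  rw [h.carrier_add_two i hi, h.even_eq i hi, sub_nonneg]
  exact min_le_right _ _

theorem carrier_nonneg (hi : Even i) : 0 ≤ y i := by
  simpa using h.carrier_add_two_nonneg (hi.sub even_two)

theorem carrier_add_two_eq_zero (hi : Even i) (hne : Abar i ≠ A (i + 1)) : y (i + 2) = 0 := by
  have hmin : min (A (i + 1)) (A i + y i) = A i + y i :=
    (min_choice _ _).resolve_left (h.even_eq i hi ▸ hne)
  rw [h.carrier_add_two i hi, h.even_eq i hi, hmin, sub_self]

theorem even_eq_add_sub (hi : Even i) : Abar i = A i + y i - y (i + 2) := by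
  rw [h.carrier_add_two i hi]
  ring

theorem le_odd (hi : Even i) : A (i + 2) ≤ Abar (i + 1) := by
  rw [h.odd_eq i hi]
  linarith [h.le_succ hi]

theorem reverse : IsTodaStep (fun i => Abar (-i)) (fun i => A (-i)) (fun i => y (2 - i)) := by
  have key : ∀ j : ZMod (2 * N), Even j → ∃ i, Even i ∧ Even (i - 2) ∧ j = -i :=
    fun j hj => ⟨-j, hj.neg, hj.neg.sub even_two, (neg_neg j).symm⟩
  have hodd : ∀ i : ZMod (2 * N), Even (i - 2) →
      Abar (i - 1) = A (i - 1) + A i - Abar (i - 2) := by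
    intro i hi
    simpa [show i - 2 + 1 = i - 1 by ring] using h.odd_eq _ hi
  constructor
  · intro j hj
    obtain ⟨i, hi, hi2, rfl⟩ := key j hj
    rw [neg_neg, show -(-i + 1) = i - 1 by ring, show (2 : ZMod (2 * N)) - -i = i + 2 by ring]
    have hAi : A i = Abar i + y (i + 2) - y i := by rw [h.even_eq_add_sub hi]; ring
    have e : i - 2 + 1 = i - 1 := by ring
    have hle := h.le_succ hi2
    rw [e] at hle
    by_cases hdrop : Abar (i - 2) = A (i - 1)
    · have hy := h.carrier_nonneg hi
      rw [min_eq_left (by linarith [hodd i hi2]), hodd i hi2, hdrop]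
      ring
    · have hy : y i = 0 := by simpa using h.carrier_add_two_eq_zero hi2 (e ▸ hdrop)
      rw [min_eq_right (by linarith [hodd i hi2, lt_of_le_of_ne hle hdrop]), hAi, hy, sub_zero]
  · intro j hj
    obtain ⟨i, hi, -, rfl⟩ := key j hj
    rw [neg_neg, show (2 : ZMod (2 * N)) - (-i + 2) = i by ring,
      show (2 : ZMod (2 * N)) - -i = i + 2 by ring, h.even_eq_add_sub hi]
    ring
  · intro j hj
    obtain ⟨i, -, hi2, rfl⟩ := key j hj
    rw [neg_neg, show -(-i + 1) = i - 1 by ring, show -(-i + 2) = i - 2 by ring, hodd i hi2]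
    ring

theorem carrier_add_two_eq_zero_of_stays {S : Finset (ZMod (2 * N))} (hi : Stays A Abar S i)
    (hnext : ¬(i + 2 ∈ S ∧ Stays A Abar S (i + 2))) : y (i + 2) = 0 := by
  obtain ⟨he, l, hdrop, hrun⟩ := hi
  rcases l with _ | l
  · exact h.carrier_add_two_eq_zero he (by simpa using hdrop)
  · have hl : i + 2 * ((l + 1 : ℕ) : ZMod (2 * N)) = i + 2 + 2 * l := by push_cast; ring
    refine absurd ⟨by simpa using hrun 1 (by omega), he.add even_two, l, by rwa [← hl],
      fun t ht => ?_⟩ hnext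
    convert hrun (t + 1) (by omega) using 1
    push_cast
    ring

theorem le_of_not_stays {S : Finset (ZMod (2 * N))} (hiS : i ∈ S) (hi : ¬Stays A Abar S i) :
    A (i + 1) ≤ Abar i := by
  rcases ZMod.even_or_even_sub_one i with he | ho
  · refine le_of_eq (by_contra fun hne => hi ⟨he, 0, by simpa [eq_comm] using hne, ?_⟩)
    intro t ht
    simpa [Nat.le_zero.mp ht] using hiS
  · simpa [show i - 1 + 2 = i + 1 by ring] using h.le_odd ho

theorem exists_sum_le_sum_evolved {S : Finset (ZMod (2 * N))} (hS : ∀ i ∈ S, i + 1 ∉ S) :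
    ∃ T : Finset (ZMod (2 * N)), T.card = S.card ∧ (∀ i ∈ T, i + 1 ∉ T) ∧
      ∑ i ∈ T, A i ≤ ∑ i ∈ S, Abar i := by
  classical
  set P := Stays A Abar S
  have hinj := injOn_stay_or_step P hS
  have hclosed : ∀ i ∈ S, i + 1 + 1 ∈ S → P (i + 1 + 1) → P i := fun i hi _ h2 =>
    stays_of_stays_add_two hi (by rwa [add_assoc, one_add_one_eq_two] at h2)
  refine ⟨S.image fun i => if P i then i else i + 1, card_image_of_injOn hinj,
    add_notMem_image_stay_or_step P hS hclosed, ?_⟩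
  rw [sum_image hinj, ← sum_filter_add_sum_filter_not S P,
    ← sum_filter_add_sum_filter_not S P Abar]
  gcongr ?_ + ?_
  · have hexit : ∀ i ∈ S.filter P, i + 2 ∉ S.filter P → y (i + 2) = 0 := fun i hi hnext =>
      h.carrier_add_two_eq_zero_of_stays (mem_filter.mp hi).2 fun h2 => hnext (mem_filter.mpr h2)
    have htele := sum_sub_add_nonneg y (fun i hi => h.carrier_nonneg (mem_filter.mp hi).2.1) hexit
    rw [← sub_nonneg, ← sum_sub_distrib]
    refine htele.trans_eq (sum_congr rfl fun i hi => ?_)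
    rw [if_pos (mem_filter.mp hi).2, h.even_eq_add_sub (mem_filter.mp hi).2.1]
    ring
  · refine sum_le_sum fun i hi => ?_
    obtain ⟨hiS, hPi⟩ := mem_filter.mp hi
    rw [if_neg hPi]
    exact h.le_of_not_stays hiS hPi

theorem sum_eq [NeZero (2 * N)] : ∑ i, Abar i = ∑ i, A i := by
  classical
  calc ∑ i, Abar i = ∑ i ∈ univ.filter Even, (Abar i + Abar (i + 1)) :=
        ZMod.sum_eq_sum_filter_even_add_succ Abar
    _ = ∑ i ∈ univ.filter Even, (A (i + 1) + A (i + 1 + 1)) := sum_congr rfl fun i hi => by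
        rw [h.odd_eq i (mem_filter.mp hi).2, add_assoc i 1 1, one_add_one_eq_two]
        ring
    _ = ∑ i, A (i + 1) := (ZMod.sum_eq_sum_filter_even_add_succ fun i => A (i + 1)).symm
    _ = ∑ i, A i := Equiv.sum_comp (Equiv.addRight 1) A

theorem exists_sum_evolved_le_sum {S : Finset (ZMod (2 * N))} (hS : ∀ i ∈ S, i + 1 ∉ S) :
    ∃ T : Finset (ZMod (2 * N)), T.card = S.card ∧ (∀ i ∈ T, i + 1 ∉ T) ∧
      ∑ i ∈ T, Abar i ≤ ∑ i ∈ S, A i := by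
  obtain ⟨T, hcard, hT, hsum⟩ := h.reverse.exists_sum_le_sum_evolved (add_notMem_map_neg hS)
  refine ⟨T.map (Equiv.neg _).toEmbedding, by rw [card_map, hcard, card_map],
    add_notMem_map_neg hT, ?_⟩
  simpa [sum_map] using hsum

end IsTodaStep

theorem Htrop_le_of_exists [NeZero (2 * N)] {u v : ZMod (2 * N) → ℝ} (k : ℕ)
    (huv : ∀ S : Finset (ZMod (2 * N)), (∀ i ∈ S, i + 1 ∉ S) →
      ∃ T : Finset (ZMod (2 * N)), T.card = S.card ∧ (∀ i ∈ T, i + 1 ∉ T) ∧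
        ∑ i ∈ T, v i ≤ ∑ i ∈ S, u i)
    (hvu : ∀ S : Finset (ZMod (2 * N)), (∀ i ∈ S, i + 1 ∉ S) →
      ∃ T : Finset (ZMod (2 * N)), T.card = S.card ∧ (∀ i ∈ T, i + 1 ∉ T) ∧
        ∑ i ∈ T, u i ≤ ∑ i ∈ S, v i) :
    Htrop N v k ≤ Htrop N u k := by
  unfold Htrop
  set U := {s : ℝ | ∃ S : Finset (ZMod (2 * N)),
    S.card = k ∧ (∀ i ∈ S, i + 1 ∉ S) ∧ s = ∑ i ∈ S, u i}
  set V := {s : ℝ | ∃ S : Finset (ZMod (2 * N)),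
    S.card = k ∧ (∀ i ∈ S, i + 1 ∉ S) ∧ s = ∑ i ∈ S, v i}
  have hV : BddBelow V :=
    ((Set.finite_range fun T : Finset (ZMod (2 * N)) => ∑ i ∈ T, v i).subset
      (by rintro _ ⟨T, -, -, rfl⟩; exact ⟨T, rfl⟩)).bddBelow
  rcases U.eq_empty_or_nonempty with hU | hU
  · have hV0 : V = ∅ := Set.eq_empty_of_forall_notMem fun _ ⟨S, hk, hS, _⟩ => by
      obtain ⟨T, hT, hTs, -⟩ := hvu S hS
      exact hU.subset ⟨T, hT.trans hk, hTs, rfl⟩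
    rw [hU, hV0]
  · refine le_csInf hU ?_
    rintro _ ⟨S, hk, hS, rfl⟩
    obtain ⟨T, hT, hTs, hle⟩ := huv S hS
    exact (csInf_le hV ⟨T, hT.trans hk, hTs, rfl⟩).trans hle

theorem IsTodaStep.Htrop_eq [NeZero (2 * N)] {A Abar y : ZMod (2 * N) → ℝ}
    (h : IsTodaStep A Abar y) (k : ℕ) : Htrop N Abar k = Htrop N A k :=
  le_antisymm (Htrop_le_of_exists k (fun _ hS => h.exists_sum_evolved_le_sum hS)
      fun _ hS => h.exists_sum_le_sum_evolved hS)
    (Htrop_le_of_exists k (fun _ hS => h.exists_sum_le_sum_evolved hS)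
      fun _ hS => h.exists_sum_evolved_le_sum hS)

section Carrier

variable (A : ZMod (2 * N) → ℝ)

def partialDrift (i : ZMod (2 * N)) (k : ℕ) : ℝ :=
  ∑ l ∈ Icc 1 k, (A (i - 2 * l + 1) - A (i - 2 * l))

def minDrift [NeZero N] (i : ZMod (2 * N)) : ℝ :=
  (range N).inf' (nonempty_range_iff.mpr (NeZero.ne N)) (partialDrift A i)

theorem partialDrift_zero (i : ZMod (2 * N)) : partialDrift A i 0 = 0 := by
  simp [partialDrift]

theorem partialDrift_add_two_succ (i : ZMod (2 * N)) (k : ℕ) :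
    partialDrift A (i + 2) (k + 1) = A (i + 1) - A i + partialDrift A i k := by
  induction k with
  | zero => simp [partialDrift]
  | succ k ih =>
    unfold partialDrift at ih ⊢
    rw [sum_Icc_succ_top (by omega), ih, sum_Icc_succ_top (by omega), add_assoc]
    push_cast
    ring_nf

theorem partialDrift_pos
    (hphase : ∑ l ∈ Finset.range N, A ((2 * l + 2 : ℕ) : ZMod (2 * N))
      < ∑ l ∈ Finset.range N, A ((2 * l + 1 : ℕ) : ZMod (2 * N)))
    {i : ZMod (2 * N)} (hi : Even i) : 0 < partialDrift A i N := by
  have hshift := ZMod.sum_range_add_two_mul_of_even A even_two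
  rw [partialDrift, ZMod.sum_Icc_sub_two_mul (fun j => A (j + 1) - A j),
    ZMod.sum_range_add_two_mul_of_even (fun j => A (j + 1) - A j) hi, sum_sub_distrib, ← hshift]
  push_cast at hphase
  simp only [add_comm (2 : ZMod (2 * N))] at hshift hphase ⊢
  linarith

variable {A} in
theorem minDrift_add_two [NeZero N]
    (hphase : ∑ l ∈ Finset.range N, A ((2 * l + 2 : ℕ) : ZMod (2 * N))
      < ∑ l ∈ Finset.range N, A ((2 * l + 1 : ℕ) : ZMod (2 * N)))
    {i : ZMod (2 * N)} (hi : Even i) :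
    minDrift A (i + 2) = min 0 (A (i + 1) - A i + minDrift A i) := by
  have hN : 0 < N := Nat.pos_of_ne_zero (NeZero.ne N)
  have hnonpos : minDrift A (i + 2) ≤ 0 :=
    (inf'_le _ (mem_range.mpr hN)).trans_eq (partialDrift_zero A _)
  refine le_antisymm (le_min hnonpos ?_) (le_inf' _ _ fun k hk => ?_)
  · obtain ⟨k, hk, hkeq⟩ := exists_mem_eq_inf' (nonempty_range_iff.mpr (NeZero.ne N))
      (partialDrift A i)
    rw [show minDrift A i = partialDrift A i k from hkeq, ← partialDrift_add_two_succ]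
    rcases (Nat.add_one_le_of_lt (mem_range.mp hk)).lt_or_eq with hlt | heq
    · exact inf'_le _ (mem_range.mpr hlt)
    · rw [heq]
      exact hnonpos.trans (partialDrift_pos A hphase (hi.add even_two)).le
  · rcases k with _ | k
    · rw [partialDrift_zero]
      exact min_le_left _ _
    · rw [partialDrift_add_two_succ]
      exact (min_le_right _ _).trans
        (add_le_add_right (inf'_le _ (mem_range.mpr (by simp at hk; omega))) _)

theorem isTodaStep_neg_minDrift [NeZero N] (Abar : ZMod (2 * N) → ℝ)
    (hphase : ∑ l ∈ Finset.range N, A ((2 * l + 2 : ℕ) : ZMod (2 * N))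
      < ∑ l ∈ Finset.range N, A ((2 * l + 1 : ℕ) : ZMod (2 * N)))
    (heven : ∀ i, Even i → Abar i = min (A (i + 1)) (A i - minDrift A i))
    (hodd : ∀ i, Even i → Abar (i + 1) = A (i + 1) + A (i + 2) - Abar i) :
    IsTodaStep A Abar fun i => -minDrift A i where
  even_eq i hi := by rw [heven i hi, sub_eq_add_neg]
  carrier_add_two i hi := by
    rw [minDrift_add_two hphase hi, heven i hi]
    rcases le_total (A (i + 1)) (A i - minDrift A i) with hle | hle
    · rw [min_eq_left hle, min_eq_right (by linarith)]
      ring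
    · rw [min_eq_right hle, min_eq_left (by linarith)]
      ring
  odd_eq := hodd

end Carrier

end TropicalToda

/-- The quantities `H_k` (`1 ≤ k ≤ N`) and the total sum are conserved under the
tropical periodic Toda lattice evolution. -/
theorem trop_toda_conserved (N : ℕ) (hN : 2 ≤ N) [NeZero (2 * N)]
    (A Abar : ZMod (2 * N) → ℝ)
    (hphase : ∑ l ∈ Finset.range N, A ((2 * l + 2 : ℕ) : ZMod (2 * N))
      < ∑ l ∈ Finset.range N, A ((2 * l + 1 : ℕ) : ZMod (2 * N)))
    (hev1 : ∀ n : ℤ, Abar ((2 * n : ℤ) : ZMod (2 * N))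
      = min (A ((2 * n + 1 : ℤ) : ZMod (2 * N)))
          (A ((2 * n : ℤ) : ZMod (2 * N)) -
            (Finset.range N).inf' (Finset.nonempty_range_iff.mpr (by omega))
              (fun k => ∑ l ∈ Finset.Icc 1 k,
                (A ((2 * (n - (l : ℤ)) + 1 : ℤ) : ZMod (2 * N))
                  - A ((2 * (n - (l : ℤ)) : ℤ) : ZMod (2 * N))))))
    (hev2 : ∀ n : ℤ, Abar ((2 * n + 1 : ℤ) : ZMod (2 * N))
      = A ((2 * n + 1 : ℤ) : ZMod (2 * N)) + A ((2 * n + 2 : ℤ) : ZMod (2 * N))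
        - Abar ((2 * n : ℤ) : ZMod (2 * N))) :
    (∀ k, 1 ≤ k → k ≤ N → Htrop N Abar k = Htrop N A k) ∧
      (∑ i : ZMod (2 * N), Abar i = ∑ i : ZMod (2 * N), A i) := by
  have : NeZero N := ⟨by omega⟩
  have hstep : TropicalToda.IsTodaStep A Abar fun i => -TropicalToda.minDrift A i := by
    refine TropicalToda.isTodaStep_neg_minDrift A Abar hphase (fun i hi => ?_) (fun i hi => ?_)
    · obtain ⟨n, rfl⟩ := ZMod.exists_eq_intCast_two_mul hi
      rw [hev1 n]
      push_cast [mul_sub]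
      rfl
    · obtain ⟨n, rfl⟩ := ZMod.exists_eq_intCast_two_mul hi
      exact_mod_cast hev2 n
  exact ⟨fun k _ _ => hstep.Htrop_eq k, hstep.sum_eq⟩
end

section
/- Let k ≥ 1 and let w be a list of length 2k+2 over the two symbols ∘ and •, containing exactly k symbols ∘ and exactly k+2 symbols •. Assume that w, regarded as a cyclic word, contains no three consecutive •'s; that is, no cyclic rotation of w begins with •,•,• (equivalently, there are at most two •'s between cyclically adjacent ∘'s). Then there exist a cyclic rotation w' of w and an integer n ≥ 1 such that w' begins with the pattern consisting of •,•, followed by n consecutive copies of the block ∘,•, followed by •. -/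
/-- Block: one `∘` followed by `g` bullets. -/
def Blk (g : ℕ) : List Bool := false :: List.replicate g true

lemma count_false_flatten (gs : List ℕ) :
    ((gs.map Blk).flatten).count false = gs.length := by
  induction gs with
  | nil => simp
  | cons g t ih => simp [Blk, ih, List.count_replicate]

lemma count_true_flatten (gs : List ℕ) :
    ((gs.map Blk).flatten).count true = gs.sum := by
  induction gs with
  | nil => simp
  | cons g t ih => simp [Blk, ih, List.count_replicate]

lemma split_ones (t : List ℕ) : ∃ m u, t = List.replicate m 1 ++ u ∧
    (u = [] ∨ ∃ y v, u = y :: v ∧ y ≠ 1) := by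
  induction t with
  | nil => exact ⟨0, [], by simp, Or.inl rfl⟩
  | cons x s ih =>
    by_cases hx : x = 1
    · obtain ⟨m, u, hs, hu⟩ := ih
      exact ⟨m + 1, u, by simp [hx, hs, List.replicate_succ], hu⟩
    · exact ⟨0, x :: s, by simp, Or.inr ⟨x, s, rfl, hx⟩⟩

lemma split_trues (t : List Bool) : ∃ m u, t = List.replicate m true ++ u ∧
    (u = [] ∨ ∃ s, u = false :: s) := by
  induction t with
  | nil => exact ⟨0, [], by simp, Or.inl rfl⟩
  | cons x s ih =>
    cases x with
    | false => exact ⟨0, false :: s, by simp, Or.inr ⟨s, rfl⟩⟩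
    | true =>
      obtain ⟨m, u, h1, h2⟩ := ih
      exact ⟨m + 1, u, by simp [h1, List.replicate_succ], h2⟩

/-- Key numeric lemma: a list of naturals all `≤ 2` whose sum is at least
its length plus two contains an infix `2, 1^m, 2`. -/
lemma gap_infix : ∀ N (g : List ℕ), g.length ≤ N → (∀ x ∈ g, x ≤ 2) →
    g.length + 2 ≤ g.sum →
    ∃ a m rest, g = a ++ 2 :: List.replicate m 1 ++ 2 :: rest := by
  intro N
  induction N with
  | zero =>
    intro g hg _ hsum
    have : g = [] := List.length_eq_zero_iff.mp (Nat.le_zero.mp hg)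
    subst this; simp at hsum
  | succ N ih =>
    rintro (_ | ⟨x, t⟩) hlen hle hsum
    · simp at hsum
    · have hx : x ≤ 2 := hle x (by simp)
      simp only [List.length_cons] at hlen
      rcases Nat.lt_or_ge x 2 with h2 | h2
      · -- x ≤ 1
        obtain ⟨a, m, rest, ht⟩ := ih t (by omega)
          (fun y hy => hle y (by simp [hy]))
          (by simp [List.sum_cons, List.length_cons] at hsum ⊢; omega)
        exact ⟨x :: a, m, rest, by simp [ht]⟩
      · have hx2 : x = 2 := le_antisymm hx h2
        subst hx2
        obtain ⟨m, u, hsplit, hu⟩ := split_ones t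
        rcases hu with rfl | ⟨y, v, rfl, hy⟩
        · -- t = replicate m 1 : sum too small
          rw [hsplit] at hsum
          simp [List.sum_replicate, List.length_cons] at hsum
          omega
        · have hy2 : y ≤ 2 := hle y (by simp [hsplit])
          interval_cases y
          · -- y = 0 : recurse on v
            have hlenv : v.length ≤ N := by
              have := congrArg List.length hsplit
              simp at this; omega
            have hsumv : v.length + 2 ≤ v.sum := by
              have hs := congrArg List.sum hsplit
              have hl := congrArg List.length hsplit
              simp [List.sum_replicate] at hs hl
              simp [List.sum_cons, List.length_cons] at hsum
              omega
            obtain ⟨a, m', rest, hv⟩ := ih v hlenv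
              (fun z hz => hle z (by simp [hsplit, hz])) hsumv
            exact ⟨2 :: List.replicate m 1 ++ 0 :: a, m', rest,
              by simp [hsplit, hv]⟩
          · exact absurd rfl hy
          · exact ⟨[], m, v, by simp [hsplit]⟩

/-- Decomposition: a word starting with `∘` and containing no `•••` infix is a
concatenation of blocks `∘ •^g` with all `g ≤ 2`. -/
lemma decomp : ∀ N (v : List Bool), v.length ≤ N →
    (v = [] ∨ ∃ t, v = false :: t) → ¬ ([true, true, true] <:+: v) →
    ∃ gs : List ℕ, (∀ x ∈ gs, x ≤ 2) ∧ v = (gs.map Blk).flatten := by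
  intro N
  induction N with
  | zero =>
    rintro v hv _ _
    have : v = [] := List.length_eq_zero_iff.mp (Nat.le_zero.mp hv)
    exact ⟨[], by simp, by simp [this]⟩
  | succ N ih =>
    rintro v hlen (rfl | ⟨t, rfl⟩) hninf
    · exact ⟨[], by simp, by simp⟩
    · obtain ⟨m, u, hsplit, hu⟩ := split_trues t
      have hm : m ≤ 2 := by
        by_contra hm3
        apply hninf
        have h3m : List.replicate m true
            = [true, true, true] ++ List.replicate (m - 3) true := by
          rw [show [true, true, true] = List.replicate 3 true from rfl,
            ← List.replicate_add]
          congr 1; omega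
        refine ⟨[false], List.replicate (m - 3) true ++ u, ?_⟩
        simp [hsplit, h3m]
      have hninfu : ¬ ([true, true, true] <:+: u) := by
        intro h
        exact hninf (h.trans ⟨false :: List.replicate m true, [], by simp [hsplit]⟩)
      have hlenu : u.length ≤ N := by
        have := congrArg List.length hsplit
        simp only [List.length_cons] at hlen
        simp at this; omega
      obtain ⟨gs, hgs1, hgs2⟩ := ih u hlenu (by
        rcases hu with rfl | ⟨s, rfl⟩
        · exact Or.inl rfl
        · exact Or.inr ⟨s, rfl⟩) hninfu
      refine ⟨m :: gs, ?_, ?_⟩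
      · intro x hx
        rcases List.mem_cons.mp hx with rfl | hx
        · exact hm
        · exact hgs1 x hx
      · simp [hsplit, hgs2, Blk]

/-- Lemma on cyclic words over the alphabet {∘, •} (here `false` = ∘ and `true` = •):
if a cyclic word of length `2k+2` with `k` symbols ∘ and `k+2` symbols • has no three
consecutive •'s (cyclically), then some cyclic rotation of it begins with
`•,•,(∘,•)^n,•` for some `n ≥ 1`. -/
theorem cyclic_word_pattern (k : ℕ) (hk : 1 ≤ k) (w : List Bool)
    (hlen : w.length = 2 * k + 2)
    (hbullet : w.count true = k + 2) (hcirc : w.count false = k)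
    (h3 : ∀ r < w.length, ¬ ([true, true, true] <+: w.rotate r)) :
    ∃ r < w.length, ∃ n, 1 ≤ n ∧
      ([true, true] ++ (List.replicate n [false, true]).flatten ++ [true]) <+: w.rotate r := by
  have hL : 0 < w.length := by omega
  have h3' : ∀ r, ¬ ([true, true, true] <+: w.rotate r) := by
    intro r
    rw [← List.rotate_mod]
    exact h3 _ (Nat.mod_lt _ hL)
  have hmem : false ∈ w := List.count_pos_iff.mp (by omega)
  obtain ⟨p, q, hw⟩ := List.append_of_mem hmem
  set r0 := p.length with hr0
  have hw1 : w.rotate r0 = false :: (q ++ p) := by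
    rw [hw, hr0, List.rotate_append_length_eq]; simp
  set w1 := w.rotate r0 with hw1def
  have h3'' : ∀ s, ¬ ([true, true, true] <+: w1.rotate s) := by
    intro s
    rw [hw1def, List.rotate_rotate]
    exact h3' _
  have hninf : ¬ ([true, true, true] <:+: w1) := by
    rintro ⟨x, y, hxy⟩
    apply h3'' x.length
    have : w1 = x ++ ([true, true, true] ++ y) := by rw [← hxy]; simp
    rw [this, List.rotate_append_length_eq]
    exact ⟨y ++ x, by simp⟩
  have hperm : List.Perm w1 w := List.rotate_perm w r0
  obtain ⟨gs, hgs1, hgs2⟩ := decomp w1.length w1 le_rfl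
    (Or.inr ⟨q ++ p, hw1⟩) hninf
  have hcount_f : gs.length = k := by
    have := count_false_flatten gs
    rw [← hgs2, hperm.count_eq, hcirc] at this
    omega
  have hcount_t : gs.sum = k + 2 := by
    have := count_true_flatten gs
    rw [← hgs2, hperm.count_eq, hbullet] at this
    omega
  obtain ⟨a2, m, rest, hgsplit⟩ := gap_infix gs.length gs le_rfl hgs1 (by omega)
  set P := (a2.map Blk).flatten with hP
  set F := (List.replicate m ([false, true] : List Bool)).flatten with hF
  set R := (rest.map Blk).flatten with hR
  have hw1split : w1 = P ++ (false ::
      ([true, true] ++ F ++ ([false, true, true] ++ R))) := by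
    rw [hgs2, hgsplit]
    simp [hP, hF, hR, Blk, List.map_replicate]
  have rot1 : ∀ (a : Bool) (l : List Bool), (a :: l).rotate 1 = l ++ [a] := by
    intro a l
    rw [show (1 : ℕ) = 0 + 1 from rfl, List.rotate_cons_succ, List.rotate_zero]
  have e2 : w1.rotate (P.length + 1) =
      ([true, true] ++ F ++ ([false, true, true] ++ R) ++ P) ++ [false] := by
    rw [← List.rotate_rotate, hw1split, List.rotate_append_length_eq]
    rw [show (false :: ([true, true] ++ F ++ ([false, true, true] ++ R))) ++ P
        = false :: (([true, true] ++ F ++ ([false, true, true] ++ R)) ++ P) from rfl]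
    exact rot1 _ _
  have hpre : ([true, true] ++ (List.replicate (m + 1) [false, true]).flatten ++ [true])
      <+: w1.rotate (P.length + 1) := by
    refine ⟨R ++ P ++ [false], ?_⟩
    rw [e2]
    simp [hF, List.replicate_succ']
  refine ⟨(r0 + (P.length + 1)) % w.length, Nat.mod_lt _ hL, m + 1, by omega, ?_⟩
  rw [List.rotate_mod, ← List.rotate_rotate]
  exact hpre
end

section
/- Let N ≥ 2 and let x = (x_1,…,x_{2N}) be a tuple of positive real numbers. Define H_0(x) := 0 and, for 1 ≤ k ≤ N, H_k(x) := min over all cyclically sparse subsets S of {1,…,2N} with |S| = k of Σ_{i∈S} x_i. Then for every 0 ≤ k ≤ N−2 the weak convexity inequality H_k(x) + H_{k+2}(x) ≥ 2 H_{k+1}(x) holds. -/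
/-- A subset `S` of `{1, …, 2N}` is *cyclically sparse* if any two distinct elements of
`S` differ by at least 2 and not both `1` and `2N` lie in `S`. -/
def CycSparse (N : ℕ) (S : Finset ℕ) : Prop :=
  S ⊆ Finset.Icc 1 (2 * N) ∧ (∀ i ∈ S, ∀ j ∈ S, i < j → i + 2 ≤ j) ∧
    ¬(1 ∈ S ∧ 2 * N ∈ S)

/-- `H_0(x) = 0` and, for `k ≥ 1`, `H_k(x)` is the minimum over all cyclically sparse
subsets `S` of `{1,…,2N}` with `|S| = k` of `∑_{i ∈ S} x i`. -/
noncomputable def Hq (N : ℕ) (x : ℕ → ℝ) (k : ℕ) : ℝ :=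
  if k = 0 then 0
  else sInf {s : ℝ | ∃ S : Finset ℕ, CycSparse N S ∧ S.card = k ∧ s = ∑ i ∈ S, x i}

namespace HqAux

def csucc (N i : ℕ) : ℕ := if i = 2 * N then 1 else i + 1

def rot (N r i : ℕ) : ℕ := (i - 1 + r) % (2 * N) + 1

lemma sparse_iff {N : ℕ} {S : Finset ℕ} :
    CycSparse N S ↔ S ⊆ Finset.Icc 1 (2 * N) ∧ ∀ i ∈ S, csucc N i ∉ S := by
  constructor
  · rintro ⟨h1, h2, h3⟩
    refine ⟨h1, fun i hi hsi => ?_⟩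
    unfold csucc at hsi
    split_ifs at hsi with h
    · exact h3 ⟨hsi, h ▸ hi⟩
    · have := h2 i hi (i + 1) hsi (by omega); omega
  · rintro ⟨h1, h2⟩
    refine ⟨h1, fun i hi j hj hij => ?_, fun hc => ?_⟩
    · by_contra hcon
      have hj2 : j = i + 1 := by omega
      have hjIcc := Finset.mem_Icc.mp (h1 hj)
      have hne : i ≠ 2 * N := by omega
      have := h2 i hi
      rw [csucc, if_neg hne, ← hj2] at this
      exact this hj
    · have := h2 (2 * N) hc.2
      rw [csucc, if_pos rfl] at this
      exact this hc.1

lemma rot_mem {N : ℕ} (hN : 1 ≤ N) (r i : ℕ) : rot N r i ∈ Finset.Icc 1 (2 * N) := by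
  have : (i - 1 + r) % (2 * N) < 2 * N := Nat.mod_lt _ (by omega)
  simp [rot, Finset.mem_Icc]; omega

lemma rot_rot {N : ℕ} (r r' i : ℕ) : rot N r (rot N r' i) = rot N (r' + r) i := by
  simp only [rot, Nat.add_sub_cancel, Nat.mod_add_mod, Nat.add_assoc]

lemma rot_cancel {N : ℕ} {i : ℕ} (hi : i ∈ Finset.Icc 1 (2 * N)) : rot N (2 * N) i = i := by
  rw [Finset.mem_Icc] at hi
  simp only [rot, Nat.add_mod_right]
  rw [Nat.mod_eq_of_lt (by omega)]; omega

lemma csucc_eq_mod {N i : ℕ} (h1 : 1 ≤ i) (h2 : i ≤ 2 * N) : csucc N i = i % (2 * N) + 1 := by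
  unfold csucc
  split_ifs with h
  · simp [h]
  · rw [Nat.mod_eq_of_lt (by omega)]

lemma rot_csucc {N : ℕ} (hN : 1 ≤ N) {i : ℕ} (r : ℕ) (hi : i ∈ Finset.Icc 1 (2 * N)) :
    csucc N (rot N r i) = rot N r (csucc N i) := by
  rw [Finset.mem_Icc] at hi
  have hmem := rot_mem (N := N) hN r i
  rw [Finset.mem_Icc] at hmem
  rw [csucc_eq_mod hmem.1 hmem.2, csucc_eq_mod hi.1 hi.2]
  show ((i - 1 + r) % (2 * N) + 1) % (2 * N) + 1 = (i % (2 * N) + 1 - 1 + r) % (2 * N) + 1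
  rw [Nat.add_sub_cancel, Nat.mod_add_mod, Nat.mod_add_mod]
  congr 2
  omega

lemma csucc_mem {N : ℕ} (hN : 1 ≤ N) {i : ℕ} (hi : i ∈ Finset.Icc 1 (2 * N)) :
    csucc N i ∈ Finset.Icc 1 (2 * N) := by
  rw [Finset.mem_Icc] at *
  unfold csucc; split_ifs with h <;> omega

lemma rot_injOn {N : ℕ} (hN : 1 ≤ N) {r : ℕ} (hr : r ≤ 2 * N) {a b : ℕ}
    (ha : a ∈ Finset.Icc 1 (2 * N)) (hb : b ∈ Finset.Icc 1 (2 * N))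
    (hab : rot N r a = rot N r b) : a = b := by
  have : rot N (2 * N - r) (rot N r a) = rot N (2 * N - r) (rot N r b) := by rw [hab]
  rw [rot_rot, rot_rot] at this
  have hrr : r + (2 * N - r) = 2 * N := by omega
  rw [hrr, rot_cancel ha, rot_cancel hb] at this
  exact this

lemma sparse_rot {N : ℕ} (hN : 1 ≤ N) {r : ℕ} (hr : r ≤ 2 * N) {S : Finset ℕ}
    (hS : CycSparse N S) : CycSparse N (S.image (rot N r)) := by
  obtain ⟨h1, h2⟩ := sparse_iff.mp hS
  rw [sparse_iff]
  constructor
  · intro j hj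
    rw [Finset.mem_image] at hj
    obtain ⟨i, _, rfl⟩ := hj
    exact rot_mem hN r i
  · intro j hj hcon
    rw [Finset.mem_image] at hj hcon
    obtain ⟨i, hi, rfl⟩ := hj
    obtain ⟨i', hi', heq⟩ := hcon
    rw [rot_csucc hN r (h1 hi)] at heq
    have := rot_injOn hN hr (h1 hi') (csucc_mem hN (h1 hi)) heq
    rw [this] at hi'
    exact h2 i hi hi'

end HqAux

namespace HqAux

lemma filter_step (W : Finset ℕ) (c : ℕ) :
    (W.filter (· ≤ c + 1)).card
      = (W.filter (· ≤ c)).card + (if c + 1 ∈ W then 1 else 0) := by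
  by_cases h : c + 1 ∈ W
  · rw [if_pos h]
    have : W.filter (· ≤ c + 1) = insert (c + 1) (W.filter (· ≤ c)) := by
      ext i
      simp only [Finset.mem_filter, Finset.mem_insert]
      constructor
      · rintro ⟨hiW, hile⟩
        rcases Nat.lt_or_ge i (c + 1) with h' | h'
        · exact Or.inr ⟨hiW, by omega⟩
        · exact Or.inl (by omega)
      · rintro (rfl | ⟨hiW, hile⟩)
        · exact ⟨h, le_refl _⟩
        · exact ⟨hiW, by omega⟩
    rw [this, Finset.card_insert_of_notMem (by simp [Finset.mem_filter])]
  · rw [if_neg h]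
    congr 1
    apply Finset.filter_congr
    intro i hiW
    have hne : i ≠ c + 1 := fun hh => h (hh ▸ hiW)
    omega

lemma filter_all {W : Finset ℕ} {m : ℕ} (h : W ⊆ Finset.Icc 1 m) :
    W.filter (· ≤ m) = W := by
  apply Finset.filter_true_of_mem
  intro i hi
  exact (Finset.mem_Icc.mp (h hi)).2

/-- Core exchange lemma, in the "cut at the top" form. -/
lemma core {N : ℕ} (hN : 1 ≤ N) {S T : Finset ℕ}
    (hS : CycSparse N S) (hT : CycSparse N T)
    (htopS : 2 * N ∉ S) (htopT : 2 * N ∉ T)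
    (hcard : T.card = S.card + 2) :
    ∃ A B : Finset ℕ, CycSparse N A ∧ CycSparse N B ∧
      A.card = S.card + 1 ∧ B.card = S.card + 1 ∧
      A ∪ B = S ∪ T ∧ A ∩ B = S ∩ T := by
  obtain ⟨hS1, hS2⟩ := sparse_iff.mp hS
  obtain ⟨hT1, hT2⟩ := sparse_iff.mp hT
  set g : ℕ → ℤ := fun c => ((T.filter (· ≤ c)).card : ℤ) - ((S.filter (· ≤ c)).card : ℤ)
    with hg
  have hg0 : g 0 = 0 := by
    have hTe : T.filter (· ≤ 0) = ∅ := by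
      apply Finset.filter_false_of_mem
      intro i hi; have := Finset.mem_Icc.mp (hT1 hi); omega
    have hSe : S.filter (· ≤ 0) = ∅ := by
      apply Finset.filter_false_of_mem
      intro i hi; have := Finset.mem_Icc.mp (hS1 hi); omega
    simp only [hg]
    rw [hTe, hSe]
    simp
  have hgtop : g (2 * N) = 2 := by
    rw [hg]; simp only [filter_all hS1, filter_all hT1]
    rw [hcard]; push_cast; ring
  set c0 := Nat.findGreatest (fun c => g c ≤ 0) (2 * N) with hc0
  have hPc0 : g c0 ≤ 0 := Nat.findGreatest_spec (P := fun c => g c ≤ 0) (Nat.zero_le _) hg0.le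
  have hc0le : c0 ≤ 2 * N := Nat.findGreatest_le _
  have hgreat : ∀ m, c0 < m → m ≤ 2 * N → 1 ≤ g m := by
    intro m hm1 hm2
    have := Nat.findGreatest_is_greatest (P := fun c => g c ≤ 0) hm1 hm2
    omega
  have hc0lt : c0 < 2 * N := by
    rcases Nat.lt_or_ge c0 (2 * N) with h | h
    · exact h
    · exfalso; have : c0 = 2 * N := by omega
      rw [this, hgtop] at hPc0; omega
  set c := c0 + 1 with hc
  have hcle : c ≤ 2 * N := by omega
  have hgc1 : 1 ≤ g c := hgreat c (by omega) hcle
  have hstepT := filter_step T c0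
  have hstepS := filter_step S c0
  have hgstep : g c = g c0 + (if c ∈ T then 1 else 0) - (if c ∈ S then 1 else 0) := by
    rw [hg]; simp only []
    rw [show c0 + 1 = c from rfl] at hstepT hstepS
    split_ifs <;> (rw [hstepT, hstepS] at *; push_cast; split_ifs <;> omega)
  have hcT : c ∈ T := by
    by_contra h
    rw [if_neg h] at hgstep
    split_ifs at hgstep <;> omega
  have hcS : c ∉ S := by
    by_contra h
    rw [if_pos hcT, if_pos (by exact h)] at hgstep
    omega
  have hgceq : g c = 1 := by
    rw [if_pos hcT, if_neg hcS] at hgstep; omega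
  have hcne : c ≠ 2 * N := fun h => htopT (h ▸ hcT)
  have hcIcc := Finset.mem_Icc.mp (hT1 hcT)
  -- c+1 not in T
  have hc1T : c + 1 ∉ T := by
    intro h
    have := hT2 c hcT
    rw [csucc, if_neg hcne] at this
    exact this h
  -- c+1 not in S
  have hc1S : c + 1 ∉ S := by
    intro h
    have hle : c + 1 ≤ 2 * N := (Finset.mem_Icc.mp (hS1 h)).2
    have := hgreat (c + 1) (by omega) hle
    have hstepT' := filter_step T c
    have hstepS' := filter_step S c
    rw [if_neg hc1T] at hstepT'
    rw [if_pos h] at hstepS'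
    have : g (c + 1) = g c - 1 := by
      rw [hg]; simp only []
      rw [hstepT', hstepS']; push_cast; ring
    omega
  -- define A and B
  refine ⟨T.filter (· ≤ c) ∪ S.filter (fun i => ¬ i ≤ c),
          S.filter (· ≤ c) ∪ T.filter (fun i => ¬ i ≤ c), ?_, ?_, ?_, ?_, ?_, ?_⟩
  · -- A sparse
    rw [sparse_iff]
    constructor
    · intro i hi
      rw [Finset.mem_union, Finset.mem_filter, Finset.mem_filter] at hi
      rcases hi with ⟨h, _⟩ | ⟨h, _⟩
      exacts [hT1 h, hS1 h]
    · intro i hi hcon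
      rw [Finset.mem_union, Finset.mem_filter, Finset.mem_filter] at hi hcon
      have hiIcc : i ∈ Finset.Icc 1 (2 * N) := by
        rcases hi with ⟨h, _⟩ | ⟨h, _⟩; exacts [hT1 h, hS1 h]
      rw [Finset.mem_Icc] at hiIcc
      have hine : i ≠ 2 * N := by
        intro h
        rcases hi with ⟨hiT, hile⟩ | ⟨hiS, _⟩
        · exact hcne (by omega)
        · exact htopS (h ▸ hiS)
      rw [csucc, if_neg hine] at hcon
      rcases hi with ⟨hiT, hile⟩ | ⟨hiS, hgt⟩
      · rcases hcon with ⟨h1T, _⟩ | ⟨h1S, h1gt⟩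
        · have := hT2 i hiT
          rw [csucc, if_neg hine] at this
          exact this h1T
        · have : i = c := by omega
          exact hc1S (this ▸ h1S)
      · rcases hcon with ⟨h1T, h1le⟩ | ⟨h1S, _⟩
        · omega
        · have := hS2 i hiS
          rw [csucc, if_neg hine] at this
          exact this h1S
  · -- B sparse
    rw [sparse_iff]
    constructor
    · intro i hi
      rw [Finset.mem_union, Finset.mem_filter, Finset.mem_filter] at hi
      rcases hi with ⟨h, _⟩ | ⟨h, _⟩
      exacts [hS1 h, hT1 h]
    · intro i hi hcon
      rw [Finset.mem_union, Finset.mem_filter, Finset.mem_filter] at hi hcon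
      have hiIcc : i ∈ Finset.Icc 1 (2 * N) := by
        rcases hi with ⟨h, _⟩ | ⟨h, _⟩; exacts [hS1 h, hT1 h]
      rw [Finset.mem_Icc] at hiIcc
      have hine : i ≠ 2 * N := by
        intro h
        rcases hi with ⟨hiS, _⟩ | ⟨hiT, _⟩
        · exact htopS (h ▸ hiS)
        · exact htopT (h ▸ hiT)
      rw [csucc, if_neg hine] at hcon
      rcases hi with ⟨hiS, hile⟩ | ⟨hiT, hgt⟩
      · rcases hcon with ⟨h1S, _⟩ | ⟨h1T, h1gt⟩
        · have := hS2 i hiS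
          rw [csucc, if_neg hine] at this
          exact this h1S
        · have : i = c := by omega
          exact hcS (this ▸ hiS)
      · rcases hcon with ⟨h1S, h1le⟩ | ⟨h1T, _⟩
        · omega
        · have := hT2 i hiT
          rw [csucc, if_neg hine] at this
          exact this h1T
  · -- card A
    have hdisj : Disjoint (T.filter (· ≤ c)) (S.filter (fun i => ¬ i ≤ c)) := by
      rw [Finset.disjoint_left]
      intro a ha hb
      rw [Finset.mem_filter] at ha hb
      exact hb.2 ha.2
    rw [Finset.card_union_of_disjoint hdisj]
    have hSsplit := Finset.card_filter_add_card_filter_not (s := S)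
      (p := (· ≤ c))
    have hTc : ((T.filter (· ≤ c)).card : ℤ) = ((S.filter (· ≤ c)).card : ℤ) + 1 := by
      have := hgceq; rw [hg] at this; simp only [] at this; omega
    omega
  · -- card B
    have hdisj : Disjoint (S.filter (· ≤ c)) (T.filter (fun i => ¬ i ≤ c)) := by
      rw [Finset.disjoint_left]
      intro a ha hb
      rw [Finset.mem_filter] at ha hb
      exact hb.2 ha.2
    rw [Finset.card_union_of_disjoint hdisj]
    have hTsplit := Finset.card_filter_add_card_filter_not (s := T)
      (p := (· ≤ c))
    have hTc : ((T.filter (· ≤ c)).card : ℤ) = ((S.filter (· ≤ c)).card : ℤ) + 1 := by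
      have := hgceq; rw [hg] at this; simp only [] at this; omega
    omega
  · -- union
    ext i
    simp only [Finset.mem_union, Finset.mem_filter]
    by_cases h : i ≤ c <;> simp [h] <;> tauto
  · -- inter
    ext i
    simp only [Finset.mem_inter, Finset.mem_union, Finset.mem_filter]
    by_cases h : i ≤ c <;> simp [h] <;> tauto

end HqAux

namespace HqAux

lemma sum_rot_image {N : ℕ} (hN : 1 ≤ N) {r : ℕ} (hr : r ≤ 2 * N) {S : Finset ℕ}
    (hS : S ⊆ Finset.Icc 1 (2 * N)) (f : ℕ → ℝ) :
    ∑ i ∈ S.image (rot N r), f i = ∑ i ∈ S, f (rot N r i) :=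
  Finset.sum_image (fun a ha b hb hab => rot_injOn hN hr (hS ha) (hS hb) hab)

lemma card_rot_image {N : ℕ} (hN : 1 ≤ N) {r : ℕ} (hr : r ≤ 2 * N) {S : Finset ℕ}
    (hS : S ⊆ Finset.Icc 1 (2 * N)) :
    (S.image (rot N r)).card = S.card :=
  Finset.card_image_of_injOn (fun a ha b hb hab => rot_injOn hN hr (hS ha) (hS hb) hab)

/-- The exchange lemma on the cycle. -/
lemma exchange {N : ℕ} (hN : 1 ≤ N) {S T : Finset ℕ}
    (hS : CycSparse N S) (hT : CycSparse N T)
    (hcard : T.card = S.card + 2) (hsmall : S.card + T.card < 2 * N) :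
    ∃ A B : Finset ℕ, CycSparse N A ∧ CycSparse N B ∧
      A.card = S.card + 1 ∧ B.card = S.card + 1 ∧
      ∀ f : ℕ → ℝ, (∑ i ∈ A, f i) + (∑ i ∈ B, f i) = (∑ i ∈ S, f i) + (∑ i ∈ T, f i) := by
  -- find a gap point p
  have hUsub : S ∪ T ⊆ Finset.Icc 1 (2 * N) := Finset.union_subset hS.1 hT.1
  have hUcard : (S ∪ T).card < (Finset.Icc 1 (2 * N)).card := by
    have h1 : (S ∪ T).card ≤ S.card + T.card := Finset.card_union_le _ _
    have h2 : (Finset.Icc 1 (2 * N)).card = 2 * N := by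
      rw [Nat.card_Icc]; omega
    omega
  obtain ⟨p, hpIcc, hpU⟩ := Finset.exists_of_ssubset
    (HasSubset.Subset.ssubset_of_ne hUsub (fun h => by rw [h] at hUcard; omega))
  rw [Finset.mem_Icc] at hpIcc
  set r := 2 * N - p with hr
  have hrle : r ≤ 2 * N := by omega
  have hple : p ≤ 2 * N := hpIcc.2
  have hrotp : rot N r p = 2 * N := by
    rw [rot]
    have : p - 1 + r = 2 * N - 1 := by omega
    rw [this, Nat.mod_eq_of_lt (by omega)]
    omega
  have hback : ∀ i ∈ Finset.Icc 1 (2 * N), rot N p (rot N r i) = i := by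
    intro i hi
    rw [rot_rot, show r + p = 2 * N by omega, rot_cancel hi]
  have hback2 : ∀ i ∈ Finset.Icc 1 (2 * N), rot N r (rot N p i) = i := by
    intro i hi
    rw [rot_rot, show p + r = 2 * N by omega, rot_cancel hi]
  set S' := S.image (rot N r) with hS'
  set T' := T.image (rot N r) with hT'
  have hS'sp : CycSparse N S' := sparse_rot hN hrle hS
  have hT'sp : CycSparse N T' := sparse_rot hN hrle hT
  have htopS' : 2 * N ∉ S' := by
    intro h
    rw [hS', Finset.mem_image] at h
    obtain ⟨s, hs, hrs⟩ := h
    have : s = p := by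
      have := hback s (hS.1 hs)
      rw [hrs, ← hrotp, hback p (Finset.mem_Icc.mpr hpIcc)] at this
      exact this.symm
    exact hpU (Finset.mem_union_left _ (this ▸ hs))
  have htopT' : 2 * N ∉ T' := by
    intro h
    rw [hT', Finset.mem_image] at h
    obtain ⟨s, hs, hrs⟩ := h
    have : s = p := by
      have := hback s (hT.1 hs)
      rw [hrs, ← hrotp, hback p (Finset.mem_Icc.mpr hpIcc)] at this
      exact this.symm
    exact hpU (Finset.mem_union_right _ (this ▸ hs))
  have hcard' : T'.card = S'.card + 2 := by
    rw [hS', hT', card_rot_image hN hrle hS.1, card_rot_image hN hrle hT.1, hcard]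
  obtain ⟨A', B', hA'sp, hB'sp, hA'c, hB'c, hunion, hinter⟩ :=
    core hN hS'sp hT'sp htopS' htopT' hcard'
  refine ⟨A'.image (rot N p), B'.image (rot N p), sparse_rot hN hple hA'sp,
    sparse_rot hN hple hB'sp, ?_, ?_, ?_⟩
  · rw [card_rot_image hN hple hA'sp.1, hA'c, hS', card_rot_image hN hrle hS.1]
  · rw [card_rot_image hN hple hB'sp.1, hB'c, hS', card_rot_image hN hrle hS.1]
  · intro f
    rw [sum_rot_image hN hple hA'sp.1, sum_rot_image hN hple hB'sp.1]
    have key : ∀ g : ℕ → ℝ, (∑ i ∈ A', g i) + (∑ i ∈ B', g i)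
        = (∑ i ∈ S', g i) + (∑ i ∈ T', g i) := by
      intro g
      rw [← Finset.sum_union_inter, hunion, hinter, Finset.sum_union_inter]
    rw [key (fun i => f (rot N p i))]
    rw [hS', hT', sum_rot_image hN hrle hS.1, sum_rot_image hN hrle hT.1]
    congr 1
    · apply Finset.sum_congr rfl
      intro i hi
      rw [hback i (hS.1 hi)]
    · apply Finset.sum_congr rfl
      intro i hi
      rw [hback i (hT.1 hi)]

end HqAux

namespace HqAux

def HqSet (N : ℕ) (x : ℕ → ℝ) (k : ℕ) : Set ℝ :=
  {s : ℝ | ∃ S : Finset ℕ, CycSparse N S ∧ S.card = k ∧ s = ∑ i ∈ S, x i}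

lemma HqSet_finite (N : ℕ) (x : ℕ → ℝ) (k : ℕ) : (HqSet N x k).Finite := by
  apply Set.Finite.subset (Finset.finite_toSet
    ((Finset.Icc 1 (2 * N)).powerset.image (fun S => ∑ i ∈ S, x i)))
  rintro s ⟨S, hSsp, hScard, rfl⟩
  simp only [Finset.coe_image, Set.mem_image, Finset.mem_coe, Finset.mem_powerset]
  exact ⟨S, by simpa [Finset.mem_powerset] using hSsp.1, rfl⟩

lemma HqSet_nonempty {N k : ℕ} (x : ℕ → ℝ) (hk : k ≤ N) : (HqSet N x k).Nonempty := by
  refine ⟨_, (Finset.range k).image (fun j => 2 * j + 1), ⟨?_, ?_, ?_⟩, ?_, rfl⟩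
  · intro i hi
    rw [Finset.mem_image] at hi
    obtain ⟨j, hj, rfl⟩ := hi
    rw [Finset.mem_range] at hj
    rw [Finset.mem_Icc]
    omega
  · intro i hi j hj hij
    rw [Finset.mem_image] at hi hj
    obtain ⟨a, ha, rfl⟩ := hi
    obtain ⟨b, hb, rfl⟩ := hj
    omega
  · rintro ⟨h1, h2⟩
    rw [Finset.mem_image] at h2
    obtain ⟨j, hj, hjeq⟩ := h2
    omega
  · rw [Finset.card_image_of_injective _ (fun a b hab => by omega)]
    exact Finset.card_range k

lemma HqSet_bddBelow {N k : ℕ} {x : ℕ → ℝ} (hx : ∀ i ∈ Finset.Icc 1 (2 * N), 0 < x i) :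
    BddBelow (HqSet N x k) := by
  refine ⟨0, ?_⟩
  rintro s ⟨S, hSsp, hScard, rfl⟩
  exact Finset.sum_nonneg (fun i hi => (hx i (hSsp.1 hi)).le)

lemma Hq_le {N k : ℕ} {x : ℕ → ℝ} (hx : ∀ i ∈ Finset.Icc 1 (2 * N), 0 < x i)
    (hk : k ≠ 0) {S : Finset ℕ} (hSsp : CycSparse N S) (hScard : S.card = k) :
    Hq N x k ≤ ∑ i ∈ S, x i := by
  rw [Hq, if_neg hk]
  exact csInf_le (HqSet_bddBelow hx) ⟨S, hSsp, hScard, rfl⟩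

lemma Hq_attained {N k : ℕ} (x : ℕ → ℝ) (hk0 : k ≠ 0) (hk : k ≤ N) :
    ∃ S : Finset ℕ, CycSparse N S ∧ S.card = k ∧ Hq N x k = ∑ i ∈ S, x i := by
  have hmem : sInf (HqSet N x k) ∈ HqSet N x k :=
    Set.Nonempty.csInf_mem (HqSet_nonempty x hk) (HqSet_finite N x k)
  obtain ⟨S, h1, h2, h3⟩ := hmem
  exact ⟨S, h1, h2, by rw [Hq, if_neg hk0]; exact h3⟩

end HqAux

/-- Weak convexity of the conserved quantities: for positive `x` and `0 ≤ k ≤ N - 2`,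
`H_k(x) + H_{k+2}(x) ≥ 2 H_{k+1}(x)`. -/
theorem Hq_weak_convexity (N : ℕ) (hN : 2 ≤ N) (x : ℕ → ℝ)
    (hx : ∀ i ∈ Finset.Icc 1 (2 * N), 0 < x i) :
    ∀ k, k ≤ N - 2 → Hq N x k + Hq N x (k + 2) ≥ 2 * Hq N x (k + 1) := by
  intro k hk
  have hk2N : k + 2 ≤ N := by omega
  have hN1 : 1 ≤ N := by omega
  obtain ⟨T, hTsp, hTcard, hTval⟩ := HqAux.Hq_attained (N := N) x (k := k + 2) (by omega) hk2N
  have hSex : ∃ S : Finset ℕ, CycSparse N S ∧ S.card = k ∧ Hq N x k = ∑ i ∈ S, x i := by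
    rcases Nat.eq_zero_or_pos k with rfl | hkpos
    · exact ⟨∅, ⟨Finset.empty_subset _, by simp, by simp⟩, by simp, by simp [Hq]⟩
    · exact HqAux.Hq_attained x (by omega) (by omega)
  obtain ⟨S, hSsp, hScard, hSval⟩ := hSex
  obtain ⟨A, B, hAsp, hBsp, hAcard, hBcard, hsum⟩ :=
    HqAux.exchange hN1 hSsp hTsp (by omega) (by omega)
  have hA : Hq N x (k + 1) ≤ ∑ i ∈ A, x i :=
    HqAux.Hq_le hx (by omega) hAsp (by omega)
  have hB : Hq N x (k + 1) ≤ ∑ i ∈ B, x i :=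
    HqAux.Hq_le hx (by omega) hBsp (by omega)
  have := hsum x
  rw [hSval, hTval]
  linarith
end

section
/- Let N ≥ 1 and let x = (x_1,…,x_{2N}) be a tuple of positive real numbers. Define H_0(x) := 0 and, for 1 ≤ k ≤ N, H_k(x) := min over all cyclically sparse subsets S of {1,…,2N} with |S| = k of Σ_{i∈S} x_i. Then the sequence of increments is weakly increasing and positive: for every 1 ≤ k ≤ N, H_k(x) − H_{k−1}(x) > 0, and for every 1 ≤ k ≤ N−1, H_k(x) − H_{k−1}(x) ≤ H_{k+1}(x) − H_k(x). In particular 0 = H_0(x) < H_1(x) < ⋯ < H_N(x). -/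
/-!
There are finitely many sparse sets, so each `H_k` is attained by some optimal set. Deleting a
point of an optimal `k`-set gives a `(k-1)`-set of strictly smaller weight. For convexity take
optimal sets `A`, `B` of sizes `k-1`, `k+1`. Since `|A| + |B| < 2N`, some vertex lies in neither;
cutting the cycle open there leaves two sparse sets on a path, `a₁ < a₂ < ⋯` and `b₁ < b₂ < ⋯`.
For a suitable `j`, both `{b₁, …, b_{j+1}, a_{j+1}, …}` and `{a₁, …, a_j, b_{j+2}, …}` are sparse:
two sparse `k`-sets of total weight `w(A) + w(B)`, whence `2 H_k ≤ H_{k-1} + H_{k+1}`.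
-/

open Finset

def Sparse (S : Finset ℕ) : Prop :=
  ∀ i ∈ S, ∀ j ∈ S, i < j → i + 2 ≤ j

-- `j` is the first index with `b_{j+1} + 2 ≤ a_{j+1}`, or `as.length` if there is none.
theorem exists_pairwise_exchange :
    ∀ (as bs : List ℕ), as.Pairwise (· + 2 ≤ ·) → bs.Pairwise (· + 2 ≤ ·) →
      bs.length = as.length + 2 → ∃ j ≤ as.length,
        (bs.take (j + 1) ++ as.drop j).Pairwise (· + 2 ≤ ·) ∧
        (as.take j ++ bs.drop (j + 1)).Pairwise (· + 2 ≤ ·)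
  | _, [], _, _, h | _, [_], _, _, h => by simp at h
  | [], b :: b₂ :: bs, _, hb, _ => ⟨0, le_rfl, by simp, by simpa using hb.of_cons⟩
  | a :: as, b :: b₂ :: bs, ha, hb, hlen => by
    by_cases hba : b + 2 ≤ a
    · refine ⟨0, Nat.zero_le _, List.pairwise_cons.2 ⟨fun y hy => ?_, ha⟩,
        by simpa using hb.of_cons⟩
      rcases List.mem_cons.1 hy with rfl | hy
      · exact hba
      · have := List.rel_of_pairwise_cons ha hy
        omega
    · obtain ⟨j, hj, hC, hD⟩ :=
        exists_pairwise_exchange as (b₂ :: bs) ha.of_cons hb.of_cons (by simpa using hlen)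
      have hbb₂ : b + 2 ≤ b₂ := List.rel_of_pairwise_cons hb List.mem_cons_self
      refine ⟨j + 1, by simpa using hj, ?_, ?_⟩
      · simp only [List.take_succ_cons, List.drop_succ_cons, List.cons_append] at hC ⊢
        refine List.pairwise_cons.2 ⟨fun y hy => ?_, hC⟩
        rcases List.mem_cons.1 hy with rfl | hy
        · exact hbb₂
        · have := List.rel_of_pairwise_cons hC hy
          omega
      · simp only [List.take_succ_cons, List.drop_succ_cons, List.cons_append]
        refine List.pairwise_cons.2 ⟨fun y hy => ?_, hD⟩
        rcases List.mem_append.1 hy with hy | hy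
        · exact List.rel_of_pairwise_cons ha (List.mem_of_mem_take hy)
        · have := List.rel_of_pairwise_cons hb.of_cons (List.mem_of_mem_drop hy)
          omega

theorem Sparse.pairwise_sort {S : Finset ℕ} (hS : Sparse S) : S.sort.Pairwise (· + 2 ≤ ·) :=
  (sortedLT_sort S).pairwise.imp_of_mem fun ha hb hab =>
    hS _ (by simpa using ha) _ (by simpa using hb) hab

theorem sparse_of_pairwise {l : List ℕ} (hl : l.Pairwise (· + 2 ≤ ·)) :
    Sparse ⟨l, Multiset.coe_nodup.2 (hl.imp fun h => by omega)⟩ := by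
  intro i hi j hj hij
  have : Std.Symm fun a b : ℕ => a + 2 ≤ b ∨ b + 2 ≤ a := ⟨fun _ _ => Or.symm⟩
  have hl' : l.Pairwise fun a b => a + 2 ≤ b ∨ b + 2 ≤ a := hl.imp Or.inl
  have : i + 2 ≤ j ∨ j + 2 ≤ i := hl'.forall hi hj hij.ne
  omega

theorem Sparse.exists_exchange {A B : Finset ℕ} (hA : Sparse A) (hB : Sparse B)
    (hcard : #B = #A + 2) :
    ∃ C D : Finset ℕ, Sparse C ∧ Sparse D ∧ #C = #A + 1 ∧ #D = #A + 1 ∧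
      C.val + D.val = A.val + B.val := by
  obtain ⟨j, hj, hC, hD⟩ := exists_pairwise_exchange _ _ hA.pairwise_sort hB.pairwise_sort
    (by simp [hcard])
  refine ⟨_, _, sparse_of_pairwise hC, sparse_of_pairwise hD, ?_, ?_, ?_⟩
  all_goals simp only [card_mk, Multiset.coe_card, List.length_append, List.length_take,
    List.length_drop, length_sort] at hj ⊢
  · omega
  · omega
  · have split (S : Finset ℕ) (n : ℕ) : S.val = ↑(S.sort.take n) + ↑(S.sort.drop n) := by
      rw [Multiset.coe_add, List.take_append_drop, sort_eq]
    rw [split A j, split B (j + 1)]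
    simp only [← Multiset.coe_add]
    abel

def CycAdj (N i j : ℕ) : Prop :=
  i + 1 = j ∨ j + 1 = i ∨ (i = 1 ∧ j = 2 * N) ∨ (i = 2 * N ∧ j = 1)

theorem cycSparse_iff {N : ℕ} {S : Finset ℕ} :
    CycSparse N S ↔ S ⊆ Icc 1 (2 * N) ∧ ∀ i ∈ S, ∀ j ∈ S, ¬CycAdj N i j := by
  refine ⟨fun ⟨hS, hgap, hends⟩ => ⟨hS, fun i hi j hj hadj => ?_⟩,
    fun ⟨hS, hnadj⟩ => ⟨hS, fun i hi j hj hij => ?_, fun ⟨h1, h2⟩ => hnadj _ h1 _ h2 ?_⟩⟩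
  · have := mem_Icc.1 (hS hi)
    have := mem_Icc.1 (hS hj)
    rcases hadj with rfl | rfl | ⟨rfl, rfl⟩ | ⟨rfl, rfl⟩
    · have := hgap _ hi _ hj (by omega); omega
    · have := hgap _ hj _ hi (by omega); omega
    · exact hends ⟨hi, hj⟩
    · exact hends ⟨hj, hi⟩
  · by_contra h
    exact hnadj _ hi _ hj (Or.inl (by omega))
  · exact Or.inr (Or.inr (Or.inl ⟨rfl, rfl⟩))

-- The rotation `i ↦ i - v` of the cycle `{1, …, 2N}`, which sends `v` to `2N`; it is extended by
-- the identity off the cycle so as to be a permutation of `ℕ`.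
def rot (N v i : ℕ) : ℕ :=
  if i = 0 ∨ 2 * N < i then i else if i ≤ v then i + (2 * N - v) else i - v

def rotate (N v : ℕ) (hv : v ≤ 2 * N) : Equiv.Perm ℕ where
  toFun := rot N v
  invFun := rot N (2 * N - v)
  left_inv i := by unfold rot; split_ifs <;> omega
  right_inv i := by unfold rot; split_ifs <;> omega

section rotate

variable {N v : ℕ} (hv : v ≤ 2 * N)

theorem rotate_symm : (rotate N v hv).symm = rotate N (2 * N - v) (Nat.sub_le _ _) :=
  Equiv.ext fun _ => rfl

theorem rotate_mem_Icc_of_ne (hv₁ : 1 ≤ v) {i : ℕ} (hi : i ∈ Icc 1 (2 * N)) (hiv : i ≠ v) :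
    rotate N v hv i ∈ Icc 1 (2 * N - 1) := by
  rw [mem_Icc] at hi ⊢
  simp only [rotate, Equiv.coe_fn_mk, rot]; split_ifs <;> omega

theorem rotate_mem_Icc {i : ℕ} (hi : i ∈ Icc 1 (2 * N)) : rotate N v hv i ∈ Icc 1 (2 * N) := by
  rw [mem_Icc] at hi ⊢
  simp only [rotate, Equiv.coe_fn_mk, rot]; split_ifs <;> omega

theorem cycAdj_of_cycAdj_rotate {i j : ℕ} (hi : i ∈ Icc 1 (2 * N)) (hj : j ∈ Icc 1 (2 * N))
    (h : CycAdj N (rotate N v hv i) (rotate N v hv j)) : CycAdj N i j := by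
  rw [mem_Icc] at hi hj
  simp only [CycAdj, rotate, Equiv.coe_fn_mk, rot] at h ⊢
  split_ifs at h <;> omega

theorem CycSparse.map_rotate {S : Finset ℕ} (hS : CycSparse N S) :
    CycSparse N (S.map (rotate N v hv).toEmbedding) := by
  rw [cycSparse_iff] at hS ⊢
  refine ⟨fun i hi => ?_, fun i hi j hj hadj => ?_⟩
  · obtain ⟨a, ha, rfl⟩ := mem_map.1 hi
    exact rotate_mem_Icc hv (hS.1 ha)
  · obtain ⟨a, ha, rfl⟩ := mem_map.1 hi
    obtain ⟨b, hb, rfl⟩ := mem_map.1 hj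
    exact hS.2 a ha b hb (cycAdj_of_cycAdj_rotate hv (hS.1 ha) (hS.1 hb) hadj)

theorem CycSparse.map_rotate_subset (hv₁ : 1 ≤ v) {S : Finset ℕ} (hS : CycSparse N S)
    (hvS : v ∉ S) :
    S.map (rotate N v hv).toEmbedding ⊆ Icc 1 (2 * N - 1) := by
  intro i hi
  obtain ⟨a, ha, rfl⟩ := mem_map.1 hi
  exact rotate_mem_Icc_of_ne hv hv₁ (hS.1 ha) (ne_of_mem_of_not_mem ha hvS)

end rotate

theorem CycSparse.mono {N : ℕ} {S T : Finset ℕ} (hS : CycSparse N S) (hTS : T ⊆ S) :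
    CycSparse N T :=
  ⟨hTS.trans hS.1, fun i hi j hj => hS.2.1 i (hTS hi) j (hTS hj),
    fun ⟨h₁, h₂⟩ => hS.2.2 ⟨hTS h₁, hTS h₂⟩⟩

theorem Sparse.cycSparse {N : ℕ} {S : Finset ℕ} (hS : Sparse S) (hS₁ : S ⊆ Icc 1 (2 * N - 1)) :
    CycSparse N S :=
  ⟨hS₁.trans (Icc_subset_Icc_right (Nat.sub_le _ _)), hS, fun ⟨_, h⟩ => by
    have := mem_Icc.1 (hS₁ h); omega⟩

theorem CycSparse.exists_exchange {N : ℕ} {A B : Finset ℕ} (hA : CycSparse N A)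
    (hB : CycSparse N B) (hcard : #B = #A + 2) (hBN : #B ≤ N) :
    ∃ C D : Finset ℕ, CycSparse N C ∧ CycSparse N D ∧ #C = #A + 1 ∧ #D = #A + 1 ∧
      C.val + D.val = A.val + B.val := by
  obtain ⟨v, hv, hvAB⟩ : ∃ v ∈ Icc 1 (2 * N), v ∉ A ∪ B :=
    exists_mem_notMem_of_card_lt_card (by have := card_union_le A B; simp; omega)
  rw [mem_Icc] at hv
  obtain ⟨C, D, hC, hD, hCk, hDk, hCD⟩ := Sparse.exists_exchange (hA.map_rotate hv.2).2.1
    (hB.map_rotate hv.2).2.1 (by simp [hcard])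
  have hCD_path : ∀ i ∈ C.val + D.val, i ∈ Icc 1 (2 * N - 1) := by
    rw [hCD]
    intro i hi
    rcases Multiset.mem_add.1 hi with hi | hi
    · exact hA.map_rotate_subset hv.2 hv.1 (fun h => hvAB (mem_union_left _ h)) hi
    · exact hB.map_rotate_subset hv.2 hv.1 (fun h => hvAB (mem_union_right _ h)) hi
  have hC' : CycSparse N C := hC.cycSparse fun i hi => hCD_path i (Multiset.mem_add.2 (.inl hi))
  have hD' : CycSparse N D := hD.cycSparse fun i hi => hCD_path i (Multiset.mem_add.2 (.inr hi))
  refine ⟨C.map (rotate N v hv.2).symm.toEmbedding, D.map (rotate N v hv.2).symm.toEmbedding,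
    ?_, ?_, by simp [hCk], by simp [hDk], ?_⟩
  · rw [rotate_symm]; exact hC'.map_rotate _
  · rw [rotate_symm]; exact hD'.map_rotate _
  · simp only [map_val, ← Multiset.map_add, hCD, Multiset.map_map]
    simp

def sparseSums (N : ℕ) (x : ℕ → ℝ) (k : ℕ) : Set ℝ :=
  {s | ∃ S : Finset ℕ, CycSparse N S ∧ #S = k ∧ s = ∑ i ∈ S, x i}

section Hq

variable {N k : ℕ} {x : ℕ → ℝ}

theorem exists_cycSparse_card (hk : k ≤ N) : ∃ S : Finset ℕ, CycSparse N S ∧ #S = k := by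
  refine ⟨(range k).image (fun i => 2 * i + 1), ⟨fun i hi => ?_, fun i hi j hj hij => ?_, ?_⟩, ?_⟩
  · obtain ⟨a, ha, rfl⟩ := mem_image.1 hi
    have := mem_range.1 ha
    exact mem_Icc.2 (by omega)
  · obtain ⟨a, -, rfl⟩ := mem_image.1 hi
    obtain ⟨b, -, rfl⟩ := mem_image.1 hj
    omega
  · rintro ⟨-, h⟩
    obtain ⟨a, -, ha⟩ := mem_image.1 h
    omega
  · rw [card_image_of_injective _ (fun a b h => by omega), card_range]

theorem sparseSums_finite : (sparseSums N x k).Finite := by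
  refine (((Icc 1 (2 * N)).powerset : Set (Finset ℕ)).toFinite.image
    fun S => ∑ i ∈ S, x i).subset ?_
  rintro _ ⟨S, hS, -, rfl⟩
  exact ⟨S, mem_coe.2 (mem_powerset.2 hS.1), rfl⟩

theorem Hq_eq_sInf : Hq N x k = sInf (sparseSums N x k) := by
  rcases eq_or_ne k 0 with rfl | hk
  · have : sparseSums N x 0 = {0} := by
      ext s
      simp [sparseSums, CycSparse]
    rw [this, csInf_singleton, Hq, if_pos rfl]
  · rw [Hq, if_neg hk]
    rfl

theorem Hq_le_sum {S : Finset ℕ} (hS : CycSparse N S) : Hq N x #S ≤ ∑ i ∈ S, x i := by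
  rw [Hq_eq_sInf]
  exact csInf_le sparseSums_finite.bddBelow ⟨S, hS, rfl, rfl⟩

theorem exists_Hq_eq_sum (hk : k ≤ N) :
    ∃ S : Finset ℕ, CycSparse N S ∧ #S = k ∧ Hq N x k = ∑ i ∈ S, x i := by
  obtain ⟨S, hS, hSk⟩ := exists_cycSparse_card hk
  rw [Hq_eq_sInf]
  exact Set.Nonempty.csInf_mem (s := sparseSums N x k) ⟨_, S, hS, hSk, rfl⟩ sparseSums_finite

theorem Hq_lt_Hq_succ (hx : ∀ i ∈ Icc 1 (2 * N), 0 < x i) (hk : k + 1 ≤ N) :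
    Hq N x k < Hq N x (k + 1) := by
  obtain ⟨S, hS, hSk, hHq⟩ := exists_Hq_eq_sum (x := x) hk
  obtain ⟨a, ha⟩ := card_pos.1 (by omega : 0 < #S)
  calc Hq N x k = Hq N x #(S.erase a) := by rw [card_erase_of_mem ha, hSk, Nat.add_sub_cancel]
    _ ≤ ∑ i ∈ S.erase a, x i := Hq_le_sum (hS.mono (erase_subset a S))
    _ < ∑ i ∈ S.erase a, x i + x a := lt_add_of_pos_right _ (hx a (hS.1 ha))
    _ = Hq N x (k + 1) := by rw [sum_erase_add _ _ ha, hHq]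

theorem two_mul_Hq_le (hk : k + 2 ≤ N) : 2 * Hq N x (k + 1) ≤ Hq N x k + Hq N x (k + 2) := by
  obtain ⟨A, hA, hAk, hHA⟩ := exists_Hq_eq_sum (x := x) (by omega : k ≤ N)
  obtain ⟨B, hB, hBk, hHB⟩ := exists_Hq_eq_sum (x := x) hk
  obtain ⟨C, D, hC, hD, hCk, hDk, hCD⟩ := hA.exists_exchange hB (by omega) (by omega)
  have hsum : ∑ i ∈ C, x i + ∑ i ∈ D, x i = ∑ i ∈ A, x i + ∑ i ∈ B, x i := by
    simpa only [sum_eq_multiset_sum, Multiset.map_add, Multiset.sum_add] using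
      congr_arg (fun m => (m.map x).sum) hCD
  have hHC := Hq_le_sum (x := x) hC
  have hHD := Hq_le_sum (x := x) hD
  rw [hCk, hAk] at hHC
  rw [hDk, hAk] at hHD
  linarith

end Hq

theorem Hq_increments_general (N : ℕ) (x : ℕ → ℝ)
    (hx : ∀ i ∈ Finset.Icc 1 (2 * N), 0 < x i) :
    (∀ k, 1 ≤ k → k ≤ N → 0 < Hq N x k - Hq N x (k - 1)) ∧
      (∀ k, 1 ≤ k → k ≤ N - 1 →
        Hq N x k - Hq N x (k - 1) ≤ Hq N x (k + 1) - Hq N x k) := by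
  refine ⟨fun k hk₁ hk => ?_, fun k hk₁ hk => ?_⟩
  · obtain ⟨m, rfl⟩ := Nat.exists_eq_add_of_le' hk₁
    have := Hq_lt_Hq_succ hx hk
    rw [Nat.add_sub_cancel]
    linarith
  · obtain ⟨m, rfl⟩ := Nat.exists_eq_add_of_le' hk₁
    have := two_mul_Hq_le (x := x) (by omega : m + 2 ≤ N)
    rw [Nat.add_sub_cancel]
    linarith

/-- For positive `x`, the increments `H_k(x) - H_{k-1}(x)` are positive and weakly
increasing in `k`; in particular `0 = H_0(x) < H_1(x) < ⋯ < H_N(x)`. -/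
theorem Hq_increments (N : ℕ) (hN : 1 ≤ N) (x : ℕ → ℝ)
    (hx : ∀ i ∈ Finset.Icc 1 (2 * N), 0 < x i) :
    (∀ k, 1 ≤ k → k ≤ N → 0 < Hq N x k - Hq N x (k - 1)) ∧
      (∀ k, 1 ≤ k → k ≤ N - 1 →
        Hq N x k - Hq N x (k - 1) ≤ Hq N x (k + 1) - Hq N x k) :=
  Hq_increments_general N x hx
end

section
/- Let u and v be finite sequences of nonnegative real numbers with |u| + |v| odd, and let a, b be nonnegative real numbers. Then the sequence u ++ (a+b) ++ v satisfies the highest weight condition if and only if the sequence u ++ (a, 0, b) ++ v (the term a+b split into a and b with a zero inserted between them) satisfies the highest weight condition. -/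
/-- A finite sequence `x_1, …, x_{2n}` of nonnegative reals (given as a list, 0-indexed)
satisfies the *highest weight condition* if `∑_{i=1}^{k} (x_{2i-1} - x_{2i}) ≥ 0` for
every `1 ≤ k ≤ n`. -/
def HWC (l : List ℝ) : Prop :=
  ∀ k : ℕ, 2 * k ≤ l.length →
    0 ≤ ∑ j ∈ Finset.range k, (l.getD (2 * j) 0 - l.getD (2 * j + 1) 0)

/-- Partial sums appearing in the highest weight condition. -/
def HWCsum (l : List ℝ) (k : ℕ) : ℝ :=
  ∑ j ∈ Finset.range k, (l.getD (2 * j) 0 - l.getD (2 * j + 1) 0)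

lemma HWC_iff (l : List ℝ) : HWC l ↔ ∀ k : ℕ, 2 * k ≤ l.length → 0 ≤ HWCsum l k :=
  Iff.rfl

lemma HWCsum_succ (l : List ℝ) (k : ℕ) :
    HWCsum l (k + 1) = HWCsum l k + (l.getD (2 * k) 0 - l.getD (2 * k + 1) 0) :=
  Finset.sum_range_succ _ _

/-- Splitting a term `a + b` into `a, 0, b` (or joining `a, 0, b` into `a + b`) preserves
the highest weight condition. -/
theorem hwc_split_term (u v : List ℝ)
    (hu : ∀ x ∈ u, 0 ≤ x) (hv : ∀ x ∈ v, 0 ≤ x)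
    (hlen : Odd (u.length + v.length)) (a b : ℝ) (ha : 0 ≤ a) (hb : 0 ≤ b) :
    HWC (u ++ [a + b] ++ v) ↔ HWC (u ++ [a, 0, b] ++ v) := by
  set m := u.length with hm
  set p := m / 2 with hp
  set A := u ++ [a + b] ++ v with hA
  set B := u ++ [a, 0, b] ++ v with hB
  have hAlen : A.length = m + 1 + v.length := by simp [hA]; omega
  have hBlen : B.length = m + 3 + v.length := by simp [hB]; omega
  -- explicit values of entries of A
  have hAu : ∀ i < m, A.getD i 0 = u.getD i 0 := by
    intro i h
    rw [hA, List.append_assoc, List.getD_append _ _ _ _ h]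
  have hAm : A.getD m 0 = a + b := by
    rw [hA, List.append_assoc, List.getD_append_right _ _ _ _ le_rfl]
    simp
  have hAv : ∀ t, A.getD (m + 1 + t) 0 = v.getD t 0 := by
    intro t
    rw [hA, List.append_assoc, List.getD_append_right _ _ _ _ (by omega)]
    have : m + 1 + t - m = t + 1 := by omega
    rw [this]
    simp
  -- explicit values of entries of B
  have hBu : ∀ i < m, B.getD i 0 = u.getD i 0 := by
    intro i h
    rw [hB, List.append_assoc, List.getD_append _ _ _ _ h]
  have hBm0 : B.getD m 0 = a := by
    rw [hB, List.append_assoc, List.getD_append_right _ _ _ _ le_rfl]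
    simp
  have hBm1 : B.getD (m + 1) 0 = 0 := by
    rw [hB, List.append_assoc, List.getD_append_right _ _ _ _ (by omega)]
    have : m + 1 - m = 1 := by omega
    rw [this]
    simp
  have hBm2 : B.getD (m + 2) 0 = b := by
    rw [hB, List.append_assoc, List.getD_append_right _ _ _ _ (by omega)]
    have : m + 2 - m = 2 := by omega
    rw [this]
    simp
  have hBv : ∀ t, B.getD (m + 3 + t) 0 = v.getD t 0 := by
    intro t
    rw [hB, List.append_assoc, List.getD_append_right _ _ _ _ (by omega)]
    have : m + 3 + t - m = t + 3 := by omega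
    rw [this]
    simp
  -- partial sums agree up to position p
  have hSeq1 : ∀ k ≤ p, HWCsum A k = HWCsum B k := by
    intro k hk
    refine Finset.sum_congr rfl ?_
    intro j hj
    simp only [Finset.mem_range] at hj
    have h1 : 2 * j < m := by omega
    have h2 : 2 * j + 1 < m := by omega
    rw [hAu _ h1, hAu _ h2, hBu _ h1, hBu _ h2]
  -- base case of the shifted comparison
  have hL3 : HWCsum B (p + 2) = HWCsum A (p + 1) := by
    rw [HWCsum_succ B (p + 1), HWCsum_succ B p, HWCsum_succ A p, hSeq1 p le_rfl]
    rcases Nat.even_or_odd m with ⟨t, ht⟩ | ⟨t, ht⟩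
    · have hme : 2 * p = m := by omega
      rw [show 2 * (p + 1) + 1 = m + 3 + 0 by omega, hBv,
        show 2 * (p + 1) = m + 2 by omega, hBm2,
        show 2 * p + 1 = m + 1 by omega, hBm1,
        show 2 * p = m from hme, hBm0, hAm,
        show m + 1 = m + 1 + 0 by omega, hAv]
      ring
    · have hmo : 2 * p + 1 = m := by omega
      rw [show 2 * (p + 1) + 1 = m + 2 by omega, hBm2,
        show 2 * (p + 1) = m + 1 by omega, hBm1,
        show 2 * p + 1 = m from hmo, hBm0, hAm,
        hBu (2 * p) (by omega), hAu (2 * p) (by omega)]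
      ring
  -- summands of B shifted by one agree with those of A after position p
  have hEq2 : ∀ j, p + 1 ≤ j →
      (B.getD (2 * (j + 1)) 0 - B.getD (2 * (j + 1) + 1) 0)
        = (A.getD (2 * j) 0 - A.getD (2 * j + 1) 0) := by
    intro j hj
    obtain ⟨t, ht⟩ : ∃ t, 2 * j = m + 1 + t := ⟨2 * j - m - 1, by omega⟩
    rw [show 2 * (j + 1) + 1 = m + 3 + (t + 1) by omega, hBv,
      show 2 * (j + 1) = m + 3 + t by omega, hBv,
      show 2 * j + 1 = m + 1 + (t + 1) by omega, hAv,
      show 2 * j = m + 1 + t from ht, hAv]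
  have hSeq2 : ∀ k, p + 1 ≤ k → HWCsum B (k + 1) = HWCsum A k := by
    intro k hk
    induction k, hk using Nat.le_induction with
    | base => exact hL3
    | succ k hk ih =>
      rw [HWCsum_succ B (k + 1), ih, HWCsum_succ A k, hEq2 k hk]
  -- the extra constraint of B at k = p + 1
  have hL4 : HWCsum B (p + 1) = HWCsum A p + a
      ∨ HWCsum B (p + 1) = HWCsum A (p + 1) + b := by
    rcases Nat.even_or_odd m with ⟨t, ht⟩ | ⟨t, ht⟩
    · left
      rw [HWCsum_succ B p, hSeq1 p le_rfl,
        show 2 * p + 1 = m + 1 by omega, hBm1,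
        show 2 * p = m by omega, hBm0]
      ring
    · right
      rw [HWCsum_succ B p, HWCsum_succ A p, hSeq1 p le_rfl,
        show 2 * p + 1 = m by omega, hBm0, hAm,
        hBu (2 * p) (by omega), hAu (2 * p) (by omega)]
      ring
  have hpm : 2 * p ≤ m := by omega
  rw [HWC_iff, HWC_iff]
  constructor
  · intro hHA k hk
    rcases Nat.lt_or_ge k (p + 1) with hkp | hkp
    · rw [← hSeq1 k (by omega)]
      exact hHA k (by omega)
    · rcases Nat.eq_or_lt_of_le hkp with hkp' | hkp'
      · subst hkp'
        rcases hL4 with h | h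
        · rw [h]
          have := hHA p (by omega)
          linarith
        · rw [h]
          have h2 : 2 * (p + 1) ≤ A.length := by
            rcases Nat.even_or_odd m with ⟨t, ht⟩ | ⟨t, ht⟩
            · rcases hlen with ⟨s, hs⟩
              omega
            · omega
          have := hHA (p + 1) h2
          linarith
      · have hk1 : k = (k - 1) + 1 := by omega
        rw [hk1, hSeq2 (k - 1) (by omega)]
        exact hHA (k - 1) (by omega)
  · intro hHB k hk
    rcases Nat.lt_or_ge k (p + 1) with hkp | hkp
    · rw [hSeq1 k (by omega)]
      exact hHB k (by omega)
    · rw [← hSeq2 k hkp]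
      exact hHB (k + 1) (by omega)
end

section
/- Let N ≥ 1 and let A = (A_1,…,A_{2N}) be positive reals with Σ_{l=1}^{N} A_{2l} < Σ_{l=1}^{N} A_{2l−1}. Then there exists m ∈ {0,…,N−1} such that the cyclically shifted sequence (A_{2m+1}, A_{2m+2}, …, A_{2N}, A_1, …, A_{2m}) satisfies the highest weight condition. -/
/-- If `A_1, …, A_{2N}` are positive reals with `∑ A_{2l} < ∑ A_{2l-1}`, then some even
cyclic shift `(A_{2m+1}, …, A_{2N}, A_1, …, A_{2m})` satisfies the highest weight
condition. -/
theorem exists_hw_shift (N : ℕ) (hN : 1 ≤ N) (A : ℕ → ℝ)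
    (hpos : ∀ i ∈ Finset.Icc 1 (2 * N), 0 < A i)
    (hphase : ∑ l ∈ Finset.Icc 1 N, A (2 * l) < ∑ l ∈ Finset.Icc 1 N, A (2 * l - 1)) :
    ∃ m < N, HWC (List.ofFn (fun j : Fin (2 * N) => A ((2 * m + (j : ℕ)) % (2 * N) + 1))) := by
  have hNpos : 0 < N := hN
  set g : ℕ → ℝ := fun j => A (2 * j + 1) - A (2 * j + 2) with hg
  set f : ℕ → ℝ := fun k => ∑ j ∈ Finset.range k, g j with hf
  -- f N > 0
  have hfN : 0 < f N := by
    have h1 : ∑ l ∈ Finset.Icc 1 N, A (2 * l - 1) = ∑ j ∈ Finset.range N, A (2 * j + 1) := by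
      rw [show Finset.Icc 1 N = Finset.Ico 1 (N + 1) by rw [Finset.Ico_add_one_right_eq_Icc],
        Finset.sum_Ico_eq_sum_range]
      apply Finset.sum_congr (by congr 1)
      intro i _; congr 1; omega
    have h2 : ∑ l ∈ Finset.Icc 1 N, A (2 * l) = ∑ j ∈ Finset.range N, A (2 * j + 2) := by
      rw [show Finset.Icc 1 N = Finset.Ico 1 (N + 1) by rw [Finset.Ico_add_one_right_eq_Icc],
        Finset.sum_Ico_eq_sum_range]
      apply Finset.sum_congr (by congr 1)
      intro i _; congr 1; omega
    have h3 : f N = ∑ j ∈ Finset.range N, A (2 * j + 1) - ∑ j ∈ Finset.range N, A (2 * j + 2) := by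
      rw [hf, ← Finset.sum_sub_distrib]
    rw [h3, ← h1, ← h2]; linarith
  have hstep : ∀ s : ℕ, f (s + 1) = f s + g s := fun s => Finset.sum_range_succ g s
  have hf0 : f 0 = 0 := by simp [hf]
  -- key identity
  have key : ∀ t : ℕ, ∑ j ∈ Finset.range t, g (j % N) = (t / N : ℕ) * f N + f (t % N) := by
    intro t
    induction t with
    | zero => simp [hf]
    | succ t ih =>
      rw [Finset.sum_range_succ, ih]
      have hqr : N * (t / N) + t % N = t := Nat.div_add_mod t N
      have hr : t % N < N := Nat.mod_lt t hNpos
      set q := t / N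
      set r := t % N
      by_cases hcase : r + 1 < N
      · have hdiv : (t + 1) / N = q := by
          rw [show t + 1 = N * q + (r + 1) by omega, Nat.mul_add_div hNpos,
            Nat.div_eq_of_lt hcase]
          omega
        have hmod : (t + 1) % N = r + 1 := by
          rw [show t + 1 = N * q + (r + 1) by omega, Nat.mul_add_mod,
            Nat.mod_eq_of_lt hcase]
        rw [hdiv, hmod, hstep r]
        ring
      · have hrN : r + 1 = N := by omega
        have ht1 : t + 1 = N * (q + 1) := by rw [Nat.mul_succ]; omega
        have hdiv : (t + 1) / N = q + 1 := by
          rw [ht1, Nat.mul_div_cancel_left _ hNpos]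
        have hmod : (t + 1) % N = 0 := by
          rw [ht1, Nat.mul_mod_right]
        have hfNr : f N = f r + g r := by rw [← hrN]; exact hstep r
        rw [hdiv, hmod, hfNr, hf0]
        push_cast
        ring
  -- choose m minimizing f on range N
  obtain ⟨m, hmR, hmin⟩ := Finset.exists_min_image (Finset.range N) f
    ⟨0, Finset.mem_range.mpr hNpos⟩
  have hmN : m < N := Finset.mem_range.mp hmR
  refine ⟨m, hmN, ?_⟩
  intro k hk
  rw [List.length_ofFn] at hk
  have hkN : k ≤ N := by omega
  have hterm : ∀ j ∈ Finset.range k,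
      ((List.ofFn (fun j : Fin (2 * N) => A ((2 * m + (j : ℕ)) % (2 * N) + 1))).getD (2 * j) 0 -
        (List.ofFn (fun j : Fin (2 * N) => A ((2 * m + (j : ℕ)) % (2 * N) + 1))).getD (2 * j + 1) 0)
      = g ((m + j) % N) := by
    intro j hj
    have hjk : j < k := Finset.mem_range.mp hj
    have h2j : 2 * j < 2 * N := by omega
    have h2j1 : 2 * j + 1 < 2 * N := by omega
    have hr : (m + j) % N < N := Nat.mod_lt _ hNpos
    have e1 : (List.ofFn (fun j : Fin (2 * N) => A ((2 * m + (j : ℕ)) % (2 * N) + 1))).getD (2 * j) 0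
        = A ((2 * m + 2 * j) % (2 * N) + 1) := by
      rw [List.getD_eq_getElem _ _ (by simpa using h2j), List.getElem_ofFn]
    have e2 : (List.ofFn (fun j : Fin (2 * N) => A ((2 * m + (j : ℕ)) % (2 * N) + 1))).getD (2 * j + 1) 0
        = A ((2 * m + (2 * j + 1)) % (2 * N) + 1) := by
      rw [List.getD_eq_getElem _ _ (by simpa using h2j1), List.getElem_ofFn]
    have m1 : (2 * m + 2 * j) % (2 * N) = 2 * ((m + j) % N) := by
      rw [show 2 * m + 2 * j = 2 * (m + j) by ring, Nat.mul_mod_mul_left]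
    have m2 : (2 * m + (2 * j + 1)) % (2 * N) = 2 * ((m + j) % N) + 1 := by
      rw [show 2 * m + (2 * j + 1) = 2 * (m + j) + 1 by ring, Nat.add_mod,
        Nat.mul_mod_mul_left, Nat.mod_eq_of_lt (show 1 < 2 * N by omega),
        Nat.mod_eq_of_lt (show 2 * ((m + j) % N) + 1 < 2 * N by omega)]
    rw [e1, e2, m1, m2, hg]
  rw [Finset.sum_congr rfl hterm]
  -- now reduce to the key identity
  have hshift : ∑ j ∈ Finset.range k, g ((m + j) % N)
      = ∑ j ∈ Finset.range (m + k), g (j % N) - ∑ j ∈ Finset.range m, g (j % N) := by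
    rw [Finset.sum_range_add]
    ring
  have e1 : ∑ j ∈ Finset.range m, g (j % N) = f m := by
    rw [key m, Nat.div_eq_of_lt hmN, Nat.mod_eq_of_lt hmN]
    push_cast; ring
  have e2 := key (m + k)
  rw [hshift, e1]
  by_cases hcase : m + k < N
  · rw [Nat.div_eq_of_lt hcase, Nat.mod_eq_of_lt hcase] at e2
    have hmin' := hmin (m + k) (Finset.mem_range.mpr hcase)
    rw [e2]
    push_cast
    linarith
  · have hq1 : (m + k) / N = 1 := by
      have hge : 1 ≤ (m + k) / N := (Nat.one_le_div_iff hNpos).mpr (by omega)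
      have hlt : (m + k) / N < 2 := Nat.div_lt_iff_lt_mul hNpos |>.mpr (by omega)
      omega
    have hmod : (m + k) % N = m + k - N := by
      have h := Nat.div_add_mod (m + k) N
      rw [hq1, Nat.mul_one] at h
      omega
    rw [hq1, hmod] at e2
    have hmin' := hmin (m + k - N) (Finset.mem_range.mpr (by omega))
    rw [e2]
    push_cast
    linarith
end

section
/- Let N ≥ 1 and let x = (x_1,…,x_{2N}) be positive reals satisfying the highest weight condition. Then Algorithm A and Algorithm B, applied to x, produce the same number of steps u and the same data (μ^{(i)}, ν^{(i)}) for all 1 ≤ i ≤ u; in particular they yield the same Young diagram. -/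
/-- One pass of zero-elimination on a list of nonnegative reals whose first entry is
positive, processed with explicit fuel (fuel `≥` the length of the list always
suffices).  A trailing run of zeros is deleted together with, if its length is odd, the
positive entry immediately preceding it (returned as the second component); an interior
run of zeros of even length is deleted; an interior run of zeros of odd length is merged
together with its positive neighbours `a, b` into the single entry `a + b`. -/
noncomputable def squashF : ℕ → List ℝ → List ℝ × ℝ
  | 0, _ => ([], 0)
  | _ + 1, [] => ([], 0)
  | fuel + 1, a :: rest =>
    let m := (rest.takeWhile (fun t => decide (t = 0))).length
    let r := rest.drop m
    if r = [] then (if Even m then ([a], 0) else ([], a))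
    else if Even m then
      let p := squashF fuel (r.headI :: r.tail)
      (a :: p.1, p.2)
    else squashF fuel ((a + r.headI) :: r.tail)

/-- Delete the run of zeros at the left end of `y`, then eliminate all remaining runs of
zeros; returns the resulting list together with the positive entry deleted at the right
end (`0` if no entry was deleted there). -/
noncomputable def contract (y : List ℝ) : List ℝ × ℝ :=
  let y' := y.drop ((y.takeWhile (fun t => decide (t = 0))).length)
  squashF y'.length y'

/-- The minimum entry of a nonempty list of reals. -/
noncomputable def minL (l : List ℝ) : ℝ := l.foldr min l.headI

/-- One step of Algorithm B: subtract the minimum `μ` from every entry and eliminate the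
runs of zeros, the positive entry preceding an odd right-end run of zeros being simply
deleted. -/
noncomputable def stepB (x : List ℝ) : List ℝ :=
  (contract (x.map (fun t => t - minL x))).1

/-- One step of Algorithm A: as in Algorithm B but the positive entry preceding an odd
right-end run of zeros is deleted *and added to the first entry* of the result. -/
noncomputable def stepA (x : List ℝ) : List ℝ :=
  match contract (x.map (fun t => t - minL x)) with
  | ([], _) => []
  | (h :: t, c) => (h + c) :: t

/-- The data `(μ⁽ⁱ⁾, ν⁽ⁱ⁾)` produced by iterating Algorithm A while the current sequence
is nonempty (with fuel; fuel `≥` half the length always suffices). -/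
noncomputable def algStepsA : ℕ → List ℝ → List (ℝ × ℕ)
  | 0, _ => []
  | _ + 1, [] => []
  | fuel + 1, x@(_ :: _) =>
    (minL x, x.length / 2 - (stepA x).length / 2) :: algStepsA fuel (stepA x)

/-- The data `(μ⁽ⁱ⁾, ν⁽ⁱ⁾)` produced by iterating Algorithm B. -/
noncomputable def algStepsB : ℕ → List ℝ → List (ℝ × ℕ)
  | 0, _ => []
  | _ + 1, [] => []
  | fuel + 1, x@(_ :: _) =>
    (minL x, x.length / 2 - (stepB x).length / 2) :: algStepsB fuel (stepB x)

/-!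
Run the two algorithms side by side. The invariant is that Algorithm A's current sequence is
Algorithm B's with its first entry raised by some `c ≥ 0`, and that Algorithm B's sequence has even
length and satisfies the highest weight condition. That condition gives `x₁ ≥ x₂`, so raising the
first entry does not change the minimum `μ`. It also forces the run of zeros at the left end of
`y = x - μ` to have even length, since otherwise the alternating sum up to the first nonzero entry
would be negative. Hence raising `y₁` by `c` raises the first entry of Algorithm A's result by `c`
(when `y₁ = 0`, the zeros after `c` form an odd run and `c` is merged into the next entry).
Contraction preserves the parity of the length and turns every prefix alternating sum into a prefix
alternating sum of the input of the same parity, so the highest weight condition persists.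
-/

open List

lemma exists_eq_replicate_zero_append (l : List ℝ) :
    ∃ m r, l = replicate m 0 ++ r ∧ ∀ x xs, r = x :: xs → x ≠ 0 := by
  induction l with
  | nil => exact ⟨0, [], rfl, by simp⟩
  | cons a l ih =>
    by_cases ha : a = 0
    · obtain ⟨m, r, rfl, hr⟩ := ih
      exact ⟨m + 1, r, by simp [ha, replicate_succ], hr⟩
    · exact ⟨0, a :: l, rfl, by simp [ha]⟩

lemma takeWhile_replicate_zero_append (m : ℕ) {r : List ℝ}
    (hr : ∀ x xs, r = x :: xs → x ≠ 0) :
    (replicate m 0 ++ r).takeWhile (fun t => decide (t = 0)) = replicate m 0 := by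
  rw [takeWhile_append_of_pos (by simp)]
  rcases r with _ | ⟨x, xs⟩
  · simp
  · simp [hr x xs rfl]

lemma squashF_succ_cons_replicate (fuel : ℕ) (a : ℝ) (m : ℕ) :
    squashF (fuel + 1) (a :: replicate m 0) = if Even m then ([a], 0) else ([], a) := by
  have h := takeWhile_replicate_zero_append m (r := []) (by simp)
  rw [append_nil] at h
  simp [squashF, h]

lemma squashF_succ_cons_replicate_append (fuel : ℕ) (a : ℝ) (m : ℕ) {x : ℝ} (xs : List ℝ)
    (hx : x ≠ 0) :
    squashF (fuel + 1) (a :: (replicate m 0 ++ x :: xs)) =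
      if Even m then (a :: (squashF fuel (x :: xs)).1, (squashF fuel (x :: xs)).2)
      else squashF fuel ((a + x) :: xs) := by
  have h := takeWhile_replicate_zero_append m (r := x :: xs) (by simpa using hx)
  simp [squashF, h]

@[simp] lemma squashF_nil (fuel : ℕ) : squashF fuel [] = ([], 0) := by
  cases fuel <;> rfl

lemma squashF_congr_fuel : ∀ {f f' : ℕ} {l : List ℝ}, l.length ≤ f → l.length ≤ f' →
    squashF f l = squashF f' l
  | 0, _, l, hf, _ => by simp [eq_nil_of_length_eq_zero (Nat.le_zero.mp hf)]
  | _, 0, l, _, hf' => by simp [eq_nil_of_length_eq_zero (Nat.le_zero.mp hf')]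
  | _ + 1, _ + 1, [], _, _ => rfl
  | f + 1, f' + 1, a :: rest, hf, hf' => by
    obtain ⟨m, r, rfl, hr⟩ := exists_eq_replicate_zero_append rest
    rcases r with _ | ⟨x, xs⟩
    · rw [append_nil, squashF_succ_cons_replicate, squashF_succ_cons_replicate]
    · simp only [length_cons, length_append, length_replicate] at hf hf'
      rw [squashF_succ_cons_replicate_append _ _ _ _ (hr x xs rfl),
        squashF_succ_cons_replicate_append _ _ _ _ (hr x xs rfl),
        squashF_congr_fuel (f := f) (f' := f') (l := x :: xs) (by simp; omega) (by simp; omega),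
        squashF_congr_fuel (f := f) (f' := f') (l := (a + x) :: xs) (by simp; omega)
          (by simp; omega)]

noncomputable def squash (l : List ℝ) : List ℝ × ℝ := squashF l.length l

lemma squashF_eq_squash {fuel : ℕ} {l : List ℝ} (h : l.length ≤ fuel) :
    squashF fuel l = squash l :=
  squashF_congr_fuel h le_rfl

@[simp] lemma squash_nil : squash [] = ([], 0) := rfl

lemma squash_cons_replicate (a : ℝ) (m : ℕ) :
    squash (a :: replicate m 0) = if Even m then ([a], 0) else ([], a) := by
  simp only [squash, length_cons, squashF_succ_cons_replicate]

lemma squash_cons_replicate_append (a : ℝ) (m : ℕ) {x : ℝ} (xs : List ℝ) (hx : x ≠ 0) :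
    squash (a :: (replicate m 0 ++ x :: xs)) =
      if Even m then (a :: (squash (x :: xs)).1, (squash (x :: xs)).2)
      else squash ((a + x) :: xs) := by
  rw [squash, length_cons, squashF_succ_cons_replicate_append _ _ _ _ hx,
    squashF_eq_squash (by simp), squashF_eq_squash (by simp)]

lemma contract_replicate_append (m : ℕ) {r : List ℝ} (hr : ∀ x xs, r = x :: xs → x ≠ 0) :
    contract (replicate m 0 ++ r) = squash r := by
  simp only [contract, takeWhile_replicate_zero_append m hr, length_replicate,
    drop_left' (length_replicate ..)]
  rfl

lemma contract_cons {x : ℝ} (xs : List ℝ) (hx : x ≠ 0) : contract (x :: xs) = squash (x :: xs) :=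
  contract_replicate_append 0 (by simpa using hx)

@[elab_as_elim]
theorem squash_induction {motive : List ℝ → Prop} (nil : motive [])
    (cons_replicate : ∀ a m, motive (a :: replicate m 0))
    (even : ∀ a m x xs, x ≠ 0 → Even m → motive (x :: xs) →
      motive (a :: (replicate m 0 ++ x :: xs)))
    (odd : ∀ a m x xs, x ≠ 0 → ¬Even m → motive ((a + x) :: xs) →
      motive (a :: (replicate m 0 ++ x :: xs)))
    (l : List ℝ) : motive l := by
  induction hn : l.length using Nat.strong_induction_on generalizing l with
  | _ n ih =>
    rcases l with _ | ⟨a, rest⟩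
    · exact nil
    obtain ⟨m, r, rfl, hr⟩ := exists_eq_replicate_zero_append rest
    rcases r with _ | ⟨x, xs⟩
    · simpa using cons_replicate a m
    have hx := hr x xs rfl
    subst hn
    by_cases hm : Even m
    · exact even a m x xs hx hm (ih _ (by simp) _ rfl)
    · exact odd a m x xs hx hm (ih _ (by simp) _ rfl)

lemma squash_length_mod_two (l : List ℝ) : (squash l).1.length % 2 = l.length % 2 := by
  induction l using squash_induction with
  | nil => rfl
  | cons_replicate a m =>
    rw [squash_cons_replicate]
    split_ifs with hm <;> simp [Nat.even_iff] at hm ⊢ <;> omega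
  | even a m x xs hx hm ih =>
    rw [squash_cons_replicate_append _ _ _ hx, if_pos hm]
    simp only [length_cons, length_append, length_replicate] at ih ⊢
    rw [Nat.even_iff] at hm
    omega
  | odd a m x xs hx hm ih =>
    rw [squash_cons_replicate_append _ _ _ hx, if_neg hm, ih]
    simp only [length_cons, length_append, length_replicate]
    rw [Nat.not_even_iff] at hm
    omega

lemma squash_snd_nonneg {l : List ℝ} (hl : ∀ z ∈ l, 0 ≤ z) : 0 ≤ (squash l).2 := by
  induction l using squash_induction with
  | nil => rfl
  | cons_replicate a m =>
    rw [squash_cons_replicate]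
    split_ifs
    · rfl
    · exact hl a mem_cons_self
  | even a m x xs hx hm ih =>
    rw [squash_cons_replicate_append _ _ _ hx, if_pos hm]
    exact ih fun z hz => hl z (by simp_all)
  | odd a m x xs hx hm ih =>
    rw [squash_cons_replicate_append _ _ _ hx, if_neg hm]
    refine ih fun z hz => ?_
    rcases mem_cons.mp hz with rfl | hz
    · exact add_nonneg (hl a (by simp)) (hl x (by simp))
    · exact hl z (by simp [hz])

lemma alternatingSum_replicate_zero_append (m : ℕ) (r : List ℝ) :
    (replicate m 0 ++ r).alternatingSum = (-1) ^ m * r.alternatingSum := by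
  induction m with
  | zero => simp
  | succ m ih => rw [replicate_succ, cons_append, alternatingSum_cons, ih, pow_succ]; ring

lemma take_replicate_append (m j : ℕ) (r : List ℝ) :
    (replicate m 0 ++ r).take (m + j) = replicate m (0 : ℝ) ++ r.take j := by
  simp [take_append]

lemma exists_alternatingSum_take_squash (l : List ℝ) :
    ∀ j ≤ (squash l).1.length, ∃ j' ≤ l.length, j' % 2 = j % 2 ∧
      ((squash l).1.take j).alternatingSum = (l.take j').alternatingSum := by
  induction l using squash_induction with
  | nil => intro j hj; exact ⟨0, by simp_all⟩
  | cons_replicate a m =>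
    rw [squash_cons_replicate]
    split_ifs
    · rintro (_ | _ | j) hj
      · exact ⟨0, by simp⟩
      · exact ⟨1, by simp⟩
      · simp at hj
    · intro j hj; exact ⟨0, by simp_all⟩
  | even a m x xs hx hm ih =>
    rw [squash_cons_replicate_append _ _ _ hx, if_pos hm]
    rintro (_ | j) hj
    · exact ⟨0, by simp⟩
    obtain ⟨j', hj', hpar, hsum⟩ := ih j (by simpa using hj)
    refine ⟨m + j' + 1, ?_, ?_, ?_⟩
    · simp only [length_cons, length_append, length_replicate] at hj' ⊢; omega
    · rw [Nat.even_iff] at hm; omega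
    · rw [take_succ_cons, take_succ_cons, take_replicate_append, alternatingSum_cons,
        alternatingSum_cons, alternatingSum_replicate_zero_append, hm.neg_one_pow, hsum,
        one_mul]
  | odd a m x xs hx hm ih =>
    rw [squash_cons_replicate_append _ _ _ hx, if_neg hm]
    intro j hj
    obtain ⟨_ | j', hj', hpar, hsum⟩ := ih j hj
    · exact ⟨0, by simp, hpar, by simpa using hsum⟩
    refine ⟨m + j' + 2, ?_, ?_, ?_⟩
    · simp only [length_cons, length_append, length_replicate] at hj' ⊢; omega
    · rw [Nat.not_even_iff] at hm; omega
    · rw [hsum, take_succ_cons, take_succ_cons, show m + j' + 1 = m + (j' + 1) by ring,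
        take_replicate_append, take_succ_cons, alternatingSum_cons, alternatingSum_cons,
        alternatingSum_replicate_zero_append, (Nat.not_even_iff_odd.mp hm).neg_one_pow,
        alternatingSum_cons]
      ring

def absorbCarry (p : List ℝ × ℝ) : List ℝ := p.1.modifyHead (· + p.2)

lemma stepA_eq_absorbCarry (x : List ℝ) :
    stepA x = absorbCarry (contract (x.map (fun t => t - minL x))) := by
  unfold stepA absorbCarry
  rcases contract (x.map (fun t => t - minL x)) with ⟨_ | ⟨h, t⟩, c⟩ <;> rfl

lemma absorbCarry_squash_modifyHead (c : ℝ) (l : List ℝ) :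
    absorbCarry (squash (l.modifyHead (· + c))) = (absorbCarry (squash l)).modifyHead (· + c) := by
  induction l using squash_induction generalizing c with
  | nil => rfl
  | cons_replicate a m =>
    simp only [modifyHead_cons, squash_cons_replicate]
    split_ifs <;> simp [absorbCarry]
  | even a m x xs hx hm ih =>
    simp only [modifyHead_cons, squash_cons_replicate_append _ _ _ hx, if_pos hm]
    simp [absorbCarry, add_right_comm]
  | odd a m x xs hx hm ih =>
    simpa only [modifyHead_cons, squash_cons_replicate_append _ _ _ hx, if_neg hm,
      add_right_comm a c x] using ih c

lemma absorbCarry_contract_modifyHead {L : ℕ} (hL : Even L) {r : List ℝ}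
    (hr : ∀ x xs, r = x :: xs → 0 < x) {c : ℝ} (hc : 0 ≤ c) :
    absorbCarry (contract ((replicate L 0 ++ r).modifyHead (· + c))) =
      (absorbCarry (contract (replicate L 0 ++ r))).modifyHead (· + c) := by
  have hr0 : ∀ x xs, r = x :: xs → x ≠ 0 := fun x xs h => (hr x xs h).ne'
  rw [contract_replicate_append L hr0]
  obtain ⟨k, rfl⟩ := hL
  rcases k with _ | k
  · rcases r with _ | ⟨x, xs⟩
    · rfl
    have hxc : x + c ≠ 0 := by linarith [hr x xs rfl]
    rw [zero_add, replicate_zero, nil_append, modifyHead_cons, contract_cons _ hxc]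
    exact absorbCarry_squash_modifyHead c (x :: xs)
  rcases hc.eq_or_lt with rfl | hc
  · simp only [add_zero, show (fun x : ℝ => x) = id from rfl, modifyHead_id, id,
      contract_replicate_append _ hr0]
  rw [show k + 1 + (k + 1) = 2 * k + 1 + 1 by ring, replicate_succ, cons_append, modifyHead_cons,
    zero_add, contract_cons _ hc.ne']
  rcases r with _ | ⟨x, xs⟩
  · simp [squash_cons_replicate, absorbCarry]
  rw [squash_cons_replicate_append _ _ _ (hr0 x xs rfl),
    if_neg (by simp), add_comm c x]
  exact absorbCarry_squash_modifyHead c (x :: xs)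

lemma foldr_min_mem_and_le (b : ℝ) (l : List ℝ) :
    l.foldr min b ∈ b :: l ∧ ∀ z ∈ b :: l, l.foldr min b ≤ z := by
  induction l with
  | nil => simp
  | cons a l ih =>
    rw [foldr_cons]
    refine ⟨?_, ?_⟩
    · rcases min_choice a (l.foldr min b) with h | h <;> rw [h]
      · simp
      · rcases mem_cons.mp ih.1 with h' | h' <;> simp [h']
    · intro z hz
      simp only [mem_cons] at hz
      rcases hz with rfl | rfl | hz
      · exact (min_le_right _ _).trans (ih.2 _ mem_cons_self)
      · exact min_le_left _ _
      · exact (min_le_right _ _).trans (ih.2 z (mem_cons_of_mem _ hz))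

lemma isLeast_minL (a : ℝ) (t : List ℝ) : IsLeast {z | z ∈ a :: t} (minL (a :: t)) := by
  obtain ⟨hmem, hle⟩ := foldr_min_mem_and_le a (a :: t)
  refine ⟨(mem_cons.mp hmem).elim (fun h => ?_) id, fun z hz => hle z (mem_cons_of_mem _ hz)⟩
  simp only [minL, headI_cons, h]
  exact mem_cons_self

lemma minL_le {l : List ℝ} {z : ℝ} (hz : z ∈ l) : minL l ≤ z := by
  rcases l with _ | ⟨a, t⟩
  · simp at hz
  · exact (isLeast_minL a t).2 hz

lemma alternatingSum_map_sub (μ : ℝ) :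
    ∀ l : List ℝ, Even l.length → (l.map (· - μ)).alternatingSum = l.alternatingSum
  | [], _ => rfl
  | [_], h => by simp at h
  | a :: b :: l, h => by
    rw [map_cons, map_cons, alternatingSum_cons_cons, alternatingSum_cons_cons,
      alternatingSum_map_sub μ l (by simpa [Nat.even_add_one] using h)]
    ring

lemma sum_range_getD_sub_eq_alternatingSum_take :
    ∀ (k : ℕ) (l : List ℝ), 2 * k ≤ l.length →
      ∑ j ∈ Finset.range k, (l.getD (2 * j) 0 - l.getD (2 * j + 1) 0) =
        (l.take (2 * k)).alternatingSum
  | 0, _, _ => by simp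
  | k + 1, a :: b :: l, h => by
    rw [Finset.sum_range_succ', show 2 * (k + 1) = 2 * k + 1 + 1 by ring, take_succ_cons,
      take_succ_cons, alternatingSum_cons_cons, ← sum_range_getD_sub_eq_alternatingSum_take k l
        (by simp at h; omega)]
    simp only [Nat.mul_succ, getD_cons_succ, mul_zero, getD_cons_zero]
    ring
  | _ + 1, [], h | _ + 1, [_], h => by simp at h <;> omega

structure IsHighestWeight (l : List ℝ) : Prop where
  even_length : Even l.length
  alternatingSum_take_nonneg : ∀ k, 2 * k ≤ l.length → 0 ≤ (l.take (2 * k)).alternatingSum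

namespace IsHighestWeight

variable {l : List ℝ}

lemma of_HWC (hl : Even l.length) (h : HWC l) : IsHighestWeight l :=
  ⟨hl, fun k hk => sum_range_getD_sub_eq_alternatingSum_take k l hk ▸ h k hk⟩

lemma map_sub (h : IsHighestWeight l) (μ : ℝ) : IsHighestWeight (l.map (· - μ)) := by
  refine ⟨by simpa using h.even_length, fun k hk => ?_⟩
  rw [length_map] at hk
  rw [← map_take, alternatingSum_map_sub μ _ (by simp [hk])]
  exact h.alternatingSum_take_nonneg k hk

lemma even_of_replicate_append {L : ℕ} {r : List ℝ} (h : IsHighestWeight (replicate L 0 ++ r))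
    (hr : ∀ x xs, r = x :: xs → 0 < x) : Even L := by
  rcases r with _ | ⟨x, xs⟩
  · simpa using h.even_length
  by_contra hL
  obtain ⟨k, hk⟩ : ∃ k, L + 1 = 2 * k := ⟨(L + 1) / 2, by rw [Nat.not_even_iff] at hL; omega⟩
  have hnonneg := h.alternatingSum_take_nonneg k (by simp; omega)
  rw [← hk, take_replicate_append, alternatingSum_replicate_zero_append,
    (Nat.not_even_iff_odd.mp hL).neg_one_pow, take_succ_cons, take_zero,
    alternatingSum_singleton] at hnonneg
  linarith [hr x xs rfl]

lemma of_replicate_append {L : ℕ} {r : List ℝ} (h : IsHighestWeight (replicate L 0 ++ r))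
    (hL : Even L) : IsHighestWeight r := by
  have hlen := h.even_length
  rw [length_append, length_replicate, Nat.even_add] at hlen
  refine ⟨hlen.mp hL, fun k hk => ?_⟩
  obtain ⟨i, rfl⟩ := hL
  have hnonneg := h.alternatingSum_take_nonneg (i + k) (by simp; omega)
  rwa [show 2 * (i + k) = i + i + 2 * k by ring, take_replicate_append,
    alternatingSum_replicate_zero_append, Even.neg_one_pow ⟨i, rfl⟩, one_mul] at hnonneg

lemma squash (h : IsHighestWeight l) : IsHighestWeight (squash l).1 := by
  refine ⟨?_, fun k hk => ?_⟩
  · rw [Nat.even_iff, squash_length_mod_two, ← Nat.even_iff]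
    exact h.even_length
  obtain ⟨j, hj, hpar, hsum⟩ := exists_alternatingSum_take_squash l (2 * k) hk
  obtain ⟨i, rfl⟩ : ∃ i, j = 2 * i := ⟨j / 2, by omega⟩
  exact hsum ▸ h.alternatingSum_take_nonneg i hj

lemma exists_map_sub_minL_eq (h : IsHighestWeight l) :
    ∃ L r, Even L ∧ l.map (· - minL l) = replicate L 0 ++ r ∧ IsHighestWeight r ∧
      (∀ z ∈ r, 0 ≤ z) ∧ ∀ x xs, r = x :: xs → 0 < x := by
  obtain ⟨L, r, hLr, hr⟩ := exists_eq_replicate_zero_append (l.map (· - minL l))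
  have hnonneg : ∀ z ∈ r, 0 ≤ z := fun z hz => by
    obtain ⟨w, hw, rfl⟩ := mem_map.mp (hLr ▸ mem_append_right _ hz : z ∈ l.map (· - minL l))
    exact sub_nonneg.mpr (minL_le hw)
  have hpos : ∀ x xs, r = x :: xs → 0 < x := fun x xs hx =>
    (hnonneg x (by simp [hx])).lt_of_ne' (hr x xs hx)
  have hHW := hLr ▸ h.map_sub (minL l)
  have hL := hHW.even_of_replicate_append hpos
  exact ⟨L, r, hL, hLr, hHW.of_replicate_append hL, hnonneg, hpos⟩

lemma stepB (h : IsHighestWeight l) : IsHighestWeight (stepB l) := by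
  obtain ⟨L, r, -, hLr, hr, -, hpos⟩ := h.exists_map_sub_minL_eq
  rw [_root_.stepB, hLr, contract_replicate_append L fun x xs hx => (hpos x xs hx).ne']
  exact hr.squash

lemma minL_modifyHead (h : IsHighestWeight l) {c : ℝ} (hc : 0 ≤ c) :
    minL (l.modifyHead (· + c)) = minL l := by
  rcases l with _ | ⟨a, _ | ⟨b, t⟩⟩
  · rfl
  · simpa using h.even_length
  have hba : b ≤ a := by simpa using h.alternatingSum_take_nonneg 1 (by simp)
  refine (isLeast_minL (a + c) (b :: t)).unique ⟨?_, ?_⟩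
  · rcases mem_cons.mp (isLeast_minL a (b :: t)).1 with hm | hm
    · have : minL (a :: b :: t) = b :=
        le_antisymm (minL_le (by simp)) (by rw [hm]; exact hba)
      simp [this]
    · exact mem_cons_of_mem _ hm
  · intro z hz
    rcases mem_cons.mp hz with rfl | hz
    · exact (minL_le mem_cons_self).trans (by linarith)
    · exact minL_le (mem_cons_of_mem _ hz)

lemma stepA_modifyHead (h : IsHighestWeight l) {c : ℝ} (hc : 0 ≤ c) :
    ∃ c' : ℝ, 0 ≤ c' ∧ stepA (l.modifyHead (· + c)) = (_root_.stepB l).modifyHead (· + c') := by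
  obtain ⟨L, r, hL, hLr, -, hnonneg, hpos⟩ := h.exists_map_sub_minL_eq
  have hmap : (l.modifyHead (· + c)).map (· - minL l) = (l.map (· - minL l)).modifyHead (· + c) := by
    rcases l with _ | ⟨a, t⟩
    · rfl
    · simp [add_sub_right_comm]
  refine ⟨(contract (l.map (· - minL l))).2 + c, ?_, ?_⟩
  · rw [hLr, contract_replicate_append L fun x xs hx => (hpos x xs hx).ne']
    exact add_nonneg (squash_snd_nonneg hnonneg) hc
  rw [stepA_eq_absorbCarry, h.minL_modifyHead hc, hmap, hLr,
    absorbCarry_contract_modifyHead hL hpos hc, ← hLr, absorbCarry, modifyHead_modifyHead]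
  simp only [_root_.stepB, Function.comp_def, add_assoc]

end IsHighestWeight

theorem algStepsA_modifyHead (fuel : ℕ) :
    ∀ {l : List ℝ} {c : ℝ}, IsHighestWeight l → 0 ≤ c →
      algStepsA fuel (l.modifyHead (· + c)) = algStepsB fuel l := by
  induction fuel with
  | zero => intro l c _ _; cases l <;> rfl
  | succ fuel ih =>
    intro l c h hc
    rcases l with _ | ⟨a, t⟩
    · rfl
    obtain ⟨c', hc', hA⟩ := h.stepA_modifyHead hc
    have hmin := h.minL_modifyHead hc
    simp only [modifyHead_cons] at hA hmin ⊢
    simp only [algStepsA, algStepsB, hA, hmin, length_cons, length_modifyHead,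
      ih h.stepB hc']

theorem algA_eq_algB_general (N : ℕ) (x : List ℝ) (hlen : x.length = 2 * N)
    (hhwc : HWC x) :
    algStepsA x.length x = algStepsB x.length x := by
  have h := IsHighestWeight.of_HWC (hlen ▸ even_two_mul N) hhwc
  have := algStepsA_modifyHead x.length h le_rfl
  rwa [show (fun t : ℝ => t + 0) = id from funext add_zero, modifyHead_id, id] at this

/-- Algorithms A and B, applied to a positive highest weight sequence, produce the same
number of steps and the same data `(μ⁽ⁱ⁾, ν⁽ⁱ⁾)`; in particular the same Young diagram. -/
theorem algA_eq_algB (N : ℕ) (hN : 1 ≤ N) (x : List ℝ) (hlen : x.length = 2 * N)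
    (hpos : ∀ t ∈ x, 0 < t) (hhwc : HWC x) :
    algStepsA x.length x = algStepsB x.length x :=
  algA_eq_algB_general N x hlen hhwc
end
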